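/- arXiv:2401.08065 — 5 statements merged into one kernel-verified Lean document; each statement's English description precedes it below -/
import Mathlib

section
/- Let ρ be an n-qubit density matrix (a positive semidefinite matrix indexed by functions Fin n → Fin 2 with unit trace), and let S ⊆ Fin n with |S| = s. For each i ∈ S, let Π₊^i denote the operator on the two-copy space that acts as the projector Π₊ = (I⊗I + F)/2 onto the symmetric subspace of the pair consisting of the i-th qubit of the first copy and the i-th qubit of the second copy, and acts as the identity on all other tensor factors. Then tr((ρ ⊗ ρ) · ∏_{i∈S} Π₊^i) = 2^{−s} · Σ_{α ⊆ S} tr(ρ_α²). Consequently, for a pure state ρ = |ψ⟩⟨ψ|, the concentratable entanglement satisfies C_ψ(S) = 1 − tr((ρ ⊗ ρ) · ∏_{i∈S} Π₊^i). -/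
open Matrix MeasureTheory
open scoped BigOperators ComplexConjugate Kronecker ComplexOrder

/-- `n`-qubit operators: matrices indexed by functions `Fin n → Fin 2`. -/
abbrev QMat (n : ℕ) : Type := Matrix (Fin n → Fin 2) (Fin n → Fin 2) ℂ

/-- Combine an assignment on `α` and one on its complement into a full index. -/
noncomputable def embedIdx {n : ℕ} (α : Finset (Fin n)) (i : {x : Fin n // x ∈ α} → Fin 2)
    (k : {x : Fin n // x ∉ α} → Fin 2) : Fin n → Fin 2 :=
  fun x => if h : x ∈ α then i ⟨x, h⟩ else k ⟨x, h⟩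

/-- The reduced density matrix on the qubits in `α` (partial trace over the rest). -/
noncomputable def reduced {n : ℕ} (ρ : QMat n) (α : Finset (Fin n)) :
    Matrix ({x : Fin n // x ∈ α} → Fin 2) ({x : Fin n // x ∈ α} → Fin 2) ℂ :=
  fun i j => ∑ k : ({x : Fin n // x ∉ α} → Fin 2), ρ (embedIdx α i k) (embedIdx α j k)

/-- The concentratable entanglement `C_ψ(S) = 1 - 2^{-|S|} ∑_{α ⊆ S} tr(ρ_α²)`. -/
noncomputable def CE {n : ℕ} (ρ : QMat n) (S : Finset (Fin n)) : ℝ :=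
  1 - (1 / 2 : ℝ) ^ S.card *
    ∑ α ∈ S.powerset, (Matrix.trace (reduced ρ α * reduced ρ α)).re

/-- The operator on the two-copy space swapping the `i`-th qubit of the first copy with the
`i`-th qubit of the second copy. -/
noncomputable def swapAt {n : ℕ} (i : Fin n) :
    Matrix ((Fin n → Fin 2) × (Fin n → Fin 2)) ((Fin n → Fin 2) × (Fin n → Fin 2)) ℂ :=
  fun p q => if p.1 = Function.update q.1 i (q.2 i) ∧ p.2 = Function.update q.2 i (q.1 i)
    then 1 else 0

/-- `Π₊^i = (I + F_i)/2`: the projector onto the symmetric subspace of the pair consisting of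
the `i`-th qubit of each copy, tensored with the identity elsewhere. -/
noncomputable def piPlusAt {n : ℕ} (i : Fin n) :
    Matrix ((Fin n → Fin 2) × (Fin n → Fin 2)) ((Fin n → Fin 2) × (Fin n → Fin 2)) ℂ :=
  ((1 : ℂ) / 2) • (1 + swapAt i)

/-- The product `∏_{i ∈ S} Π₊^i` (the factors commute, so any order works; we use the
increasing order on `S`). -/
noncomputable def prodPiPlus {n : ℕ} (S : Finset (Fin n)) :
    Matrix ((Fin n → Fin 2) × (Fin n → Fin 2)) ((Fin n → Fin 2) × (Fin n → Fin 2)) ℂ :=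
  ((S.sort (· ≤ ·)).map (fun i => piPlusAt i)).prod

namespace CEAux

variable {n : ℕ}

/-- replace values on `α` by those of `g`. -/
def mix (α : Finset (Fin n)) (f g : Fin n → Fin 2) : Fin n → Fin 2 :=
  fun x => if x ∈ α then g x else f x

def sigmaSet (α : Finset (Fin n)) (p : (Fin n → Fin 2) × (Fin n → Fin 2)) :
    (Fin n → Fin 2) × (Fin n → Fin 2) :=
  (mix α p.1 p.2, mix α p.2 p.1)

noncomputable def swapSet (α : Finset (Fin n)) :
    Matrix ((Fin n → Fin 2) × (Fin n → Fin 2)) ((Fin n → Fin 2) × (Fin n → Fin 2)) ℂ :=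
  fun p q => if q = sigmaSet α p then 1 else 0

lemma mix_mix (α : Finset (Fin n)) (f g : Fin n → Fin 2) :
    mix α (mix α f g) (mix α g f) = f := by
  funext x; by_cases h : x ∈ α <;> simp [mix, h]

lemma sigma_invol (α : Finset (Fin n)) (p) : sigmaSet α (sigmaSet α p) = p := by
  cases p; simp [sigmaSet, mix_mix]

lemma sigma_eq_iff (α : Finset (Fin n)) (p q) :
    p = sigmaSet α q ↔ q = sigmaSet α p := by
  constructor <;> (rintro rfl; rw [sigma_invol])

lemma mix_empty (f g : Fin n → Fin 2) : mix (∅ : Finset (Fin n)) f g = f := by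
  funext x; simp [mix]

lemma sigma_empty (p : (Fin n → Fin 2) × (Fin n → Fin 2)) :
    sigmaSet (∅ : Finset (Fin n)) p = p := by
  cases p; simp [sigmaSet, mix_empty]

lemma swapSet_empty : swapSet (∅ : Finset (Fin n)) = 1 := by
  ext p q
  simp [swapSet, sigma_empty, Matrix.one_apply, eq_comm]

lemma sigma_insert (i : Fin n) (α : Finset (Fin n)) (h : i ∉ α) (p) :
    sigmaSet α (sigmaSet {i} p) = sigmaSet (insert i α) p := by
  cases p with
  | mk f g =>
    simp only [sigmaSet, Prod.mk.injEq]
    constructor <;> funext x <;>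
      rcases eq_or_ne x i with rfl | h1 <;> by_cases h2 : x ∈ α <;>
      simp_all [mix]

lemma swapAt_eq (i : Fin n) : swapAt i = swapSet ({i} : Finset (Fin n)) := by
  ext p q
  have hcond : (p.1 = Function.update q.1 i (q.2 i) ∧ p.2 = Function.update q.2 i (q.1 i))
      ↔ p = sigmaSet {i} q := by
    have h1 : Function.update q.1 i (q.2 i) = mix {i} q.1 q.2 := by
      funext x
      rcases eq_or_ne x i with rfl | h
      · simp [mix, Function.update]
      · simp [mix, Function.update, h]
    have h2 : Function.update q.2 i (q.1 i) = mix {i} q.2 q.1 := by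
      funext x
      rcases eq_or_ne x i with rfl | h
      · simp [mix, Function.update]
      · simp [mix, Function.update, h]
    rw [h1, h2, Prod.ext_iff]; rfl
  rw [swapAt, swapSet]
  simp only [hcond, sigma_eq_iff]

lemma swapSet_mul (i : Fin n) (α : Finset (Fin n)) (h : i ∉ α) :
    swapSet ({i} : Finset (Fin n)) * swapSet α = swapSet (insert i α) := by
  ext p q
  rw [Matrix.mul_apply]
  have : ∀ r, swapSet ({i} : Finset (Fin n)) p r * swapSet α r q
      = if r = sigmaSet {i} p then swapSet α r q else 0 := by
    intro r; rw [swapSet]; split <;> simp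
  simp only [this]
  rw [Finset.sum_ite_eq' Finset.univ (sigmaSet {i} p) (fun r => swapSet α r q)]
  simp only [Finset.mem_univ, if_true, swapSet]
  rw [sigma_insert i α h p]

lemma list_prod_eq (L : List (Fin n)) (hL : L.Nodup) :
    (L.map (fun i => piPlusAt i)).prod
      = ((1 : ℂ) / 2) ^ L.length • ∑ α ∈ L.toFinset.powerset, swapSet α := by
  induction L with
  | nil => simp [swapSet_empty]
  | cons i L ih =>
    have hnd := (List.nodup_cons.mp hL)
    have hiL : i ∉ L.toFinset := by simpa using hnd.1
    rw [List.map_cons, List.prod_cons, ih hnd.2, piPlusAt]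
    rw [Matrix.smul_mul, Matrix.mul_smul, smul_smul]
    rw [List.toFinset_cons, Finset.sum_powerset_insert hiL]
    rw [Matrix.add_mul, Matrix.one_mul, Matrix.mul_sum]
    have hterm : ∀ α ∈ L.toFinset.powerset, swapAt i * swapSet α = swapSet (insert i α) := by
      intro α hα
      have : i ∉ α := fun hi => hiL (Finset.mem_powerset.mp hα hi)
      rw [swapAt_eq, swapSet_mul i α this]
    rw [Finset.sum_congr rfl hterm]
    rw [List.length_cons]
    congr 1
    rw [pow_succ]
    ring

lemma prodPiPlus_eq (S : Finset (Fin n)) :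
    prodPiPlus S = ((1 : ℂ) / 2) ^ S.card • ∑ α ∈ S.powerset, swapSet α := by
  rw [prodPiPlus, list_prod_eq _ (S.sort_nodup _)]
  rw [Finset.sort_toFinset, Finset.length_sort]

noncomputable def splitEquiv (α : Finset (Fin n)) :
    (({x : Fin n // x ∈ α} → Fin 2) × ({x : Fin n // x ∉ α} → Fin 2)) ≃ (Fin n → Fin 2) where
  toFun p := embedIdx α p.1 p.2
  invFun f := (fun x => f x.1, fun x => f x.1)
  left_inv p := by
    cases p with
    | mk i k =>
      simp only [Prod.mk.injEq]
      constructor <;> funext x <;> simp [embedIdx, x.2]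
  right_inv f := by
    funext x; by_cases h : x ∈ α <;> simp [embedIdx, h]

lemma mix_embed (α : Finset (Fin n)) (i j : {x : Fin n // x ∈ α} → Fin 2)
    (k l : {x : Fin n // x ∉ α} → Fin 2) :
    mix α (embedIdx α i k) (embedIdx α j l) = embedIdx α j k := by
  funext x; by_cases h : x ∈ α <;> simp [mix, embedIdx, h]

lemma trace_mul_swapSet (ρ : QMat n) (α : Finset (Fin n)) :
    Matrix.trace ((ρ ⊗ₖ ρ) * swapSet α) = Matrix.trace (reduced ρ α * reduced ρ α) := by
  have h1 : Matrix.trace ((ρ ⊗ₖ ρ) * swapSet α)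
      = ∑ p : (Fin n → Fin 2) × (Fin n → Fin 2),
          ρ p.1 (mix α p.1 p.2) * ρ p.2 (mix α p.2 p.1) := by
    rw [Matrix.trace]
    simp only [Matrix.diag, Matrix.mul_apply]
    refine Finset.sum_congr rfl fun p _ => ?_
    have hthis : ∀ q, (ρ ⊗ₖ ρ) p q * swapSet α q p
        = if q = sigmaSet α p then (ρ ⊗ₖ ρ) p q else 0 := by
      intro q
      simp only [swapSet]
      by_cases hq : q = sigmaSet α p
      · rw [if_pos ((sigma_eq_iff α p q).mpr hq), if_pos hq, mul_one]
      · rw [if_neg (fun h => hq ((sigma_eq_iff α p q).mp h)), if_neg hq, mul_zero]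
    simp only [hthis]
    rw [Finset.sum_ite_eq' Finset.univ (sigmaSet α p) (fun q => (ρ ⊗ₖ ρ) p q)]
    simp [Matrix.kroneckerMap_apply, sigmaSet]
  rw [h1]
  rw [← Equiv.sum_comp ((splitEquiv α).prodCongr (splitEquiv α))]
  simp only [Equiv.prodCongr_apply, Prod.map]
  have h2 : ∀ (p : (({x : Fin n // x ∈ α} → Fin 2) × ({x : Fin n // x ∉ α} → Fin 2)) ×
        (({x : Fin n // x ∈ α} → Fin 2) × ({x : Fin n // x ∉ α} → Fin 2))),
      ρ (splitEquiv α p.1) (mix α (splitEquiv α p.1) (splitEquiv α p.2))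
        * ρ (splitEquiv α p.2) (mix α (splitEquiv α p.2) (splitEquiv α p.1))
      = ρ (embedIdx α p.1.1 p.1.2) (embedIdx α p.2.1 p.1.2)
        * ρ (embedIdx α p.2.1 p.2.2) (embedIdx α p.1.1 p.2.2) := by
    rintro ⟨⟨i, k⟩, ⟨j, l⟩⟩
    simp only [splitEquiv, Equiv.coe_fn_mk, mix_embed]
  rw [Finset.sum_congr rfl (fun p _ => h2 p)]
  have hR : Matrix.trace (reduced ρ α * reduced ρ α)
      = ∑ i : ({x : Fin n // x ∈ α} → Fin 2), ∑ j : ({x : Fin n // x ∈ α} → Fin 2),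
          ∑ k : ({x : Fin n // x ∉ α} → Fin 2), ∑ l : ({x : Fin n // x ∉ α} → Fin 2),
          ρ (embedIdx α i k) (embedIdx α j k) * ρ (embedIdx α j l) (embedIdx α i l) := by
    rw [Matrix.trace]
    simp only [Matrix.diag, Matrix.mul_apply, reduced, Finset.sum_mul_sum]
  rw [hR]
  simp only [Fintype.sum_prod_type]
  exact Finset.sum_congr rfl fun i _ => Finset.sum_comm

lemma reduced_herm (ρ : QMat n) (hρ : ρ.IsHermitian) (α : Finset (Fin n)) :
    (reduced ρ α).IsHermitian := by
  refine Matrix.ext fun i j => ?_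
  simp only [Matrix.conjTranspose_apply, reduced, star_sum, star_mul']
  refine Finset.sum_congr rfl fun k _ => ?_
  rw [← Matrix.conjTranspose_apply, hρ.eq]

lemma trace_sq_real {I : Type*} [Fintype I] [DecidableEq I] (R : Matrix I I ℂ)
    (h : R.IsHermitian) :
    ((Matrix.trace (R * R)).re : ℂ) = Matrix.trace (R * R) := by
  have hst : (starRingEnd ℂ) (Matrix.trace (R * R)) = Matrix.trace (R * R) := by
    have := Matrix.trace_conjTranspose (R * R)
    rw [Matrix.conjTranspose_mul, h.eq] at this
    exact this.symm
  exact Complex.conj_eq_iff_re.mp hst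

end CEAux

/-- `tr((ρ ⊗ ρ) ∏_{i∈S} Π₊^i) = 2^{-s} ∑_{α ⊆ S} tr(ρ_α²)`, and consequently for a pure
state `ρ = |ψ⟩⟨ψ|` the concentratable entanglement satisfies
`C_ψ(S) = 1 - tr((ρ ⊗ ρ) ∏_{i∈S} Π₊^i)`. -/
theorem trace_prodPiPlus (n : ℕ) (ρ : QMat n) (hρ : ρ.PosSemidef) (htr : Matrix.trace ρ = 1)
    (S : Finset (Fin n)) :
    Matrix.trace ((ρ ⊗ₖ ρ) * prodPiPlus S)
        = (1 / 2 : ℂ) ^ S.card * ∑ α ∈ S.powerset, Matrix.trace (reduced ρ α * reduced ρ α) ∧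
    ∀ ψ : (Fin n → Fin 2) → ℂ, (∑ x, star (ψ x) * ψ x) = 1 →
      ρ = Matrix.vecMulVec ψ (star ψ) →
      (CE ρ S : ℂ) = 1 - Matrix.trace ((ρ ⊗ₖ ρ) * prodPiPlus S) := by
  have h1 : Matrix.trace ((ρ ⊗ₖ ρ) * prodPiPlus S)
      = (1 / 2 : ℂ) ^ S.card * ∑ α ∈ S.powerset, Matrix.trace (reduced ρ α * reduced ρ α) := by
    rw [CEAux.prodPiPlus_eq, Matrix.mul_smul, Matrix.trace_smul, Matrix.mul_sum,
      Matrix.trace_sum]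
    rw [Finset.sum_congr rfl fun α _ => CEAux.trace_mul_swapSet ρ α]
    simp [smul_eq_mul]
  refine ⟨h1, fun ψ hψ hpure => ?_⟩
  rw [h1, CE]
  push_cast
  rw [Finset.sum_congr rfl fun α _ => CEAux.trace_sq_real _ (CEAux.reduced_herm ρ hρ.1 α)]
end

section
/- Let ρ = |ψ⟩⟨ψ| be an n-qubit pure state and S ⊆ Fin n nonempty with |S| = s. Fix K ≥ 2. Let U = ⊗_{i∈S} U_i be a product of independent Haar-random elements of U(2), and conditionally on U let Z₁, …, Z_K be i.i.d. with law P_U(z) = tr(U ρ U† |z⟩⟨z|) on {0,1}^S. Define Ŝ^(K) = (1/(K(K−1))) Σ_{k ≠ k'} 1{Z_k = Z_{k'}}. Then Var[Ŝ^(K)] = [ 2·P₂(1 − P₂) + 4(K − 2)(P₃ − P₂²) + (K − 2)(K − 3)(P_{2,2} − P₂²) ] / (K(K − 1)), where P₂ = E_U[Σ_z P_U(z)²], P₃ = E_U[Σ_z P_U(z)³], and P_{2,2} = E_U[(Σ_z P_U(z)²)²]. -/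
open Matrix MeasureTheory
open scoped BigOperators ComplexConjugate Kronecker

/-- Tensor product of single-qubit operators on the qubits in `S`, identity elsewhere. -/
noncomputable def localOp {n : ℕ} (S : Finset (Fin n))
    (V : {i : Fin n // i ∈ S} → Matrix (Fin 2) (Fin 2) ℂ) : QMat n :=
  fun x y => ∏ i : Fin n,
    if h : i ∈ S then V ⟨i, h⟩ (x i) (y i)
    else (if x i = y i then 1 else 0)

/-- Projector onto computational basis state `z` on the qubits in `S`, identity elsewhere. -/
noncomputable def projZ {n : ℕ} (S : Finset (Fin n)) (z : {i : Fin n // i ∈ S} → Fin 2) : QMat n :=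
  fun x y => ∏ i : Fin n,
    if h : i ∈ S then (if x i = z ⟨i, h⟩ ∧ y i = z ⟨i, h⟩ then 1 else 0)
    else (if x i = y i then 1 else 0)

noncomputable instance : MeasurableSpace (Matrix.unitaryGroup (Fin 2) ℂ) := borel _
instance : BorelSpace (Matrix.unitaryGroup (Fin 2) ℂ) := ⟨rfl⟩

/-- The Born probability `P_U(z) = tr(U ρ U† |z⟩⟨z|)` of outcome `z` after the local
randomized measurement given by the single-qubit unitaries `V i`, `i ∈ S`. -/
noncomputable def born {n : ℕ} (ρ : QMat n) (S : Finset (Fin n))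
    (V : {i : Fin n // i ∈ S} → Matrix.unitaryGroup (Fin 2) ℂ)
    (z : {i : Fin n // i ∈ S} → Fin 2) : ℝ :=
  (Matrix.trace (localOp S (fun i => (V i : Matrix (Fin 2) (Fin 2) ℂ)) * ρ *
      (localOp S (fun i => (V i : Matrix (Fin 2) (Fin 2) ℂ)))ᴴ * projZ S z)).re

/-- The Born distribution on outcome strings, as a measure. -/
noncomputable def bornMeasure {n : ℕ} (ρ : QMat n) (S : Finset (Fin n))
    (V : {i : Fin n // i ∈ S} → Matrix.unitaryGroup (Fin 2) ℂ) :
    Measure ({i : Fin n // i ∈ S} → Fin 2) :=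
  ∑ z : ({i : Fin n // i ∈ S} → Fin 2), ENNReal.ofReal (born ρ S V z) • Measure.dirac z

/-- Joint law of one round of the LRM experiment: a tuple of Haar-random single-qubit
unitaries together with `K` conditionally i.i.d. Born-distributed outcomes. -/
noncomputable def jointRound {n : ℕ} (μ : Measure (Matrix.unitaryGroup (Fin 2) ℂ))
    (ρ : QMat n) (S : Finset (Fin n)) (K : ℕ) :
    Measure (({i : Fin n // i ∈ S} → Matrix.unitaryGroup (Fin 2) ℂ) ×
      (Fin K → ({i : Fin n // i ∈ S} → Fin 2))) :=
  (Measure.pi fun _ : {i : Fin n // i ∈ S} => μ).bind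
    (fun V => (Measure.pi fun _ : Fin K => bornMeasure ρ S V).map (Prod.mk V))

/-- `Ŝ^(K) = (1/(K(K-1))) ∑_{k ≠ k'} 1{z_k = z_{k'}}`. -/
noncomputable def ShatK {n : ℕ} {S : Finset (Fin n)} (K : ℕ)
    (zs : Fin K → ({i : Fin n // i ∈ S} → Fin 2)) : ℝ :=
  (1 / ((K : ℝ) * ((K : ℝ) - 1))) * ∑ k : Fin K, ∑ k' : Fin K,
    if k ≠ k' ∧ zs k = zs k' then 1 else 0


section Generic
variable {ι E : Type*} [Fintype ι] [DecidableEq ι] [Fintype E] [DecidableEq E]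

lemma LRM_sum_prod_pi {M : Type*} [CommSemiring M] (f : ι → E → M) :
    ∑ zs : ι → E, ∏ j, f j (zs j) = ∏ j, ∑ y, f j y := by
  rw [Finset.prod_univ_sum, Fintype.piFinset_univ]

lemma LRM_sum_w_two (p : E → ℝ) (hp : ∑ y, p y = 1) (A B : Finset ι) (hAB : Disjoint A B)
    (z z' : E) :
    ∑ zs : ι → E, (∏ j, p (zs j)) * ((∏ j ∈ A, if zs j = z then (1 : ℝ) else 0) *
      (∏ j ∈ B, if zs j = z' then (1 : ℝ) else 0))
      = p z ^ A.card * p z' ^ B.card := by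
  have h1 : ∀ zs : ι → E, (∏ j, p (zs j)) * ((∏ j ∈ A, if zs j = z then (1 : ℝ) else 0) *
      (∏ j ∈ B, if zs j = z' then (1 : ℝ) else 0))
      = ∏ j, (p (zs j) * ((if j ∈ A then (if zs j = z then (1 : ℝ) else 0) else 1) *
          (if j ∈ B then (if zs j = z' then (1 : ℝ) else 0) else 1))) := by
    intro zs
    rw [Finset.prod_mul_distrib, Finset.prod_mul_distrib, Fintype.prod_ite_mem,
      Fintype.prod_ite_mem]
  rw [show (∑ zs : ι → E, (∏ j, p (zs j)) * ((∏ j ∈ A, if zs j = z then (1 : ℝ) else 0) *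
      (∏ j ∈ B, if zs j = z' then (1 : ℝ) else 0)))
      = ∑ zs : ι → E, ∏ j, (p (zs j) * ((if j ∈ A then (if zs j = z then (1 : ℝ) else 0) else 1) *
          (if j ∈ B then (if zs j = z' then (1 : ℝ) else 0) else 1)))
      from Finset.sum_congr rfl fun zs _ => h1 zs]
  rw [LRM_sum_prod_pi (fun j y => p y * ((if j ∈ A then (if y = z then (1 : ℝ) else 0) else 1) *
          (if j ∈ B then (if y = z' then (1 : ℝ) else 0) else 1)))]
  have h2 : ∀ j : ι, (∑ y, p y * ((if j ∈ A then (if y = z then (1 : ℝ) else 0) else 1) *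
      (if j ∈ B then (if y = z' then (1 : ℝ) else 0) else 1)))
      = (if j ∈ A then p z else 1) * (if j ∈ B then p z' else 1) := by
    intro j
    by_cases hA : j ∈ A <;> by_cases hB : j ∈ B
    · exact absurd hB (Finset.disjoint_left.mp hAB hA)
    · simp [hA, hB, mul_ite, Finset.sum_ite_eq']
    · simp [hA, hB, mul_ite, Finset.sum_ite_eq']
    · simp [hA, hB, hp]
  simp_rw [h2]
  rw [Finset.prod_mul_distrib, Fintype.prod_ite_mem, Fintype.prod_ite_mem,
    Finset.prod_const, Finset.prod_const]

lemma LRM_ind_pair {zs : ι → E} {k k' : ι} (h : k ≠ k') :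
    (if zs k = zs k' then (1 : ℝ) else 0)
      = ∑ z, ∏ j ∈ ({k, k'} : Finset ι), if zs j = z then (1 : ℝ) else 0 := by
  simp_rw [Finset.prod_pair h]
  by_cases hE : zs k = zs k'
  · simp [hE, ← ite_and, and_self, Finset.sum_ite_eq]
  · rw [if_neg hE]
    refine (Finset.sum_eq_zero fun z _ => ?_).symm
    by_cases h1 : zs k = z
    · rw [if_pos h1, if_neg (fun h2 => hE (h1.trans h2.symm)), mul_zero]
    · rw [if_neg h1, zero_mul]

lemma LRM_sum_w_pair (p : E → ℝ) (hp : ∑ y, p y = 1) {k k' : ι} (h : k ≠ k') :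
    ∑ zs : ι → E, (∏ j, p (zs j)) * (if zs k = zs k' then (1 : ℝ) else 0)
      = ∑ z, p z ^ 2 := by
  simp_rw [LRM_ind_pair h, Finset.mul_sum]
  rw [Finset.sum_comm]
  refine Finset.sum_congr rfl fun z _ => ?_
  have := LRM_sum_w_two p hp ({k, k'} : Finset ι) ∅ (Finset.disjoint_empty_right _) z z
  simpa [Finset.card_pair h] using this

lemma LRM_ind_triple {zs : ι → E} {a b c : ι} (hab : a ≠ b) (hac : a ≠ c) (hbc : b ≠ c) :
    (if zs a = zs b ∧ zs a = zs c then (1 : ℝ) else 0)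
      = ∑ z, ∏ j ∈ ({a, b, c} : Finset ι), if zs j = z then (1 : ℝ) else 0 := by
  have hmem : a ∉ ({b, c} : Finset ι) := by simp [hab, hac]
  simp_rw [Finset.prod_insert hmem, Finset.prod_pair hbc]
  by_cases hE : zs a = zs b ∧ zs a = zs c
  · rw [if_pos hE, ← hE.1, ← hE.2]
    simp [← ite_and, and_self, Finset.sum_ite_eq]
  · rw [if_neg hE]
    refine (Finset.sum_eq_zero fun z _ => ?_).symm
    by_cases h1 : zs a = z
    · by_cases h2 : zs b = z
      · rw [if_pos h1, if_pos h2, if_neg fun h3 => hE ⟨h1.trans h2.symm, h1.trans h3.symm⟩]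
        ring
      · rw [if_pos h1, if_neg h2, zero_mul, mul_zero]
    · rw [if_neg h1, zero_mul]

lemma LRM_sum_w_triple (p : E → ℝ) (hp : ∑ y, p y = 1) {a b c : ι}
    (hab : a ≠ b) (hac : a ≠ c) (hbc : b ≠ c) :
    ∑ zs : ι → E, (∏ j, p (zs j)) * (if zs a = zs b ∧ zs a = zs c then (1 : ℝ) else 0)
      = ∑ z, p z ^ 3 := by
  simp_rw [LRM_ind_triple hab hac hbc, Finset.mul_sum]
  rw [Finset.sum_comm]
  refine Finset.sum_congr rfl fun z _ => ?_
  have := LRM_sum_w_two p hp ({a, b, c} : Finset ι) ∅ (Finset.disjoint_empty_right _) z z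
  have hcard : ({a, b, c} : Finset ι).card = 3 := by
    rw [Finset.card_insert_of_notMem (by simp [hab, hac]), Finset.card_pair hbc]
  simpa [hcard] using this

lemma LRM_sum_w_quad (p : E → ℝ) (hp : ∑ y, p y = 1) {a b c d : ι}
    (hab : a ≠ b) (hcd : c ≠ d) (hac : a ≠ c) (had : a ≠ d) (hbc : b ≠ c) (hbd : b ≠ d) :
    ∑ zs : ι → E, (∏ j, p (zs j)) * (if zs a = zs b ∧ zs c = zs d then (1 : ℝ) else 0)
      = (∑ z, p z ^ 2) * (∑ z, p z ^ 2) := by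
  have hind : ∀ zs : ι → E, (if zs a = zs b ∧ zs c = zs d then (1 : ℝ) else 0)
      = (if zs a = zs b then (1 : ℝ) else 0) * (if zs c = zs d then (1 : ℝ) else 0) := by
    intro zs
    by_cases h1 : zs a = zs b <;> by_cases h2 : zs c = zs d <;> simp [h1, h2]
  simp_rw [hind, LRM_ind_pair hab, LRM_ind_pair hcd, Finset.sum_mul_sum, Finset.mul_sum]
  rw [Finset.sum_comm]
  refine Finset.sum_congr rfl fun z _ => ?_
  rw [Finset.sum_comm]
  refine Finset.sum_congr rfl fun z' _ => ?_
  have hdisj : Disjoint ({a, b} : Finset ι) ({c, d} : Finset ι) := by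
    simp [Finset.disjoint_left, hac, had, hbc, hbd]
  have := LRM_sum_w_two p hp ({a, b} : Finset ι) ({c, d} : Finset ι) hdisj z z'
  simpa [Finset.card_pair hab, Finset.card_pair hcd, mul_assoc] using this

lemma LRM_count_ne (A B : Finset ι) :
    ∑ l ∈ A, ∑ l' ∈ B, (if l ≠ l' then (1 : ℝ) else 0)
      = (A.card : ℝ) * B.card - ((A ∩ B).card : ℝ) := by
  have h1 : ∀ l l' : ι, (if l ≠ l' then (1 : ℝ) else 0) = 1 - (if l = l' then 1 else 0) := by
    intro l l'; by_cases h : l = l' <;> simp [h]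
  have h2 : ∀ l : ι, ∑ l' ∈ B, (if l ≠ l' then (1 : ℝ) else 0)
      = (B.card : ℝ) - (if l ∈ B then 1 else 0) := by
    intro l
    simp_rw [h1, Finset.sum_sub_distrib, Finset.sum_const, nsmul_eq_mul, mul_one,
      Finset.sum_ite_eq]
  simp_rw [h2]
  rw [Finset.sum_sub_distrib, Finset.sum_const, nsmul_eq_mul]
  congr 1
  rw [Finset.sum_ite_mem, Finset.sum_const, nsmul_eq_mul, mul_one]

end Generic
section BornFacts

set_option maxHeartbeats 1000000

variable {n : ℕ}

lemma LRM_splitEquiv_aux (S : Finset (Fin n)) :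
    ∀ (z : {i : Fin n // i ∈ S} → Fin 2) (k : {i : Fin n // i ∉ S} → Fin 2),
      (∀ i : {i : Fin n // i ∈ S}, embedIdx S z k i = z i) ∧
      (∀ i : {i : Fin n // i ∉ S}, embedIdx S z k i = k i) := by
  intro z k
  constructor
  · intro i; simp [embedIdx, i.2]
  · intro i; simp [embedIdx, i.2]

noncomputable def LRM_splitEquiv (S : Finset (Fin n)) :
    (({i : Fin n // i ∈ S} → Fin 2) × ({i : Fin n // i ∉ S} → Fin 2)) ≃ (Fin n → Fin 2) where
  toFun zk := embedIdx S zk.1 zk.2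
  invFun x := (fun i => x i, fun i => x i)
  left_inv := by
    rintro ⟨z, k⟩
    refine Prod.ext ?_ ?_ <;> funext i
    · simp [embedIdx, i.2]
    · simp [embedIdx, i.2]
  right_inv := by
    intro x; funext i
    by_cases h : i ∈ S <;> simp [embedIdx, h]

/-- The amplitude vector after applying the local unitaries. -/
noncomputable def LRM_amp (ψ : (Fin n → Fin 2) → ℂ) (S : Finset (Fin n))
    (V : {i : Fin n // i ∈ S} → Matrix.unitaryGroup (Fin 2) ℂ) (x : Fin n → Fin 2) : ℂ :=
  ∑ a, localOp S (fun i => (V i : Matrix (Fin 2) (Fin 2) ℂ)) x a * ψ a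

lemma LRM_localOp_unitary (S : Finset (Fin n))
    (V : {i : Fin n // i ∈ S} → Matrix.unitaryGroup (Fin 2) ℂ) (a b : Fin n → Fin 2) :
    ∑ x, (starRingEnd ℂ) (localOp S (fun i => (V i : Matrix (Fin 2) (Fin 2) ℂ)) x a) *
        localOp S (fun i => (V i : Matrix (Fin 2) (Fin 2) ℂ)) x b
      = if a = b then 1 else 0 := by
  classical
  have h1 : ∀ x : Fin n → Fin 2,
      (starRingEnd ℂ) (localOp S (fun i => (V i : Matrix (Fin 2) (Fin 2) ℂ)) x a) *
        localOp S (fun i => (V i : Matrix (Fin 2) (Fin 2) ℂ)) x b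
      = ∏ i, ((starRingEnd ℂ) (if h : i ∈ S then (V ⟨i, h⟩ : Matrix (Fin 2) (Fin 2) ℂ) (x i) (a i)
            else (if x i = a i then 1 else 0)) *
          (if h : i ∈ S then (V ⟨i, h⟩ : Matrix (Fin 2) (Fin 2) ℂ) (x i) (b i)
            else (if x i = b i then 1 else 0))) := by
    intro x
    rw [localOp, localOp, map_prod, ← Finset.prod_mul_distrib]
  rw [show (∑ x, (starRingEnd ℂ) (localOp S (fun i => (V i : Matrix (Fin 2) (Fin 2) ℂ)) x a) *
        localOp S (fun i => (V i : Matrix (Fin 2) (Fin 2) ℂ)) x b)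
      = ∑ x : Fin n → Fin 2, ∏ i,
          ((fun (i : Fin n) (c : Fin 2) => (starRingEnd ℂ)
              (if h : i ∈ S then (V ⟨i, h⟩ : Matrix (Fin 2) (Fin 2) ℂ) c (a i)
                else (if c = a i then 1 else 0)) *
            (if h : i ∈ S then (V ⟨i, h⟩ : Matrix (Fin 2) (Fin 2) ℂ) c (b i)
              else (if c = b i then 1 else 0))) i (x i))
      from Finset.sum_congr rfl fun x _ => h1 x]
  rw [LRM_sum_prod_pi (fun (i : Fin n) (c : Fin 2) => (starRingEnd ℂ)
              (if h : i ∈ S then (V ⟨i, h⟩ : Matrix (Fin 2) (Fin 2) ℂ) c (a i)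
                else (if c = a i then 1 else 0)) *
            (if h : i ∈ S then (V ⟨i, h⟩ : Matrix (Fin 2) (Fin 2) ℂ) c (b i)
              else (if c = b i then 1 else 0)))]
  have h2 : ∀ i : Fin n, (∑ c : Fin 2, (starRingEnd ℂ)
        (if h : i ∈ S then (V ⟨i, h⟩ : Matrix (Fin 2) (Fin 2) ℂ) c (a i)
          else (if c = a i then 1 else 0)) *
      (if h : i ∈ S then (V ⟨i, h⟩ : Matrix (Fin 2) (Fin 2) ℂ) c (b i)
        else (if c = b i then 1 else 0)))
      = if a i = b i then 1 else 0 := by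
    intro i
    by_cases h : i ∈ S
    · simp only [dif_pos h]
      have h3 : (star (V ⟨i, h⟩ : Matrix (Fin 2) (Fin 2) ℂ) *
          (V ⟨i, h⟩ : Matrix (Fin 2) (Fin 2) ℂ)) (a i) (b i)
          = (1 : Matrix (Fin 2) (Fin 2) ℂ) (a i) (b i) := by
        rw [Matrix.UnitaryGroup.star_mul_self]
      simpa [Matrix.mul_apply, Matrix.star_apply, Matrix.one_apply] using h3
    · simp only [dif_neg h]
      by_cases hab : a i = b i
      · simp [hab, ← ite_and, and_self, Finset.sum_ite_eq', apply_ite (starRingEnd ℂ)]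
      · rw [if_neg hab]
        refine Finset.sum_eq_zero fun c _ => ?_
        by_cases h1' : c = a i
        · rw [if_pos h1', if_neg (fun h2' => hab (h1'.symm.trans h2')), mul_zero]
        · rw [if_neg h1', map_zero, zero_mul]
  rw [Finset.prod_congr rfl fun i _ => h2 i, Finset.prod_boole]
  simp [funext_iff]

lemma LRM_amp_normSq (ψ : (Fin n → Fin 2) → ℂ) (hψ : (∑ x, star (ψ x) * ψ x) = 1)
    (S : Finset (Fin n)) (V : {i : Fin n // i ∈ S} → Matrix.unitaryGroup (Fin 2) ℂ) :
    ∑ x, (Complex.normSq (LRM_amp ψ S V x) : ℂ) = 1 := by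
  classical
  set A := localOp S (fun i => (V i : Matrix (Fin 2) (Fin 2) ℂ)) with hA
  have h0 : ∀ x, (Complex.normSq (LRM_amp ψ S V x) : ℂ)
      = (starRingEnd ℂ) (LRM_amp ψ S V x) * LRM_amp ψ S V x := by
    intro x; rw [mul_comm, Complex.mul_conj]
  simp_rw [h0, LRM_amp, map_sum, Finset.sum_mul_sum]
  rw [Finset.sum_comm]
  have key : ∀ a, ∑ x : Fin n → Fin 2, ∑ b, (starRingEnd ℂ) (A x a * ψ a) * (A x b * ψ b)
      = (starRingEnd ℂ) (ψ a) * ψ a := by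
    intro a
    rw [Finset.sum_comm]
    have h2 : ∀ b, ∑ x : Fin n → Fin 2, (starRingEnd ℂ) (A x a * ψ a) * (A x b * ψ b)
        = ((starRingEnd ℂ) (ψ a) * ψ b) * (if a = b then 1 else 0) := by
      intro b
      rw [← LRM_localOp_unitary S V a b, Finset.mul_sum]
      refine Finset.sum_congr rfl fun x _ => by simp only [_root_.map_mul]; ring
    simp_rw [h2, mul_ite, mul_one, mul_zero]
    rw [Finset.sum_ite_eq, if_pos (Finset.mem_univ a)]
  rw [Finset.sum_congr rfl fun a _ => key a]
  simpa only [starRingEnd_apply] using hψ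

lemma LRM_born_eq (ψ : (Fin n → Fin 2) → ℂ) (S : Finset (Fin n))
    (V : {i : Fin n // i ∈ S} → Matrix.unitaryGroup (Fin 2) ℂ)
    (z : {i : Fin n // i ∈ S} → Fin 2) :
    born (Matrix.vecMulVec ψ (star ψ)) S V z
      = ∑ k : {i : Fin n // i ∉ S} → Fin 2,
          Complex.normSq (LRM_amp ψ S V (embedIdx S z k)) := by
  classical
  set A := localOp S (fun i => (V i : Matrix (Fin 2) (Fin 2) ℂ)) with hA
  set φ := LRM_amp ψ S V with hφ
  -- Step 1 : (A ρ Aᴴ) x y = φ x * conj (φ y)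
  have hM : ∀ x y, (A * Matrix.vecMulVec ψ (star ψ) * Aᴴ) x y
      = φ x * (starRingEnd ℂ) (φ y) := by
    intro x y
    rw [Matrix.mul_apply]
    have hin : ∀ b, (A * Matrix.vecMulVec ψ (star ψ)) x b = φ x * (starRingEnd ℂ) (ψ b) := by
      intro b
      rw [Matrix.mul_apply]
      have : ∀ a, A x a * Matrix.vecMulVec ψ (star ψ) a b
          = (A x a * ψ a) * (starRingEnd ℂ) (ψ b) := by
        intro a; rw [Matrix.vecMulVec_apply]
        simp only [Pi.star_apply, starRingEnd_apply]; ring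
      rw [Finset.sum_congr rfl fun a _ => this a, ← Finset.sum_mul, hφ, LRM_amp, ← hA]
    rw [Finset.sum_congr rfl fun b _ => by rw [hin b]]
    have : (starRingEnd ℂ) (φ y) = ∑ b, (starRingEnd ℂ) (A y b * ψ b) := by
      rw [hφ, LRM_amp, map_sum, ← hA]
    rw [this, Finset.mul_sum]
    refine Finset.sum_congr rfl fun b _ => ?_
    rw [Matrix.conjTranspose_apply]
    simp only [starRingEnd_apply, star_mul']
    ring
  -- Step 2 : projZ entries as a single indicator
  have hP : ∀ y x : Fin n → Fin 2, projZ S z y x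
      = if (y = x ∧ ∀ (i : Fin n) (h : i ∈ S), x i = z ⟨i, h⟩) then 1 else 0 := by
    intro y x
    rw [projZ]
    have h1 : ∀ i : Fin n, (if h : i ∈ S
          then (if y i = z ⟨i, h⟩ ∧ x i = z ⟨i, h⟩ then (1 : ℂ) else 0)
          else (if y i = x i then 1 else 0))
        = if (if h : i ∈ S then (y i = z ⟨i, h⟩ ∧ x i = z ⟨i, h⟩) else y i = x i)
          then 1 else 0 := by
      intro i; by_cases h : i ∈ S <;> simp [h]
    rw [Finset.prod_congr rfl fun i _ => h1 i, Finset.prod_boole]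
    congr 1
    simp only [eq_iff_iff]
    constructor
    · intro h
      have hyx : y = x := by
        funext i
        by_cases hi : i ∈ S
        · have := h i (Finset.mem_univ i); rw [dif_pos hi] at this
          exact this.1.trans this.2.symm
        · have := h i (Finset.mem_univ i); rwa [dif_neg hi] at this
      refine ⟨hyx, fun i hi => ?_⟩
      have := h i (Finset.mem_univ i); rw [dif_pos hi] at this
      exact this.2
    · rintro ⟨hyx, hagr⟩ i _
      by_cases hi : i ∈ S
      · rw [dif_pos hi]
        exact ⟨hyx ▸ hagr i hi, hagr i hi⟩
      · rw [dif_neg hi, hyx]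
  -- Step 3 : compute the trace
  rw [born, ← hA]
  have htr : (A * Matrix.vecMulVec ψ (star ψ) * Aᴴ * projZ S z).trace
      = ∑ x, (if (∀ (i : Fin n) (h : i ∈ S), x i = z ⟨i, h⟩)
          then (Complex.normSq (φ x) : ℂ) else 0) := by
    rw [Matrix.trace]
    have hd : ∀ x, (A * Matrix.vecMulVec ψ (star ψ) * Aᴴ * projZ S z).diag x
        = ∑ y, (φ x * (starRingEnd ℂ) (φ y)) * projZ S z y x := by
      intro x
      rw [Matrix.diag_apply, Matrix.mul_apply]
      exact Finset.sum_congr rfl fun y _ => by rw [hM x y]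
    rw [Finset.sum_congr rfl fun x _ => hd x]
    refine Finset.sum_congr rfl fun x _ => ?_
    simp_rw [hP]
    rw [Finset.sum_eq_single x]
    · by_cases hc : ∀ (i : Fin n) (h : i ∈ S), x i = z ⟨i, h⟩
      · rw [if_pos ⟨rfl, hc⟩, if_pos hc, mul_one, Complex.mul_conj]
      · rw [if_neg (fun hh => hc hh.2), if_neg hc, mul_zero]
    · intro y _ hy
      rw [if_neg (fun hh => hy hh.1), mul_zero]
    · intro h; exact absurd (Finset.mem_univ x) h
  rw [htr]
  -- Step 4 : take real parts and reindex
  rw [show (∑ x, (if (∀ (i : Fin n) (h : i ∈ S), x i = z ⟨i, h⟩)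
      then (Complex.normSq (φ x) : ℂ) else 0)).re
      = ∑ x, (if (∀ (i : Fin n) (h : i ∈ S), x i = z ⟨i, h⟩)
          then Complex.normSq (φ x) else 0) from by
    rw [Complex.re_sum]
    refine Finset.sum_congr rfl fun x _ => ?_
    by_cases hc : ∀ (i : Fin n) (h : i ∈ S), x i = z ⟨i, h⟩
    · rw [if_pos hc, if_pos hc, Complex.ofReal_re]
    · rw [if_neg hc, if_neg hc, Complex.zero_re]]
  rw [← Equiv.sum_comp (LRM_splitEquiv S)]
  rw [Fintype.sum_prod_type]
  have hagr : ∀ (z' : {i : Fin n // i ∈ S} → Fin 2) (k : {i : Fin n // i ∉ S} → Fin 2),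
      (∀ (i : Fin n) (h : i ∈ S), (LRM_splitEquiv S (z', k)) i = z ⟨i, h⟩) ↔ z' = z := by
    intro z' k
    constructor
    · intro h; funext j
      have := h j.1 j.2
      rwa [show (LRM_splitEquiv S (z', k)) j.1 = z' j from
        (LRM_splitEquiv_aux S z' k).1 j, Subtype.coe_eta] at this
    · rintro rfl i h
      exact (LRM_splitEquiv_aux S z' k).1 ⟨i, h⟩
  have : ∀ z', (∑ k, if (∀ (i : Fin n) (h : i ∈ S), (LRM_splitEquiv S (z', k)) i = z ⟨i, h⟩)
      then Complex.normSq (φ (LRM_splitEquiv S (z', k))) else 0)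
      = if z' = z then (∑ k, Complex.normSq (φ (embedIdx S z' k))) else 0 := by
    intro z'
    by_cases hz : z' = z
    · rw [if_pos hz, Finset.sum_congr rfl fun k _ => if_pos ((hagr z' k).mpr hz)]
      rfl
    · rw [if_neg hz, Finset.sum_congr rfl fun k _ => if_neg (fun hc => hz ((hagr z' k).mp hc))]
      exact Finset.sum_const_zero
  rw [Finset.sum_congr rfl fun z' _ => this z', Finset.sum_ite_eq' Finset.univ z]
  simp

lemma LRM_born_nonneg (ψ : (Fin n → Fin 2) → ℂ) (S : Finset (Fin n))
    (V : {i : Fin n // i ∈ S} → Matrix.unitaryGroup (Fin 2) ℂ)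
    (z : {i : Fin n // i ∈ S} → Fin 2) :
    0 ≤ born (Matrix.vecMulVec ψ (star ψ)) S V z := by
  rw [LRM_born_eq]
  exact Finset.sum_nonneg fun k _ => Complex.normSq_nonneg _

lemma LRM_born_sum (ψ : (Fin n → Fin 2) → ℂ) (hψ : (∑ x, star (ψ x) * ψ x) = 1)
    (S : Finset (Fin n)) (V : {i : Fin n // i ∈ S} → Matrix.unitaryGroup (Fin 2) ℂ) :
    ∑ z, born (Matrix.vecMulVec ψ (star ψ)) S V z = 1 := by
  simp_rw [LRM_born_eq]
  have h1 : ∑ z : {i : Fin n // i ∈ S} → Fin 2, ∑ k : {i : Fin n // i ∉ S} → Fin 2,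
      Complex.normSq (LRM_amp ψ S V (embedIdx S z k))
      = ∑ x, Complex.normSq (LRM_amp ψ S V x) := by
    rw [← Equiv.sum_comp (LRM_splitEquiv S) (fun x => Complex.normSq (LRM_amp ψ S V x)),
      Fintype.sum_prod_type]
    rfl
  rw [h1]
  have := LRM_amp_normSq ψ hψ S V
  have h2 : ((∑ x, Complex.normSq (LRM_amp ψ S V x) : ℝ) : ℂ) = 1 := by push_cast at this ⊢; exact this
  exact_mod_cast h2

lemma LRM_born_le_one (ψ : (Fin n → Fin 2) → ℂ) (hψ : (∑ x, star (ψ x) * ψ x) = 1)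
    (S : Finset (Fin n)) (V : {i : Fin n // i ∈ S} → Matrix.unitaryGroup (Fin 2) ℂ)
    (z : {i : Fin n // i ∈ S} → Fin 2) :
    born (Matrix.vecMulVec ψ (star ψ)) S V z ≤ 1 := by
  rw [← LRM_born_sum ψ hψ S V]
  exact Finset.single_le_sum (fun z' _ => LRM_born_nonneg ψ S V z') (Finset.mem_univ z)

end BornFacts
section MeasureFacts

open scoped ENNReal

set_option maxHeartbeats 1000000

variable {n : ℕ}

lemma LRM_measurable_born (S : Finset (Fin n)) (ρ : QMat n) (z : {i : Fin n // i ∈ S} → Fin 2) :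
    Measurable fun V : {i : Fin n // i ∈ S} → Matrix.unitaryGroup (Fin 2) ℂ =>
      born ρ S V z := by
  have hA : ∀ x y : Fin n → Fin 2, Measurable fun V : {i : Fin n // i ∈ S} →
      Matrix.unitaryGroup (Fin 2) ℂ =>
      localOp S (fun i => (V i : Matrix (Fin 2) (Fin 2) ℂ)) x y := by
    intro x y
    haveI hsc : SecondCountableTopology (Matrix (Fin 2) (Fin 2) ℂ) :=
      (inferInstance : SecondCountableTopology (Fin 2 → Fin 2 → ℂ))
    haveI : SecondCountableTopology (Matrix.unitaryGroup (Fin 2) ℂ) :=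
      TopologicalSpace.secondCountableTopology_induced _ _ (Subtype.val)
    unfold localOp
    refine Finset.measurable_prod _ fun i _ => ?_
    by_cases h : i ∈ S
    · simp only [dif_pos h]
      have h1 : Continuous fun V : {i : Fin n // i ∈ S} → Matrix.unitaryGroup (Fin 2) ℂ =>
          (V ⟨i, h⟩ : Matrix (Fin 2) (Fin 2) ℂ) :=
        continuous_subtype_val.comp (continuous_apply _)
      exact (h1.matrix_elem (x i) (y i)).measurable
    · simp only [dif_neg h]; exact measurable_const
  unfold born
  apply Complex.measurable_re.comp
  simp only [Matrix.trace, Matrix.diag, Matrix.mul_apply, Matrix.conjTranspose_apply]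
  refine Finset.measurable_sum _ fun x _ => ?_
  refine Finset.measurable_sum _ fun j _ => ?_
  refine Measurable.mul ?_ measurable_const
  refine Finset.measurable_sum _ fun b _ => ?_
  refine Measurable.mul ?_ ?_
  · refine Finset.measurable_sum _ fun a _ => ?_
    exact (hA x a).mul measurable_const
  · exact continuous_star.measurable.comp (hA j b)

lemma LRM_bornMeasure_apply (S : Finset (Fin n)) (ρ : QMat n)
    (V : {i : Fin n // i ∈ S} → Matrix.unitaryGroup (Fin 2) ℂ)
    (s : Set ({i : Fin n // i ∈ S} → Fin 2)) (hs : MeasurableSet s) :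
    bornMeasure ρ S V s
      = ∑ z, ENNReal.ofReal (born ρ S V z) * Set.indicator s 1 z := by
  rw [bornMeasure, Measure.finset_sum_apply]
  exact Finset.sum_congr rfl fun z _ => by
    rw [Measure.smul_apply, Measure.dirac_apply' _ hs, smul_eq_mul]

lemma LRM_bornMeasure_finite (S : Finset (Fin n)) (ρ : QMat n)
    (V : {i : Fin n // i ∈ S} → Matrix.unitaryGroup (Fin 2) ℂ) :
    IsFiniteMeasure (bornMeasure ρ S V) := by
  constructor
  rw [LRM_bornMeasure_apply S ρ V _ MeasurableSet.univ]
  refine ENNReal.sum_lt_top.mpr fun z _ => ?_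
  rw [Set.indicator_univ, Pi.one_apply, mul_one]
  exact ENNReal.ofReal_lt_top

lemma LRM_isProb_bornMeasure (ψ : (Fin n → Fin 2) → ℂ)
    (hψ : (∑ x, star (ψ x) * ψ x) = 1) (S : Finset (Fin n))
    (V : {i : Fin n // i ∈ S} → Matrix.unitaryGroup (Fin 2) ℂ) :
    IsProbabilityMeasure (bornMeasure (Matrix.vecMulVec ψ (star ψ)) S V) := by
  constructor
  rw [LRM_bornMeasure_apply S _ V _ MeasurableSet.univ]
  simp only [Set.indicator_univ, Pi.one_apply, mul_one]
  rw [← ENNReal.ofReal_sum_of_nonneg (fun z _ => LRM_born_nonneg ψ S V z),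
    LRM_born_sum ψ hψ S V, ENNReal.ofReal_one]

lemma LRM_pi_born_eq (S : Finset (Fin n)) (K : ℕ) (ρ : QMat n)
    (V : {i : Fin n // i ∈ S} → Matrix.unitaryGroup (Fin 2) ℂ) :
    Measure.pi (fun _ : Fin K => bornMeasure ρ S V)
      = ∑ zs : Fin K → ({i : Fin n // i ∈ S} → Fin 2),
          (∏ k, ENNReal.ofReal (born ρ S V (zs k))) • Measure.dirac zs := by
  haveI := LRM_bornMeasure_finite S ρ V
  refine Measure.pi_eq fun s hs => ?_
  have hmeas : MeasurableSet (Set.pi Set.univ s) := MeasurableSet.univ_pi hs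
  rw [Measure.finset_sum_apply]
  have h1 : ∀ zs : Fin K → ({i : Fin n // i ∈ S} → Fin 2),
      ((∏ k, ENNReal.ofReal (born ρ S V (zs k))) • Measure.dirac zs) (Set.pi Set.univ s)
      = ∏ k, (ENNReal.ofReal (born ρ S V (zs k)) * Set.indicator (s k) 1 (zs k)) := by
    intro zs
    rw [Measure.smul_apply, Measure.dirac_apply' _ hmeas, smul_eq_mul]
    by_cases h : zs ∈ Set.pi Set.univ s
    · have hk : ∀ k, zs k ∈ s k := fun k => h k (Set.mem_univ k)
      rw [Set.indicator_of_mem h, Pi.one_apply, mul_one, Finset.prod_mul_distrib]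
      rw [Finset.prod_congr rfl (fun k _ =>
        show Set.indicator (s k) (1 : ({i : Fin n // i ∈ S} → Fin 2) → ℝ≥0∞) (zs k) = 1 by
          rw [Set.indicator_of_mem (hk k)]; rfl), Finset.prod_const_one, mul_one]
    · rw [Set.indicator_of_notMem h, mul_zero]
      obtain ⟨k, hk⟩ : ∃ k, zs k ∉ s k := by simpa [Set.mem_pi] using h
      exact (Finset.prod_eq_zero (Finset.mem_univ k)
        (by rw [Set.indicator_of_notMem hk, mul_zero])).symm
  rw [Finset.sum_congr rfl fun zs _ => h1 zs,
    LRM_sum_prod_pi (fun (k : Fin K) (y : {i : Fin n // i ∈ S} → Fin 2) =>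
      ENNReal.ofReal (born ρ S V y) * Set.indicator (s k) 1 y)]
  exact Finset.prod_congr rfl fun k _ => (LRM_bornMeasure_apply S ρ V (s k) (hs k)).symm

lemma LRM_kernel_eq (S : Finset (Fin n)) (K : ℕ) (ρ : QMat n)
    (V : {i : Fin n // i ∈ S} → Matrix.unitaryGroup (Fin 2) ℂ) :
    ((Measure.pi fun _ : Fin K => bornMeasure ρ S V).map (Prod.mk V))
      = ∑ zs : Fin K → ({i : Fin n // i ∈ S} → Fin 2),
          (∏ k, ENNReal.ofReal (born ρ S V (zs k))) • Measure.dirac (V, zs) := by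
  rw [LRM_pi_born_eq]
  ext s hs
  rw [Measure.map_apply measurable_prodMk_left hs, Measure.finset_sum_apply,
    Measure.finset_sum_apply]
  refine Finset.sum_congr rfl fun zs _ => ?_
  rw [Measure.smul_apply, Measure.smul_apply,
    Measure.dirac_apply' _ (measurable_prodMk_left hs), Measure.dirac_apply' _ hs]
  congr 1

lemma LRM_kernel_measurable (S : Finset (Fin n)) (K : ℕ) (ρ : QMat n) :
    Measurable fun V : {i : Fin n // i ∈ S} → Matrix.unitaryGroup (Fin 2) ℂ =>
      ((Measure.pi fun _ : Fin K => bornMeasure ρ S V).map (Prod.mk V)) := by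
  have heq : (fun V : {i : Fin n // i ∈ S} → Matrix.unitaryGroup (Fin 2) ℂ =>
      (Measure.pi fun _ : Fin K => bornMeasure ρ S V).map (Prod.mk V))
      = fun V => ∑ zs : Fin K → ({i : Fin n // i ∈ S} → Fin 2),
          (∏ k, ENNReal.ofReal (born ρ S V (zs k))) • Measure.dirac (V, zs) :=
    funext fun V => LRM_kernel_eq S K ρ V
  rw [heq]
  refine Measure.measurable_of_measurable_coe _ fun s hs => ?_
  simp_rw [Measure.finset_sum_apply, Measure.smul_apply, Measure.dirac_apply' _ hs,
    smul_eq_mul]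
  refine Finset.measurable_sum _ fun zs _ => ?_
  refine Measurable.mul ?_ ?_
  · exact Finset.measurable_prod _ fun k _ =>
      (LRM_measurable_born S ρ (zs k)).ennreal_ofReal
  · have h2 : (fun V : {i : Fin n // i ∈ S} → Matrix.unitaryGroup (Fin 2) ℂ =>
        Set.indicator s (1 : (({i : Fin n // i ∈ S} → Matrix.unitaryGroup (Fin 2) ℂ) × (Fin K → {i : Fin n // i ∈ S} → Fin 2)) → ℝ≥0∞) (V, zs))
        = Set.indicator ((fun V => (V, zs)) ⁻¹' s) 1 := by
      funext V
      by_cases h : (V, zs) ∈ s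
      · rw [Set.indicator_of_mem h, Set.indicator_of_mem (show V ∈ _ from h)]; rfl
      · rw [Set.indicator_of_notMem h, Set.indicator_of_notMem (show V ∉ _ from h)]
    rw [h2]
    exact measurable_const.indicator (measurable_prodMk_right hs)

lemma LRM_jointRound_eq (S : Finset (Fin n)) (K : ℕ) (ρ : QMat n)
    (μ : Measure (Matrix.unitaryGroup (Fin 2) ℂ)) [IsProbabilityMeasure μ] :
    jointRound μ ρ S K
      = ∑ zs : Fin K → ({i : Fin n // i ∈ S} → Fin 2),
          ((Measure.pi fun _ : {i : Fin n // i ∈ S} => μ).withDensity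
            (fun V => ∏ k, ENNReal.ofReal (born ρ S V (zs k)))).map (fun V => (V, zs)) := by
  ext s hs
  rw [jointRound, Measure.bind_apply hs (LRM_kernel_measurable S K ρ).aemeasurable]
  have h1 : ∀ V, ((Measure.pi fun _ : Fin K => bornMeasure ρ S V).map (Prod.mk V)) s
      = ∑ zs : Fin K → ({i : Fin n // i ∈ S} → Fin 2),
          (∏ k, ENNReal.ofReal (born ρ S V (zs k))) * Set.indicator s 1 (V, zs) := by
    intro V
    rw [LRM_kernel_eq S K ρ V, Measure.finset_sum_apply]
    exact Finset.sum_congr rfl fun zs _ => by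
      rw [Measure.smul_apply, Measure.dirac_apply' _ hs, smul_eq_mul]
  rw [lintegral_congr h1,
    lintegral_finset_sum (f := fun zs V => (∏ k, ENNReal.ofReal (born ρ S V (zs k))) *
      Set.indicator s 1 (V, zs)) _ (fun zs _ => Measurable.mul
      (Finset.measurable_prod _ fun k _ => (LRM_measurable_born S ρ (zs k)).ennreal_ofReal)
      (by
        have h2 : (fun V : {i : Fin n // i ∈ S} → Matrix.unitaryGroup (Fin 2) ℂ =>
            Set.indicator s (1 : (({i : Fin n // i ∈ S} → Matrix.unitaryGroup (Fin 2) ℂ) × (Fin K → {i : Fin n // i ∈ S} → Fin 2)) → ℝ≥0∞) (V, zs))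
            = Set.indicator ((fun V => (V, zs)) ⁻¹' s) 1 := by
          funext V
          by_cases h : (V, zs) ∈ s
          · rw [Set.indicator_of_mem h, Set.indicator_of_mem (show V ∈ _ from h)]; rfl
          · rw [Set.indicator_of_notMem h, Set.indicator_of_notMem (show V ∉ _ from h)]
        rw [h2]
        exact measurable_const.indicator (measurable_prodMk_right hs))),
    Measure.finset_sum_apply]
  refine Finset.sum_congr rfl fun zs _ => ?_
  rw [Measure.map_apply measurable_prodMk_right hs,
    withDensity_apply _ (measurable_prodMk_right hs),
    ← lintegral_indicator (measurable_prodMk_right hs)]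
  refine lintegral_congr fun V => ?_
  by_cases h : (V, zs) ∈ s
  · rw [Set.indicator_of_mem h, Pi.one_apply, mul_one, Set.indicator_of_mem (show V ∈ _ from h)]
  · rw [Set.indicator_of_notMem h, mul_zero, Set.indicator_of_notMem (show V ∉ _ from h)]

end MeasureFacts
section IntegralFacts

open scoped ENNReal

variable {n : ℕ}

lemma LRM_isProb_jointRound (ψ : (Fin n → Fin 2) → ℂ)
    (hψ : (∑ x, star (ψ x) * ψ x) = 1) (S : Finset (Fin n)) (K : ℕ)
    (μ : Measure (Matrix.unitaryGroup (Fin 2) ℂ)) [IsProbabilityMeasure μ] :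
    IsProbabilityMeasure (jointRound μ (Matrix.vecMulVec ψ (star ψ)) S K) := by
  set ρ' := Matrix.vecMulVec ψ (star ψ) with hρ'
  constructor
  rw [LRM_jointRound_eq S K ρ' μ, Measure.finset_sum_apply]
  have h1 : ∀ zs : Fin K → ({i : Fin n // i ∈ S} → Fin 2),
      (((Measure.pi fun _ : {i : Fin n // i ∈ S} => μ).withDensity
        (fun V => ∏ k, ENNReal.ofReal (born ρ' S V (zs k)))).map (fun V => (V, zs))) Set.univ
      = ∫⁻ V, ∏ k, ENNReal.ofReal (born ρ' S V (zs k))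
          ∂(Measure.pi fun _ : {i : Fin n // i ∈ S} => μ) := by
    intro zs
    rw [Measure.map_apply measurable_prodMk_right MeasurableSet.univ, Set.preimage_univ,
      withDensity_apply _ MeasurableSet.univ, Measure.restrict_univ]
  rw [Finset.sum_congr rfl fun zs _ => h1 zs,
    ← lintegral_finset_sum _ (fun zs _ => Finset.measurable_prod _ fun k _ =>
      (LRM_measurable_born S ρ' (zs k)).ennreal_ofReal)]
  have h2 : ∀ V, (∑ zs : Fin K → ({i : Fin n // i ∈ S} → Fin 2),
      ∏ k, ENNReal.ofReal (born ρ' S V (zs k))) = 1 := by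
    intro V
    rw [LRM_sum_prod_pi (fun (_ : Fin K) (y : {i : Fin n // i ∈ S} → Fin 2) =>
      ENNReal.ofReal (born ρ' S V y))]
    rw [Finset.prod_congr rfl (fun k _ => by
      rw [← ENNReal.ofReal_sum_of_nonneg (fun z _ => LRM_born_nonneg ψ S V z),
        LRM_born_sum ψ hψ S V, ENNReal.ofReal_one]), Finset.prod_const, one_pow]
  rw [lintegral_congr h2, lintegral_one, measure_univ]

lemma LRM_integral_jointRound (ψ : (Fin n → Fin 2) → ℂ)
    (hψ : (∑ x, star (ψ x) * ψ x) = 1) (S : Finset (Fin n)) (K : ℕ)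
    (μ : Measure (Matrix.unitaryGroup (Fin 2) ℂ)) [IsProbabilityMeasure μ]
    (h : (Fin K → ({i : Fin n // i ∈ S} → Fin 2)) → ℝ) :
    ∫ ω, h ω.2 ∂(jointRound μ (Matrix.vecMulVec ψ (star ψ)) S K)
      = ∫ V, (∑ zs : Fin K → ({i : Fin n // i ∈ S} → Fin 2),
          (∏ k, born (Matrix.vecMulVec ψ (star ψ)) S V (zs k)) * h zs)
          ∂(Measure.pi fun _ : {i : Fin n // i ∈ S} => μ) := by
  set ρ' := Matrix.vecMulVec ψ (star ψ) with hρ'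
  have hmb : ∀ z, Measurable fun V : {i : Fin n // i ∈ S} → Matrix.unitaryGroup (Fin 2) ℂ =>
      born ρ' S V z := fun z => LRM_measurable_born S ρ' z
  have hWm : ∀ zs : Fin K → ({i : Fin n // i ∈ S} → Fin 2),
      Measurable fun V => (∏ k, born ρ' S V (zs k)) :=
    fun zs => Finset.measurable_prod _ fun k _ => hmb (zs k)
  have hWnn : ∀ (zs : Fin K → ({i : Fin n // i ∈ S} → Fin 2)) V,
      0 ≤ ∏ k, born ρ' S V (zs k) :=
    fun zs V => Finset.prod_nonneg fun k _ => LRM_born_nonneg ψ S V (zs k)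
  have hWle : ∀ (zs : Fin K → ({i : Fin n // i ∈ S} → Fin 2)) V,
      (∏ k, born ρ' S V (zs k)) ≤ 1 :=
    fun zs V => Finset.prod_le_one (fun k _ => LRM_born_nonneg ψ S V (zs k))
      (fun k _ => LRM_born_le_one ψ hψ S V (zs k))
  have hhm : Measurable fun ω : ({i : Fin n // i ∈ S} → Matrix.unitaryGroup (Fin 2) ℂ) ×
      (Fin K → ({i : Fin n // i ∈ S} → Fin 2)) => h ω.2 :=
    (measurable_of_countable h).comp measurable_snd
  have hWfin : ∀ zs : Fin K → ({i : Fin n // i ∈ S} → Fin 2),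
      IsFiniteMeasure ((Measure.pi fun _ : {i : Fin n // i ∈ S} => μ).withDensity
        (fun V => ∏ k, ENNReal.ofReal (born ρ' S V (zs k)))) := by
    intro zs
    refine isFiniteMeasure_withDensity ?_
    have hb : ∀ V, (∏ k, ENNReal.ofReal (born ρ' S V (zs k))) ≤ 1 := fun V =>
      Finset.prod_le_one (fun _ _ => zero_le) (fun k _ => by
        rw [← ENNReal.ofReal_one]
        exact ENNReal.ofReal_le_ofReal (LRM_born_le_one ψ hψ S V (zs k)))
    exact ((lintegral_mono hb).trans_lt (by simp)).ne
  rw [LRM_jointRound_eq S K ρ' μ]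
  have hInt : ∀ zs ∈ (Finset.univ : Finset (Fin K → ({i : Fin n // i ∈ S} → Fin 2))),
      Integrable (fun ω : ({i : Fin n // i ∈ S} → Matrix.unitaryGroup (Fin 2) ℂ) ×
          (Fin K → ({i : Fin n // i ∈ S} → Fin 2)) => h ω.2)
        (((Measure.pi fun _ : {i : Fin n // i ∈ S} => μ).withDensity
          (fun V => ∏ k, ENNReal.ofReal (born ρ' S V (zs k)))).map (fun V => (V, zs))) := by
    intro zs _
    haveI := hWfin zs
    haveI := Measure.isFiniteMeasure_map
      ((Measure.pi fun _ : {i : Fin n // i ∈ S} => μ).withDensity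
        (fun V => ∏ k, ENNReal.ofReal (born ρ' S V (zs k)))) (fun V => (V, zs))
    exact ⟨hhm.aestronglyMeasurable,
      HasFiniteIntegral.of_bounded (C := ∑ zs', |h zs'|) (ae_of_all _ fun ω => by
        rw [Real.norm_eq_abs]
        exact Finset.single_le_sum (fun z' _ => abs_nonneg (h z')) (Finset.mem_univ ω.2))⟩
  rw [integral_finset_sum_measure hInt]
  have hterm : ∀ zs : Fin K → ({i : Fin n // i ∈ S} → Fin 2),
      (∫ ω, h ω.2 ∂(((Measure.pi fun _ : {i : Fin n // i ∈ S} => μ).withDensity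
          (fun V => ∏ k, ENNReal.ofReal (born ρ' S V (zs k)))).map (fun V => (V, zs))))
      = (∫ V, (∏ k, born ρ' S V (zs k))
            ∂(Measure.pi fun _ : {i : Fin n // i ∈ S} => μ)) * h zs := by
    intro zs
    have h1 : (∫ ω, h ω.2 ∂(((Measure.pi fun _ : {i : Fin n // i ∈ S} => μ).withDensity
          (fun V => ∏ k, ENNReal.ofReal (born ρ' S V (zs k)))).map (fun V => (V, zs))))
        = ∫ _, h zs ∂((Measure.pi fun _ : {i : Fin n // i ∈ S} => μ).withDensity
          (fun V => ∏ k, ENNReal.ofReal (born ρ' S V (zs k)))) := by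
      rw [integral_map measurable_prodMk_right.aemeasurable hhm.aestronglyMeasurable]
    have h2 : ∫ V, (∏ k, born ρ' S V (zs k))
          ∂(Measure.pi fun _ : {i : Fin n // i ∈ S} => μ)
        = (((Measure.pi fun _ : {i : Fin n // i ∈ S} => μ).withDensity
            (fun V => ∏ k, ENNReal.ofReal (born ρ' S V (zs k)))) Set.univ).toReal := by
      rw [withDensity_apply _ MeasurableSet.univ, Measure.restrict_univ]
      rw [integral_eq_lintegral_of_nonneg_ae (ae_of_all _ (hWnn zs))
        (hWm zs).aestronglyMeasurable]
      congr 1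
      refine lintegral_congr fun V => ?_
      rw [ENNReal.ofReal_prod_of_nonneg (fun k _ => LRM_born_nonneg ψ S V (zs k))]
    rw [h1, integral_const, smul_eq_mul, measureReal_def, ← h2]
  rw [Finset.sum_congr rfl fun zs _ => hterm zs]
  have hIb : ∀ zs : Fin K → ({i : Fin n // i ∈ S} → Fin 2),
      Integrable (fun V => (∏ k, born ρ' S V (zs k)) * h zs)
        (Measure.pi fun _ : {i : Fin n // i ∈ S} => μ) := by
    intro zs
    refine Integrable.mul_const ?_ (h zs)
    exact ⟨(hWm zs).aestronglyMeasurable,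
      HasFiniteIntegral.of_bounded (C := 1) (ae_of_all _ fun V => by
        rw [Real.norm_eq_abs, abs_of_nonneg (hWnn zs V)]
        exact hWle zs V)⟩
  rw [integral_finset_sum _ (fun zs _ => hIb zs)]
  exact Finset.sum_congr rfl fun zs _ => (integral_mul_const (h zs) _).symm

end IntegralFacts
section Moments

variable {E : Type*} [Fintype E] [DecidableEq E]

lemma LRM_sum_swap5 {A : Type*} [Fintype A] {B : Type*} [Fintype B]
    (G : A → B → B → B → B → ℝ) :
    ∑ a : A, ∑ k : B, ∑ k' : B, ∑ l : B, ∑ l' : B, G a k k' l l'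
      = ∑ k : B, ∑ k' : B, ∑ l : B, ∑ l' : B, ∑ a : A, G a k k' l l' := by
  rw [Finset.sum_comm]
  refine Finset.sum_congr rfl fun k _ => ?_
  rw [Finset.sum_comm]
  refine Finset.sum_congr rfl fun k' _ => ?_
  rw [Finset.sum_comm]
  refine Finset.sum_congr rfl fun l _ => ?_
  rw [Finset.sum_comm]

lemma LRM_momA_gen (K : ℕ) (hK : 2 ≤ K) (p : E → ℝ) (hp : ∑ y, p y = 1) :
    ∑ zs : Fin K → E, (∏ k, p (zs k)) *
        ((1 / ((K : ℝ) * ((K : ℝ) - 1))) * ∑ k, ∑ k',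
          if k ≠ k' ∧ zs k = zs k' then (1 : ℝ) else 0)
      = ∑ z, p z ^ 2 := by
  have h2K : (2 : ℝ) ≤ (K : ℝ) := by exact_mod_cast hK
  have hK0 : ((K : ℝ) * ((K : ℝ) - 1)) ≠ 0 := by nlinarith
  have hstep : ∀ zs : Fin K → E, (∏ k, p (zs k)) *
        ((1 / ((K : ℝ) * ((K : ℝ) - 1))) * ∑ k, ∑ k',
          if k ≠ k' ∧ zs k = zs k' then (1 : ℝ) else 0)
      = (1 / ((K : ℝ) * ((K : ℝ) - 1))) * ∑ k, ∑ k',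
          (∏ j, p (zs j)) * (if k ≠ k' ∧ zs k = zs k' then (1 : ℝ) else 0) := by
    intro zs
    rw [show (∏ k, p (zs k)) * ((1 / ((K : ℝ) * ((K : ℝ) - 1))) * ∑ k, ∑ k',
          if k ≠ k' ∧ zs k = zs k' then (1 : ℝ) else 0)
        = (1 / ((K : ℝ) * ((K : ℝ) - 1))) * ((∏ k, p (zs k)) * ∑ k, ∑ k',
          if k ≠ k' ∧ zs k = zs k' then (1 : ℝ) else 0) from by ring]
    congr 1
    rw [Finset.mul_sum]
    exact Finset.sum_congr rfl fun k _ => Finset.mul_sum _ _ _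
  rw [Finset.sum_congr rfl fun zs _ => hstep zs, ← Finset.mul_sum]
  rw [Finset.sum_comm]
  rw [Finset.sum_congr rfl fun k (_ : k ∈ Finset.univ) => Finset.sum_comm]
  have hU : ∀ k k' : Fin K,
      (∑ zs : Fin K → E, (∏ j, p (zs j)) * (if k ≠ k' ∧ zs k = zs k' then (1 : ℝ) else 0))
      = if k = k' then 0 else ∑ z, p z ^ 2 := by
    intro k k'
    by_cases hkk : k = k'
    · simp [hkk]
    · rw [if_neg hkk]
      rw [Finset.sum_congr rfl fun zs (_ : zs ∈ Finset.univ) => by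
        rw [show (if k ≠ k' ∧ zs k = zs k' then (1 : ℝ) else 0)
            = (if zs k = zs k' then (1 : ℝ) else 0) from by simp [hkk]]]
      exact LRM_sum_w_pair p hp hkk
  rw [Finset.sum_congr rfl fun k _ => Finset.sum_congr rfl fun k' _ => hU k k']
  have hcount : ∑ k : Fin K, ∑ k' : Fin K, (if k = k' then (0 : ℝ) else ∑ z, p z ^ 2)
      = ((K : ℝ) * (K : ℝ) - (K : ℝ)) * ∑ z, p z ^ 2 := by
    have h1 : ∀ k k' : Fin K, (if k = k' then (0 : ℝ) else ∑ z, p z ^ 2)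
        = (if k ≠ k' then (1 : ℝ) else 0) * ∑ z, p z ^ 2 := by
      intro k k'; by_cases h : k = k' <;> simp [h]
    simp_rw [h1, ← Finset.sum_mul]
    rw [LRM_count_ne Finset.univ Finset.univ]
    simp [Finset.card_univ]
  rw [hcount, show (K : ℝ) * (K : ℝ) - (K : ℝ) = (K : ℝ) * ((K : ℝ) - 1) from by ring]
  field_simp
  exact mul_div_cancel_left₀ _ (by linarith)

lemma LRM_inner_sum (K : ℕ) (hK : 2 ≤ K) (T : Fin K → Fin K → ℝ) (m2 m3 : ℝ)
    (k k' : Fin K) (hkk : k ≠ k')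
    (hdiag : ∀ l, T l l = 0)
    (hkk'v : T k k' = m2) (hk'kv : T k' k = m2)
    (htop : ∀ l', l' ≠ k → l' ≠ k' → T k l' = m3 ∧ T k' l' = m3)
    (hleft : ∀ l, l ≠ k → l ≠ k' → T l k = m3 ∧ T l k' = m3)
    (hfar : ∀ l l', l ≠ k → l ≠ k' → l' ≠ k → l' ≠ k' → l ≠ l' → T l l' = m2 ^ 2) :
    ∑ l, ∑ l', T l l'
      = 2 * m2 + 4 * ((K : ℝ) - 2) * m3 + ((K : ℝ) - 2) * ((K : ℝ) - 3) * m2 ^ 2 := by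
  have hne : ∀ a ∈ ({k, k'} : Finset (Fin K))ᶜ, a ≠ k ∧ a ≠ k' := by
    intro a ha
    rw [Finset.mem_compl, Finset.mem_insert, Finset.mem_singleton] at ha
    push_neg at ha
    exact ha
  have hCcard : ((({k, k'} : Finset (Fin K))ᶜ.card : ℕ) : ℝ) = (K : ℝ) - 2 := by
    rw [Finset.card_compl, Finset.card_pair hkk, Fintype.card_fin,
      Nat.cast_sub (by omega)]
    push_cast
    ring
  rw [← Finset.sum_add_sum_compl ({k, k'} : Finset (Fin K)) (fun l => ∑ l', T l l')]
  have hrow_k : ∑ l' : Fin K, T k l' = m2 + ((K : ℝ) - 2) * m3 := by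
    rw [← Finset.sum_add_sum_compl ({k, k'} : Finset (Fin K)) (fun l' => T k l'),
      Finset.sum_pair hkk, hdiag k, hkk'v, zero_add]
    congr 1
    rw [Finset.sum_congr rfl fun l' hl' => (htop l' (hne l' hl').1 (hne l' hl').2).1,
      Finset.sum_const, nsmul_eq_mul, hCcard]
  have hrow_k' : ∑ l' : Fin K, T k' l' = m2 + ((K : ℝ) - 2) * m3 := by
    rw [← Finset.sum_add_sum_compl ({k, k'} : Finset (Fin K)) (fun l' => T k' l'),
      Finset.sum_pair hkk, hdiag k', hk'kv, add_zero]
    congr 1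
    rw [Finset.sum_congr rfl fun l' hl' => (htop l' (hne l' hl').1 (hne l' hl').2).2,
      Finset.sum_const, nsmul_eq_mul, hCcard]
  have hrow_far : ∀ l, l ≠ k → l ≠ k' →
      ∑ l' : Fin K, T l l' = 2 * m3 + ∑ l' ∈ ({k, k'} : Finset (Fin K))ᶜ, T l l' := by
    intro l hlk hlk'
    rw [← Finset.sum_add_sum_compl ({k, k'} : Finset (Fin K)) (fun l' => T l l'),
      Finset.sum_pair hkk, (hleft l hlk hlk').1, (hleft l hlk hlk').2]
    ring
  have hfar_sum : ∑ l ∈ ({k, k'} : Finset (Fin K))ᶜ, ∑ l' ∈ ({k, k'} : Finset (Fin K))ᶜ,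
      T l l' = ((K : ℝ) - 2) * ((K : ℝ) - 3) * m2 ^ 2 := by
    have hval : ∀ l ∈ ({k, k'} : Finset (Fin K))ᶜ, ∀ l' ∈ ({k, k'} : Finset (Fin K))ᶜ,
        T l l' = (if l ≠ l' then (1 : ℝ) else 0) * m2 ^ 2 := by
      intro l hl l' hl'
      by_cases hll' : l = l'
      · simp [hll', hdiag]
      · rw [if_pos hll', one_mul]
        exact hfar l l' (hne l hl).1 (hne l hl).2 (hne l' hl').1 (hne l' hl').2 hll'
    rw [Finset.sum_congr rfl fun l hl => Finset.sum_congr rfl fun l' hl' => hval l hl l' hl']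
    simp_rw [← Finset.sum_mul]
    rw [LRM_count_ne, Finset.inter_self, hCcard]
    ring
  rw [Finset.sum_pair hkk, hrow_k, hrow_k',
    Finset.sum_congr rfl fun l hl => hrow_far l (hne l hl).1 (hne l hl).2,
    Finset.sum_add_distrib, Finset.sum_const, nsmul_eq_mul, hCcard, hfar_sum]
  ring

lemma LRM_momB_gen (K : ℕ) (hK : 2 ≤ K) (p : E → ℝ) (hp : ∑ y, p y = 1) :
    ∑ zs : Fin K → E, (∏ k, p (zs k)) *
        ((1 / ((K : ℝ) * ((K : ℝ) - 1))) * ∑ k, ∑ k',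
          if k ≠ k' ∧ zs k = zs k' then (1 : ℝ) else 0) ^ 2
      = (2 * (∑ z, p z ^ 2) + 4 * ((K : ℝ) - 2) * (∑ z, p z ^ 3)
          + ((K : ℝ) - 2) * ((K : ℝ) - 3) * (∑ z, p z ^ 2) ^ 2)
        / ((K : ℝ) * ((K : ℝ) - 1)) := by
  have h2K : (2 : ℝ) ≤ (K : ℝ) := by exact_mod_cast hK
  have hK0 : ((K : ℝ) * ((K : ℝ) - 1)) ≠ 0 := by nlinarith
  have hpt : ∀ zs : Fin K → E, (∏ k, p (zs k)) *
        ((1 / ((K : ℝ) * ((K : ℝ) - 1))) * ∑ k, ∑ k',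
          if k ≠ k' ∧ zs k = zs k' then (1 : ℝ) else 0) ^ 2
      = (1 / ((K : ℝ) * ((K : ℝ) - 1))) ^ 2 * ∑ k, ∑ k', ∑ l, ∑ l',
          (∏ j, p (zs j)) * ((if k ≠ k' ∧ zs k = zs k' then (1 : ℝ) else 0) *
            (if l ≠ l' ∧ zs l = zs l' then (1 : ℝ) else 0)) := by
    intro zs
    have hsq : (∑ k, ∑ k', if k ≠ k' ∧ zs k = zs k' then (1 : ℝ) else 0) ^ 2
        = ∑ k, ∑ k', ∑ l, ∑ l', (if k ≠ k' ∧ zs k = zs k' then (1 : ℝ) else 0) *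
            (if l ≠ l' ∧ zs l = zs l' then (1 : ℝ) else 0) := by
      rw [sq, Finset.sum_mul_sum]
      refine Finset.sum_congr rfl fun k _ => ?_
      rw [Finset.sum_congr rfl fun l (_ : l ∈ Finset.univ) => Finset.sum_mul_sum
        Finset.univ Finset.univ (fun k' => if k ≠ k' ∧ zs k = zs k' then (1 : ℝ) else 0)
        (fun l' => if l ≠ l' ∧ zs l = zs l' then (1 : ℝ) else 0)]
      exact Finset.sum_comm
    calc (∏ k, p (zs k)) *
        ((1 / ((K : ℝ) * ((K : ℝ) - 1))) * ∑ k, ∑ k',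
          if k ≠ k' ∧ zs k = zs k' then (1 : ℝ) else 0) ^ 2
        = (1 / ((K : ℝ) * ((K : ℝ) - 1))) ^ 2 * ((∏ k, p (zs k)) *
          (∑ k, ∑ k', if k ≠ k' ∧ zs k = zs k' then (1 : ℝ) else 0) ^ 2) := by ring
      _ = (1 / ((K : ℝ) * ((K : ℝ) - 1))) ^ 2 * ((∏ k, p (zs k)) *
          ∑ k, ∑ k', ∑ l, ∑ l', (if k ≠ k' ∧ zs k = zs k' then (1 : ℝ) else 0) *
            (if l ≠ l' ∧ zs l = zs l' then (1 : ℝ) else 0)) := by rw [hsq]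
      _ = (1 / ((K : ℝ) * ((K : ℝ) - 1))) ^ 2 * ∑ k, ∑ k', ∑ l, ∑ l',
          (∏ j, p (zs j)) * ((if k ≠ k' ∧ zs k = zs k' then (1 : ℝ) else 0) *
            (if l ≠ l' ∧ zs l = zs l' then (1 : ℝ) else 0)) := by
        congr 1
        simp_rw [Finset.mul_sum]
  rw [Finset.sum_congr rfl fun zs _ => hpt zs, ← Finset.mul_sum]
  rw [LRM_sum_swap5 (fun (zs : Fin K → E) (k k' l l' : Fin K) =>
    (∏ j, p (zs j)) * ((if k ≠ k' ∧ zs k = zs k' then (1 : ℝ) else 0) *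
      (if l ≠ l' ∧ zs l = zs l' then (1 : ℝ) else 0)))]
  have hOuter : ∀ k k' : Fin K, (∑ l, ∑ l', ∑ zs : Fin K → E,
        (∏ j, p (zs j)) * ((if k ≠ k' ∧ zs k = zs k' then (1 : ℝ) else 0) *
          (if l ≠ l' ∧ zs l = zs l' then (1 : ℝ) else 0)))
      = if k = k' then 0 else
          2 * (∑ z, p z ^ 2) + 4 * ((K : ℝ) - 2) * (∑ z, p z ^ 3)
            + ((K : ℝ) - 2) * ((K : ℝ) - 3) * (∑ z, p z ^ 2) ^ 2 := by
    intro k k'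
    by_cases hkk : k = k'
    · rw [if_pos hkk]
      exact Finset.sum_eq_zero fun l _ => Finset.sum_eq_zero fun l' _ =>
        Finset.sum_eq_zero fun zs _ => by simp [hkk]
    · rw [if_neg hkk]
      refine LRM_inner_sum K hK (fun l l' => ∑ zs : Fin K → E,
        (∏ j, p (zs j)) * ((if k ≠ k' ∧ zs k = zs k' then (1 : ℝ) else 0) *
          (if l ≠ l' ∧ zs l = zs l' then (1 : ℝ) else 0)))
        (∑ z, p z ^ 2) (∑ z, p z ^ 3) k k' hkk ?_ ?_ ?_ ?_ ?_ ?_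
      · -- diagonal : T l l = 0
        intro l
        exact Finset.sum_eq_zero fun zs _ => by simp
      · -- T k k' = m2
        beta_reduce
        rw [Finset.sum_congr rfl fun zs (_ : zs ∈ Finset.univ) => by
          rw [show ((if k ≠ k' ∧ zs k = zs k' then (1 : ℝ) else 0) *
              (if k ≠ k' ∧ zs k = zs k' then (1 : ℝ) else 0))
              = (if zs k = zs k' then (1 : ℝ) else 0) from by
            by_cases he : zs k = zs k' <;> simp [hkk, he]]]
        exact LRM_sum_w_pair p hp hkk
      · -- T k' k = m2
        beta_reduce
        rw [Finset.sum_congr rfl fun zs (_ : zs ∈ Finset.univ) => by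
          rw [show ((if k ≠ k' ∧ zs k = zs k' then (1 : ℝ) else 0) *
              (if k' ≠ k ∧ zs k' = zs k then (1 : ℝ) else 0))
              = (if zs k = zs k' then (1 : ℝ) else 0) from by
            by_cases he : zs k = zs k'
            · rw [if_pos ⟨hkk, he⟩, if_pos ⟨Ne.symm hkk, he.symm⟩, if_pos he, one_mul]
            · rw [if_neg (fun hc => he hc.2), zero_mul, if_neg he]]]
        exact LRM_sum_w_pair p hp hkk
      · -- top rows : T k l' = m3, T k' l' = m3 for l' outside
        intro l' hl'k hl'k'
        beta_reduce
        constructor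
        · rw [Finset.sum_congr rfl fun zs (_ : zs ∈ Finset.univ) => by
            rw [show ((if k ≠ k' ∧ zs k = zs k' then (1 : ℝ) else 0) *
                (if k ≠ l' ∧ zs k = zs l' then (1 : ℝ) else 0))
                = (if zs k = zs k' ∧ zs k = zs l' then (1 : ℝ) else 0) from by
              by_cases h1 : zs k = zs k'
              · by_cases h2 : zs k = zs l'
                · rw [if_pos ⟨hkk, h1⟩, if_pos ⟨Ne.symm hl'k, h2⟩, if_pos ⟨h1, h2⟩, one_mul]
                · rw [if_pos ⟨hkk, h1⟩, if_neg (fun hc => h2 hc.2), mul_zero, if_neg (fun hc => h2 hc.2)]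
              · rw [if_neg (fun hc => h1 hc.2), zero_mul, if_neg (fun hc => h1 hc.1)]]]
          exact LRM_sum_w_triple p hp hkk (Ne.symm hl'k) (Ne.symm hl'k')
        · rw [Finset.sum_congr rfl fun zs (_ : zs ∈ Finset.univ) => by
            rw [show ((if k ≠ k' ∧ zs k = zs k' then (1 : ℝ) else 0) *
                (if k' ≠ l' ∧ zs k' = zs l' then (1 : ℝ) else 0))
                = (if zs k' = zs k ∧ zs k' = zs l' then (1 : ℝ) else 0) from by
              by_cases h1 : zs k = zs k'
              · by_cases h2 : zs k' = zs l'
                · rw [if_pos ⟨hkk, h1⟩, if_pos ⟨Ne.symm hl'k', h2⟩, if_pos ⟨h1.symm, h2⟩,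
                    one_mul]
                · rw [if_pos ⟨hkk, h1⟩, if_neg (fun hc => h2 hc.2), mul_zero, if_neg (fun hc => h2 hc.2)]
              · rw [if_neg (fun hc => h1 hc.2), zero_mul,
                  if_neg (fun hc => h1 hc.1.symm)]]]
          exact LRM_sum_w_triple p hp (Ne.symm hkk) (Ne.symm hl'k') (Ne.symm hl'k)
      · -- left columns : T l k = m3, T l k' = m3 for l outside
        intro l hlk hlk'
        beta_reduce
        constructor
        · rw [Finset.sum_congr rfl fun zs (_ : zs ∈ Finset.univ) => by
            rw [show ((if k ≠ k' ∧ zs k = zs k' then (1 : ℝ) else 0) *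
                (if l ≠ k ∧ zs l = zs k then (1 : ℝ) else 0))
                = (if zs k = zs k' ∧ zs k = zs l then (1 : ℝ) else 0) from by
              by_cases h1 : zs k = zs k'
              · by_cases h2 : zs l = zs k
                · rw [if_pos ⟨hkk, h1⟩, if_pos ⟨hlk, h2⟩, if_pos ⟨h1, h2.symm⟩, one_mul]
                · rw [if_pos ⟨hkk, h1⟩, if_neg (fun hc => h2 hc.2), mul_zero,
                    if_neg (fun hc => h2 hc.2.symm)]
              · rw [if_neg (fun hc => h1 hc.2), zero_mul, if_neg (fun hc => h1 hc.1)]]]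
          exact LRM_sum_w_triple p hp hkk (Ne.symm hlk) (Ne.symm hlk')
        · rw [Finset.sum_congr rfl fun zs (_ : zs ∈ Finset.univ) => by
            rw [show ((if k ≠ k' ∧ zs k = zs k' then (1 : ℝ) else 0) *
                (if l ≠ k' ∧ zs l = zs k' then (1 : ℝ) else 0))
                = (if zs k' = zs k ∧ zs k' = zs l then (1 : ℝ) else 0) from by
              by_cases h1 : zs k = zs k'
              · by_cases h2 : zs l = zs k'
                · rw [if_pos ⟨hkk, h1⟩, if_pos ⟨hlk', h2⟩, if_pos ⟨h1.symm, h2.symm⟩,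
                    one_mul]
                · rw [if_pos ⟨hkk, h1⟩, if_neg (fun hc => h2 hc.2), mul_zero,
                    if_neg (fun hc => h2 hc.2.symm)]
              · rw [if_neg (fun hc => h1 hc.2), zero_mul,
                  if_neg (fun hc => h1 hc.1.symm)]]]
          exact LRM_sum_w_triple p hp (Ne.symm hkk) (Ne.symm hlk') (Ne.symm hlk)
      · -- far : T l l' = m2 ^ 2
        intro l l' hlk hlk' hl'k hl'k' hll'
        beta_reduce
        rw [Finset.sum_congr rfl fun zs (_ : zs ∈ Finset.univ) => by
          rw [show ((if k ≠ k' ∧ zs k = zs k' then (1 : ℝ) else 0) *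
              (if l ≠ l' ∧ zs l = zs l' then (1 : ℝ) else 0))
              = (if zs k = zs k' ∧ zs l = zs l' then (1 : ℝ) else 0) from by
            by_cases h1 : zs k = zs k'
            · by_cases h2 : zs l = zs l'
              · rw [if_pos ⟨hkk, h1⟩, if_pos ⟨hll', h2⟩, if_pos ⟨h1, h2⟩, one_mul]
              · rw [if_pos ⟨hkk, h1⟩, if_neg (fun hc => h2 hc.2), mul_zero, if_neg (fun hc => h2 hc.2)]
            · rw [if_neg (fun hc => h1 hc.2), zero_mul, if_neg (fun hc => h1 hc.1)]]]
        rw [LRM_sum_w_quad p hp hkk hll' (Ne.symm hlk) (Ne.symm hl'k)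
          (Ne.symm hlk') (Ne.symm hl'k'), sq]
  rw [Finset.sum_congr rfl fun k _ => Finset.sum_congr rfl fun k' _ => hOuter k k']
  have hcount : ∑ k : Fin K, ∑ k' : Fin K, (if k = k' then (0 : ℝ) else
        2 * (∑ z, p z ^ 2) + 4 * ((K : ℝ) - 2) * (∑ z, p z ^ 3)
          + ((K : ℝ) - 2) * ((K : ℝ) - 3) * (∑ z, p z ^ 2) ^ 2)
      = ((K : ℝ) * (K : ℝ) - (K : ℝ)) *
          (2 * (∑ z, p z ^ 2) + 4 * ((K : ℝ) - 2) * (∑ z, p z ^ 3)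
            + ((K : ℝ) - 2) * ((K : ℝ) - 3) * (∑ z, p z ^ 2) ^ 2) := by
    have h1 : ∀ k k' : Fin K, (if k = k' then (0 : ℝ) else
          2 * (∑ z, p z ^ 2) + 4 * ((K : ℝ) - 2) * (∑ z, p z ^ 3)
            + ((K : ℝ) - 2) * ((K : ℝ) - 3) * (∑ z, p z ^ 2) ^ 2)
        = (if k ≠ k' then (1 : ℝ) else 0) *
            (2 * (∑ z, p z ^ 2) + 4 * ((K : ℝ) - 2) * (∑ z, p z ^ 3)
              + ((K : ℝ) - 2) * ((K : ℝ) - 3) * (∑ z, p z ^ 2) ^ 2) := by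
      intro k k'; by_cases h : k = k' <;> simp [h]
    simp_rw [h1, ← Finset.sum_mul]
    rw [LRM_count_ne Finset.univ Finset.univ]
    simp [Finset.card_univ]
  rw [hcount]
  rw [show (1 / ((K : ℝ) * ((K : ℝ) - 1))) ^ 2 = 1 / (((K : ℝ) * ((K : ℝ) - 1)) ^ 2)
    from by rw [div_pow, one_pow]]
  rw [show (K : ℝ) * (K : ℝ) - (K : ℝ) = (K : ℝ) * ((K : ℝ) - 1) from by ring]
  field_simp

end Moments
set_option maxHeartbeats 1000000 in
/-- **Variance of the LRM estimator `Ŝ^{(K)}`**: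
`Var[Ŝ^{(K)}] = [2P₂(1−P₂) + 4(K−2)(P₃−P₂²) + (K−2)(K−3)(P_{2,2}−P₂²)]/(K(K−1))`. -/
theorem LRM_ShatK_variance (n : ℕ) (ψ : (Fin n → Fin 2) → ℂ)
    (hψ : (∑ x, star (ψ x) * ψ x) = 1)
    (S : Finset (Fin n)) (hS : S.Nonempty) (K : ℕ) (hK : 2 ≤ K)
    (μ : Measure (Matrix.unitaryGroup (Fin 2) ℂ)) [μ.IsHaarMeasure] [IsProbabilityMeasure μ]
    (P2 P3 P22 : ℝ)
    (hP2 : P2 = ∫ V : ({i : Fin n // i ∈ S} → Matrix.unitaryGroup (Fin 2) ℂ),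
        (∑ z : ({i : Fin n // i ∈ S} → Fin 2), (born (Matrix.vecMulVec ψ (star ψ)) S V z) ^ 2)
        ∂(Measure.pi fun _ : {i : Fin n // i ∈ S} => μ))
    (hP3 : P3 = ∫ V : ({i : Fin n // i ∈ S} → Matrix.unitaryGroup (Fin 2) ℂ),
        (∑ z : ({i : Fin n // i ∈ S} → Fin 2), (born (Matrix.vecMulVec ψ (star ψ)) S V z) ^ 3)
        ∂(Measure.pi fun _ : {i : Fin n // i ∈ S} => μ))
    (hP22 : P22 = ∫ V : ({i : Fin n // i ∈ S} → Matrix.unitaryGroup (Fin 2) ℂ),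
        (∑ z : ({i : Fin n // i ∈ S} → Fin 2), (born (Matrix.vecMulVec ψ (star ψ)) S V z) ^ 2) ^ 2
        ∂(Measure.pi fun _ : {i : Fin n // i ∈ S} => μ)) :
    ProbabilityTheory.variance (fun ω => ShatK K ω.2)
        (jointRound μ (Matrix.vecMulVec ψ (star ψ)) S K)
      = (2 * P2 * (1 - P2) + 4 * ((K : ℝ) - 2) * (P3 - P2 ^ 2)
          + ((K : ℝ) - 2) * ((K : ℝ) - 3) * (P22 - P2 ^ 2)) / ((K : ℝ) * ((K : ℝ) - 1)) := by
  have h2K : (2 : ℝ) ≤ (K : ℝ) := by exact_mod_cast hK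
  have hK0 : ((K : ℝ) * ((K : ℝ) - 1)) ≠ 0 := by nlinarith
  have hmb : ∀ z, Measurable fun V : {i : Fin n // i ∈ S} → Matrix.unitaryGroup (Fin 2) ℂ =>
      born (Matrix.vecMulVec ψ (star ψ)) S V z :=
    fun z => LRM_measurable_born S _ z
  haveI hJP : IsProbabilityMeasure (jointRound μ (Matrix.vecMulVec ψ (star ψ)) S K) :=
    LRM_isProb_jointRound ψ hψ S K μ
  have hXm : Measurable fun ω : ({i : Fin n // i ∈ S} → Matrix.unitaryGroup (Fin 2) ℂ) ×
      (Fin K → ({i : Fin n // i ∈ S} → Fin 2)) => ShatK K ω.2 :=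
    (measurable_of_countable (ShatK K)).comp measurable_snd
  have hX2 : MeasureTheory.MemLp (fun ω => ShatK K ω.2) 2
      (jointRound μ (Matrix.vecMulVec ψ (star ψ)) S K) := by
    refine MeasureTheory.MemLp.of_bound hXm.aestronglyMeasurable
      (∑ zs : Fin K → ({i : Fin n // i ∈ S} → Fin 2), |ShatK K zs|)
      (ae_of_all _ fun ω => ?_)
    rw [Real.norm_eq_abs]
    exact Finset.single_le_sum (fun z' _ => abs_nonneg (ShatK K z')) (Finset.mem_univ ω.2)
  rw [ProbabilityTheory.variance_eq_sub hX2]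
  have hEX : ∫ ω, ShatK K ω.2 ∂(jointRound μ (Matrix.vecMulVec ψ (star ψ)) S K) = P2 := by
    rw [LRM_integral_jointRound ψ hψ S K μ (ShatK K), hP2]
    refine integral_congr_ae (ae_of_all _ fun V => ?_)
    simpa only [ShatK] using LRM_momA_gen K hK
      (fun z => born (Matrix.vecMulVec ψ (star ψ)) S V z) (LRM_born_sum ψ hψ S V)
  have hint : ∀ m : ℕ, Integrable
      (fun V : {i : Fin n // i ∈ S} → Matrix.unitaryGroup (Fin 2) ℂ =>
        ∑ z, born (Matrix.vecMulVec ψ (star ψ)) S V z ^ m)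
      (Measure.pi fun _ : {i : Fin n // i ∈ S} => μ) := by
    intro m
    refine ⟨(Finset.measurable_sum _ fun z _ => (hmb z).pow_const m).aestronglyMeasurable,
      HasFiniteIntegral.of_bounded
        (C := (Fintype.card ({i : Fin n // i ∈ S} → Fin 2) : ℝ)) (ae_of_all _ fun V => ?_)⟩
    rw [Real.norm_eq_abs, abs_of_nonneg (Finset.sum_nonneg fun z _ =>
      pow_nonneg (LRM_born_nonneg ψ S V z) m)]
    calc ∑ z, born (Matrix.vecMulVec ψ (star ψ)) S V z ^ m
        ≤ ∑ _z : ({i : Fin n // i ∈ S} → Fin 2), (1 : ℝ) := Finset.sum_le_sum fun z _ =>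
          pow_le_one₀ (LRM_born_nonneg ψ S V z) (LRM_born_le_one ψ hψ S V z)
      _ = (Fintype.card ({i : Fin n // i ∈ S} → Fin 2) : ℝ) := by
          rw [Finset.sum_const, Finset.card_univ, nsmul_eq_mul, mul_one]
  have hintsq : Integrable
      (fun V : {i : Fin n // i ∈ S} → Matrix.unitaryGroup (Fin 2) ℂ =>
        (∑ z, born (Matrix.vecMulVec ψ (star ψ)) S V z ^ 2) ^ 2)
      (Measure.pi fun _ : {i : Fin n // i ∈ S} => μ) := by
    refine ⟨((Finset.measurable_sum _ fun z _ =>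
        (hmb z).pow_const 2).pow_const 2).aestronglyMeasurable,
      HasFiniteIntegral.of_bounded
        (C := ((Fintype.card ({i : Fin n // i ∈ S} → Fin 2) : ℝ)) ^ 2)
        (ae_of_all _ fun V => ?_)⟩
    have hnn : (0 : ℝ) ≤ ∑ z, born (Matrix.vecMulVec ψ (star ψ)) S V z ^ 2 :=
      Finset.sum_nonneg fun z _ => pow_nonneg (LRM_born_nonneg ψ S V z) 2
    rw [Real.norm_eq_abs, abs_of_nonneg (pow_nonneg hnn 2)]
    refine pow_le_pow_left₀ hnn ?_ 2
    calc ∑ z, born (Matrix.vecMulVec ψ (star ψ)) S V z ^ 2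
        ≤ ∑ _z : ({i : Fin n // i ∈ S} → Fin 2), (1 : ℝ) := Finset.sum_le_sum fun z _ =>
          pow_le_one₀ (LRM_born_nonneg ψ S V z) (LRM_born_le_one ψ hψ S V z)
      _ = (Fintype.card ({i : Fin n // i ∈ S} → Fin 2) : ℝ) := by
          rw [Finset.sum_const, Finset.card_univ, nsmul_eq_mul, mul_one]
  have hEX2 : ∫ ω, (ShatK K ω.2) ^ 2 ∂(jointRound μ (Matrix.vecMulVec ψ (star ψ)) S K)
      = (2 * P2 + 4 * ((K : ℝ) - 2) * P3 + ((K : ℝ) - 2) * ((K : ℝ) - 3) * P22)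
        / ((K : ℝ) * ((K : ℝ) - 1)) := by
    rw [LRM_integral_jointRound ψ hψ S K μ (fun zs => (ShatK K zs) ^ 2)]
    have hpt : ∀ V : {i : Fin n // i ∈ S} → Matrix.unitaryGroup (Fin 2) ℂ,
        (∑ zs : Fin K → ({i : Fin n // i ∈ S} → Fin 2),
          (∏ k, born (Matrix.vecMulVec ψ (star ψ)) S V (zs k)) * (ShatK K zs) ^ 2)
        = (2 * (∑ z, born (Matrix.vecMulVec ψ (star ψ)) S V z ^ 2)
            + 4 * ((K : ℝ) - 2) * (∑ z, born (Matrix.vecMulVec ψ (star ψ)) S V z ^ 3)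
            + ((K : ℝ) - 2) * ((K : ℝ) - 3) *
              (∑ z, born (Matrix.vecMulVec ψ (star ψ)) S V z ^ 2) ^ 2)
          / ((K : ℝ) * ((K : ℝ) - 1)) := fun V => by
      simpa only [ShatK] using LRM_momB_gen K hK
        (fun z => born (Matrix.vecMulVec ψ (star ψ)) S V z) (LRM_born_sum ψ hψ S V)
    have hA : Integrable (fun V : {i : Fin n // i ∈ S} → Matrix.unitaryGroup (Fin 2) ℂ =>
        2 * (∑ z, born (Matrix.vecMulVec ψ (star ψ)) S V z ^ 2))
        (Measure.pi fun _ : {i : Fin n // i ∈ S} => μ) := (hint 2).const_mul 2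
    have hB : Integrable (fun V : {i : Fin n // i ∈ S} → Matrix.unitaryGroup (Fin 2) ℂ =>
        4 * ((K : ℝ) - 2) * (∑ z, born (Matrix.vecMulVec ψ (star ψ)) S V z ^ 3))
        (Measure.pi fun _ : {i : Fin n // i ∈ S} => μ) := (hint 3).const_mul _
    have hC : Integrable (fun V : {i : Fin n // i ∈ S} → Matrix.unitaryGroup (Fin 2) ℂ =>
        ((K : ℝ) - 2) * ((K : ℝ) - 3) *
          (∑ z, born (Matrix.vecMulVec ψ (star ψ)) S V z ^ 2) ^ 2)
        (Measure.pi fun _ : {i : Fin n // i ∈ S} => μ) := hintsq.const_mul _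
    have hAB : Integrable (fun V : {i : Fin n // i ∈ S} → Matrix.unitaryGroup (Fin 2) ℂ =>
        2 * (∑ z, born (Matrix.vecMulVec ψ (star ψ)) S V z ^ 2)
          + 4 * ((K : ℝ) - 2) * (∑ z, born (Matrix.vecMulVec ψ (star ψ)) S V z ^ 3))
        (Measure.pi fun _ : {i : Fin n // i ∈ S} => μ) := hA.add hB
    rw [integral_congr_ae (ae_of_all _ hpt), integral_div, integral_add hAB hC,
      integral_add hA hB,
      integral_const_mul, integral_const_mul, integral_const_mul, hP2, hP3, hP22]
  rw [show ∫ ω, ((fun ω : ({i : Fin n // i ∈ S} → Matrix.unitaryGroup (Fin 2) ℂ) ×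
        (Fin K → ({i : Fin n // i ∈ S} → Fin 2)) => ShatK K ω.2) ^ 2) ω
        ∂(jointRound μ (Matrix.vecMulVec ψ (star ψ)) S K)
      = ∫ ω, (ShatK K ω.2) ^ 2 ∂(jointRound μ (Matrix.vecMulVec ψ (star ψ)) S K) from rfl]
  rw [hEX2, hEX]
  have hK1 : (K : ℝ) - 1 ≠ 0 := by linarith
  field_simp
  ring
end

section
/- Let {(p_i, φ_i)}_{i=1}^N be a single-qubit projective 2-design: the φ_i are unit vectors in C², the p_i are nonnegative reals summing to 1, and Σ_i p_i (|φ_i⟩⟨φ_i|) ⊗ (|φ_i⟩⟨φ_i|) = (1/3)Π₊ where Π₊ = (I⊗I + F)/2. Let ρ = |ψ⟩⟨ψ| be an n-qubit pure state and S ⊆ Fin n nonempty with |S| = s. For a string q ∈ {1,…,N}^S, let |Φ_q⟩⟨Φ_q| = ⊗_{i∈S} |φ_{q_i}⟩⟨φ_{q_i}| acting on the qubits in S (identity elsewhere) and P(q) = tr(ρ |Φ_q⟩⟨Φ_q|). Then C_ψ(S) = 1 − 3^s · Σ_{q ∈ {1,…,N}^S} (∏_{i∈S} p_{q_i}) ·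 P(q)², i.e., C_ψ(S) = 1 − 3^s E_Φ[tr(ρ|Φ⟩⟨Φ|)²] where E_Φ is the expectation over the product 2-design distribution. -/
open Matrix MeasureTheory
open scoped BigOperators ComplexConjugate Kronecker

/-- The SWAP operator `F` on `ℂ² ⊗ ℂ²`. -/
noncomputable def swapF : Matrix (Fin 2 × Fin 2) (Fin 2 × Fin 2) ℂ :=
  fun p q => if p.1 = q.2 ∧ p.2 = q.1 then 1 else 0

/-- The projector `Π₊ = (I⊗I + F)/2` onto the symmetric subspace of `ℂ² ⊗ ℂ²`. -/
noncomputable def piPlus2 : Matrix (Fin 2 × Fin 2) (Fin 2 × Fin 2) ℂ :=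
  ((1 : ℂ) / 2) • (1 + swapF)


section AuxCE

open Finset

lemma embedIdx_mem {n : ℕ} (α : Finset (Fin n)) (a : {x : Fin n // x ∈ α} → Fin 2)
    (k : {x : Fin n // x ∉ α} → Fin 2) {t : Fin n} (h : t ∈ α) :
    embedIdx α a k t = a ⟨t, h⟩ := dif_pos h

lemma embedIdx_not_mem {n : ℕ} (α : Finset (Fin n)) (a : {x : Fin n // x ∈ α} → Fin 2)
    (k : {x : Fin n // x ∉ α} → Fin 2) {t : Fin n} (h : t ∉ α) :
    embedIdx α a k t = k ⟨t, h⟩ := dif_neg h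

noncomputable def splitEquiv {n : ℕ} (α : Finset (Fin n)) :
    (Fin n → Fin 2) ≃ (({x : Fin n // x ∈ α} → Fin 2) × ({x : Fin n // x ∉ α} → Fin 2)) where
  toFun x := (fun t => x t.1, fun t => x t.1)
  invFun p := embedIdx α p.1 p.2
  left_inv x := by
    funext t
    by_cases h : t ∈ α
    · simp [embedIdx, h]
    · simp [embedIdx, h]
  right_inv p := by
    refine Prod.ext ?_ ?_ <;> funext t
    · simp [embedIdx, t.2]
    · simp [embedIdx, t.2]

lemma sum_embed {n : ℕ} (α : Finset (Fin n)) (F : (Fin n → Fin 2) → ℂ) :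
    (∑ x : Fin n → Fin 2, F x)
      = ∑ a : {x : Fin n // x ∈ α} → Fin 2, ∑ k : {x : Fin n // x ∉ α} → Fin 2,
          F (embedIdx α a k) := by
  rw [← Equiv.sum_comp (splitEquiv α).symm F, Fintype.sum_prod_type]
  rfl

lemma prod_ite_eq_one_zero {ι κ : Type*} [Fintype ι] [DecidableEq κ] (f g : ι → κ) :
    (∏ t : ι, if f t = g t then (1 : ℂ) else 0) = if f = g then 1 else 0 := by
  by_cases h : f = g
  · simp [h]
  · rw [if_neg h]
    obtain ⟨t, ht⟩ := Function.ne_iff.mp h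
    exact Finset.prod_eq_zero (Finset.mem_univ t) (if_neg ht)

lemma prod_split {n : ℕ} (α : Finset (Fin n)) (f : Fin n → ℂ) :
    (∏ t, f t) = (∏ t : {x : Fin n // x ∈ α}, f t.1) * ∏ t : {x : Fin n // x ∉ α}, f t.1 := by
  classical
  rw [← Equiv.prod_comp (Equiv.sumCompl (· ∈ α)) f, Fintype.prod_sum_type]
  rfl

lemma prod_mem_toFinset {n : ℕ} (S : Finset (Fin n)) (f : Fin n → ℂ) :
    (∏ t : {x : Fin n // x ∈ S}, f t.1) = ∏ t ∈ S, f t :=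
  (Finset.prod_subtype S (fun _ => Iff.rfl) f).symm

lemma sum_powerset_prod {n : ℕ} (S : Finset (Fin n)) (A B : Fin n → ℂ) :
    ∑ α ∈ S.powerset, ∏ t ∈ S, (if t ∈ α then A t else B t) = ∏ t ∈ S, (A t + B t) := by
  classical
  rw [Finset.prod_add]
  apply Finset.sum_congr rfl
  intro α hα
  rw [Finset.mem_powerset] at hα
  calc (∏ t ∈ S, if t ∈ α then A t else B t)
      = ∏ t ∈ S, (α.piecewise A B) t := by
        apply Finset.prod_congr rfl; intro t _; simp [Finset.piecewise]
    _ = (∏ i ∈ S ∩ α, A i) * ∏ i ∈ S \ α, B i := Finset.prod_piecewise S α A B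
    _ = (∏ i ∈ α, A i) * ∏ i ∈ S \ α, B i := by rw [Finset.inter_eq_right.mpr hα]

lemma sum_q_factor {n N : ℕ} (S : Finset (Fin n)) (p : Fin N → ℝ)
    (e : {x : Fin n // x ∈ S} → Fin N → ℂ) :
    ∑ q : {x : Fin n // x ∈ S} → Fin N, (∏ i, (p (q i) : ℂ)) * ∏ t, e t (q t)
      = ∏ t, ∑ j, (p j : ℂ) * e t j := by
  rw [Finset.prod_univ_sum, Fintype.piFinset_univ]
  apply Finset.sum_congr rfl
  intro q _
  rw [Finset.prod_mul_distrib]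

lemma iteswap {κ : Type*} [DecidableEq κ] (a b : κ) :
    (if a = b then (1 : ℂ) else 0) = if b = a then 1 else 0 := by
  simp [eq_comm]

lemma trace_reduced_sq {n : ℕ} (ψ : (Fin n → Fin 2) → ℂ) (α : Finset (Fin n)) :
    Matrix.trace (reduced (Matrix.vecMulVec ψ (star ψ)) α * reduced (Matrix.vecMulVec ψ (star ψ)) α)
      = ∑ x : Fin n → Fin 2, ∑ y : Fin n → Fin 2, ∑ z : Fin n → Fin 2, ∑ w : Fin n → Fin 2,
          ψ x * star (ψ y) * (ψ z * star (ψ w)) *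
          ∏ t : Fin n, (if t ∈ α then (if x t = w t then (1:ℂ) else 0) * (if y t = z t then 1 else 0)
            else (if x t = y t then (1:ℂ) else 0) * (if z t = w t then 1 else 0)) := by
  have hprod : ∀ (a b c d : {x : Fin n // x ∈ α} → Fin 2)
      (k1 k2 k3 k4 : {x : Fin n // x ∉ α} → Fin 2),
      (∏ t : Fin n, (if t ∈ α then
          (if embedIdx α a k1 t = embedIdx α d k4 t then (1:ℂ) else 0) *
            (if embedIdx α b k2 t = embedIdx α c k3 t then 1 else 0)
        else (if embedIdx α a k1 t = embedIdx α b k2 t then (1:ℂ) else 0) *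
            (if embedIdx α c k3 t = embedIdx α d k4 t then 1 else 0)))
        = ((if a = d then (1:ℂ) else 0) * (if b = c then 1 else 0)) *
            ((if k1 = k2 then (1:ℂ) else 0) * (if k3 = k4 then 1 else 0)) := by
    intro a b c d k1 k2 k3 k4
    rw [prod_split α]
    have e1 : ∀ t : {x : Fin n // x ∈ α},
        (if (t : Fin n) ∈ α then
          (if embedIdx α a k1 t = embedIdx α d k4 t then (1:ℂ) else 0) *
            (if embedIdx α b k2 t = embedIdx α c k3 t then 1 else 0)
        else (if embedIdx α a k1 t = embedIdx α b k2 t then (1:ℂ) else 0) *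
            (if embedIdx α c k3 t = embedIdx α d k4 t then 1 else 0))
        = (if a t = d t then (1:ℂ) else 0) * (if b t = c t then 1 else 0) := by
      intro t
      rw [if_pos t.2]
      simp [embedIdx_mem α _ _ t.2]
    have e2 : ∀ t : {x : Fin n // x ∉ α},
        (if (t : Fin n) ∈ α then
          (if embedIdx α a k1 t = embedIdx α d k4 t then (1:ℂ) else 0) *
            (if embedIdx α b k2 t = embedIdx α c k3 t then 1 else 0)
        else (if embedIdx α a k1 t = embedIdx α b k2 t then (1:ℂ) else 0) *
            (if embedIdx α c k3 t = embedIdx α d k4 t then 1 else 0))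
        = (if k1 t = k2 t then (1:ℂ) else 0) * (if k3 t = k4 t then 1 else 0) := by
      intro t
      rw [if_neg t.2]
      simp [embedIdx_not_mem α _ _ t.2]
    rw [Finset.prod_congr rfl (fun t _ => e1 t), Finset.prod_congr rfl (fun t _ => e2 t),
      Finset.prod_mul_distrib, Finset.prod_mul_distrib,
      prod_ite_eq_one_zero, prod_ite_eq_one_zero, prod_ite_eq_one_zero, prod_ite_eq_one_zero]
  symm
  simp only [sum_embed α]
  simp only [hprod]
  simp only [Matrix.trace, Matrix.diag, Matrix.mul_apply, reduced, Matrix.vecMulVec_apply,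
    Pi.star_apply, Finset.sum_mul_sum]
  simp only [mul_ite, mul_one, mul_zero, ite_mul, zero_mul, one_mul,
    Finset.sum_ite_irrel, Finset.sum_const_zero,
    Finset.sum_ite_eq, Finset.sum_ite_eq', Finset.mem_univ, if_true]
  refine Finset.sum_congr rfl fun a _ => ?_
  rw [Finset.sum_comm (α := {x : Fin n // x ∈ α} → Fin 2) (γ := {x : Fin n // x ∉ α} → Fin 2)]

lemma trace_localOp {n N : ℕ} (ψ : (Fin n → Fin 2) → ℂ) (S : Finset (Fin n))
    (φ : Fin N → Fin 2 → ℂ) (q : {i : Fin n // i ∈ S} → Fin N) :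
    Matrix.trace (Matrix.vecMulVec ψ (star ψ) *
        localOp S (fun i => Matrix.vecMulVec (φ (q i)) (star (φ (q i)))))
      = ∑ x : Fin n → Fin 2, ∑ y : Fin n → Fin 2, ψ x * star (ψ y) *
          ∏ t : Fin n, (if h : t ∈ S then φ (q ⟨t, h⟩) (y t) * star (φ (q ⟨t, h⟩) (x t))
            else if y t = x t then (1 : ℂ) else 0) := by
  simp only [Matrix.trace, Matrix.diag, Matrix.mul_apply, Matrix.vecMulVec_apply,
    Pi.star_apply, localOp, Matrix.vecMulVec_apply]

lemma trace_localOp_conj {n N : ℕ} (ψ : (Fin n → Fin 2) → ℂ) (S : Finset (Fin n))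
    (φ : Fin N → Fin 2 → ℂ) (q : {i : Fin n // i ∈ S} → Fin N) :
    (starRingEnd ℂ) (∑ x : Fin n → Fin 2, ∑ y : Fin n → Fin 2, ψ x * star (ψ y) *
          ∏ t : Fin n, (if h : t ∈ S then φ (q ⟨t, h⟩) (y t) * star (φ (q ⟨t, h⟩) (x t))
            else if y t = x t then (1 : ℂ) else 0))
      = ∑ x : Fin n → Fin 2, ∑ y : Fin n → Fin 2, ψ x * star (ψ y) *
          ∏ t : Fin n, (if h : t ∈ S then φ (q ⟨t, h⟩) (y t) * star (φ (q ⟨t, h⟩) (x t))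
            else if y t = x t then (1 : ℂ) else 0) := by
  rw [map_sum]
  rw [Finset.sum_comm]
  apply Finset.sum_congr rfl; intro y _
  rw [map_sum]
  apply Finset.sum_congr rfl; intro x _
  rw [_root_.map_mul, _root_.map_mul, map_prod]
  have h1 : (starRingEnd ℂ) (ψ y) = star (ψ y) := rfl
  have h2 : (starRingEnd ℂ) (star (ψ x)) = ψ x := by simp
  rw [h1, h2]
  rw [show ∀ (a b c : ℂ), a * b * c = b * a * c by intros; ring]
  congr 1
  apply Finset.prod_congr rfl
  intro t _
  by_cases h : t ∈ S
  · simp only [dif_pos h, _root_.map_mul]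
    have e1 : (starRingEnd ℂ) (star (φ (q ⟨t, h⟩) (y t))) = φ (q ⟨t, h⟩) (y t) := by simp
    have e2 : (starRingEnd ℂ) (φ (q ⟨t, h⟩) (x t)) = star (φ (q ⟨t, h⟩) (x t)) := rfl
    rw [e1, e2]; ring
  · simp only [dif_neg h]
    split_ifs with h1 h2 h2 <;> simp_all [eq_comm]

lemma design_entry {N : ℕ} (p : Fin N → ℝ) (φ : Fin N → Fin 2 → ℂ)
    (hdesign : (∑ i, (p i : ℂ) •
        (Matrix.vecMulVec (φ i) (star (φ i)) ⊗ₖ Matrix.vecMulVec (φ i) (star (φ i))))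
      = ((1 : ℂ) / 3) • piPlus2) :
    ∀ a b c d : Fin 2,
      (∑ j, (p j : ℂ) * ((φ j a * star (φ j c)) * (φ j b * star (φ j d))))
        = (1 / 6 : ℂ) * ((if a = c then 1 else 0) * (if b = d then 1 else 0)
            + (if a = d then (1 : ℂ) else 0) * (if b = c then 1 else 0)) := by
  intro a b c d
  have h := congrFun (congrFun (congrArg
    (fun M => (M : Matrix (Fin 2 × Fin 2) (Fin 2 × Fin 2) ℂ)) hdesign) (a, b)) (c, d)
  simp only [Matrix.sum_apply, Matrix.smul_apply, Matrix.kroneckerMap_apply,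
    Matrix.vecMulVec_apply, Pi.star_apply, Matrix.add_apply, Matrix.one_apply,
    swapF, piPlus2, smul_eq_mul, Prod.mk.injEq] at h
  rw [h]
  simp only [ite_and]
  split_ifs <;> norm_num

end AuxCE

/-- **CEs via projective 2-designs**: if `{(pᵢ, φᵢ)}` is a single-qubit projective 2-design,
then `C_ψ(S) = 1 - 3^s ∑_q (∏_{i∈S} p_{qᵢ}) P(q)²` where `P(q) = tr(ρ |Φ_q⟩⟨Φ_q|)`. -/
theorem CE_via_projective_two_design (n : ℕ) (ψ : (Fin n → Fin 2) → ℂ)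
    (hψ : (∑ x, star (ψ x) * ψ x) = 1)
    (S : Finset (Fin n)) (hS : S.Nonempty)
    (N : ℕ) (p : Fin N → ℝ) (φ : Fin N → Fin 2 → ℂ)
    (hunit : ∀ i, (∑ a, star (φ i a) * φ i a) = 1)
    (hp : ∀ i, 0 ≤ p i) (hpsum : (∑ i, p i) = 1)
    (hdesign : (∑ i, (p i : ℂ) •
        (Matrix.vecMulVec (φ i) (star (φ i)) ⊗ₖ Matrix.vecMulVec (φ i) (star (φ i))))
      = ((1 : ℂ) / 3) • piPlus2) :
    CE (Matrix.vecMulVec ψ (star ψ)) S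
      = 1 - (3 : ℝ) ^ S.card * ∑ q : ({i : Fin n // i ∈ S} → Fin N),
          (∏ i : {i : Fin n // i ∈ S}, p (q i)) *
            ((Matrix.trace (Matrix.vecMulVec ψ (star ψ) *
              localOp S (fun i => Matrix.vecMulVec (φ (q i)) (star (φ (q i)))))).re) ^ 2 := by
  classical
  have hdes := design_entry p φ hdesign
  have hP := trace_localOp ψ S φ
  have hPre : ∀ q : {i : Fin n // i ∈ S} → Fin N,
      ((((∑ x : Fin n → Fin 2, ∑ y : Fin n → Fin 2, ψ x * star (ψ y) *
          ∏ t : Fin n, (if h : t ∈ S then φ (q ⟨t, h⟩) (y t) * star (φ (q ⟨t, h⟩) (x t))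
            else if y t = x t then (1 : ℂ) else 0))).re : ℝ) : ℂ)
        = ∑ x : Fin n → Fin 2, ∑ y : Fin n → Fin 2, ψ x * star (ψ y) *
            ∏ t : Fin n, (if h : t ∈ S then φ (q ⟨t, h⟩) (y t) * star (φ (q ⟨t, h⟩) (x t))
              else if y t = x t then (1 : ℂ) else 0) :=
    fun q => Complex.conj_eq_iff_re.mp (trace_localOp_conj ψ S φ q)
  -- the common quadruple-sum form
  have keyL : (∑ α ∈ S.powerset,
        Matrix.trace (reduced (Matrix.vecMulVec ψ (star ψ)) α *
          reduced (Matrix.vecMulVec ψ (star ψ)) α))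
      = ∑ x : Fin n → Fin 2, ∑ y : Fin n → Fin 2, ∑ z : Fin n → Fin 2, ∑ w : Fin n → Fin 2,
          ψ x * star (ψ y) * (ψ z * star (ψ w)) *
            ((∏ t ∈ S, (((if x t = w t then (1:ℂ) else 0) * (if y t = z t then 1 else 0)) +
                ((if x t = y t then (1:ℂ) else 0) * (if z t = w t then 1 else 0)))) *
              ∏ t : {u : Fin n // u ∉ S},
                ((if x t.1 = y t.1 then (1:ℂ) else 0) * (if z t.1 = w t.1 then 1 else 0))) := by
    rw [Finset.sum_congr rfl (fun α _ => trace_reduced_sq ψ α)]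
    rw [Finset.sum_comm (γ := Finset (Fin n)) (α := Fin n → Fin 2)]
    refine Finset.sum_congr rfl fun x _ => ?_
    rw [Finset.sum_comm (γ := Finset (Fin n)) (α := Fin n → Fin 2)]
    refine Finset.sum_congr rfl fun y _ => ?_
    rw [Finset.sum_comm (γ := Finset (Fin n)) (α := Fin n → Fin 2)]
    refine Finset.sum_congr rfl fun z _ => ?_
    rw [Finset.sum_comm (γ := Finset (Fin n)) (α := Fin n → Fin 2)]
    refine Finset.sum_congr rfl fun w _ => ?_
    rw [← Finset.mul_sum]
    congr 1
    calc ∑ α ∈ S.powerset, ∏ t : Fin n,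
          (if t ∈ α then (if x t = w t then (1:ℂ) else 0) * (if y t = z t then 1 else 0)
            else (if x t = y t then (1:ℂ) else 0) * (if z t = w t then 1 else 0))
        = ∑ α ∈ S.powerset, (∏ t ∈ S,
            (if t ∈ α then (if x t = w t then (1:ℂ) else 0) * (if y t = z t then 1 else 0)
              else (if x t = y t then (1:ℂ) else 0) * (if z t = w t then 1 else 0))) *
            ∏ t : {u : Fin n // u ∉ S},
              ((if x t.1 = y t.1 then (1:ℂ) else 0) * (if z t.1 = w t.1 then 1 else 0)) := by
          refine Finset.sum_congr rfl fun α hα => ?_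
          rw [Finset.mem_powerset] at hα
          rw [prod_split S]
          congr 1
          · exact prod_mem_toFinset S (fun u =>
              if u ∈ α then (if x u = w u then (1:ℂ) else 0) * (if y u = z u then 1 else 0)
              else (if x u = y u then (1:ℂ) else 0) * (if z u = w u then 1 else 0))
          · refine Finset.prod_congr rfl fun t _ => ?_
            rw [if_neg (fun h => t.2 (hα h))]
      _ = _ := by rw [← Finset.sum_mul, sum_powerset_prod]
  have keyR : (∑ q : {i : Fin n // i ∈ S} → Fin N,
        (∏ i : {i : Fin n // i ∈ S}, (p (q i) : ℂ)) *
          ((∑ x : Fin n → Fin 2, ∑ y : Fin n → Fin 2, ψ x * star (ψ y) *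
              ∏ t : Fin n, (if h : t ∈ S then φ (q ⟨t, h⟩) (y t) * star (φ (q ⟨t, h⟩) (x t))
                else if y t = x t then (1 : ℂ) else 0)) *
            (∑ z : Fin n → Fin 2, ∑ w : Fin n → Fin 2, ψ z * star (ψ w) *
              ∏ t : Fin n, (if h : t ∈ S then φ (q ⟨t, h⟩) (w t) * star (φ (q ⟨t, h⟩) (z t))
                else if w t = z t then (1 : ℂ) else 0))))
      = ∑ x : Fin n → Fin 2, ∑ y : Fin n → Fin 2, ∑ z : Fin n → Fin 2, ∑ w : Fin n → Fin 2,
          ψ x * star (ψ y) * (ψ z * star (ψ w)) *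
            ((∏ t : {u : Fin n // u ∈ S}, ∑ j, (p j : ℂ) *
                ((φ j (y t.1) * star (φ j (x t.1))) * (φ j (w t.1) * star (φ j (z t.1))))) *
              ∏ t : {u : Fin n // u ∉ S},
                ((if y t.1 = x t.1 then (1:ℂ) else 0) * (if w t.1 = z t.1 then 1 else 0))) := by
    have hq : ∀ q : {i : Fin n // i ∈ S} → Fin N,
        (∏ i : {i : Fin n // i ∈ S}, (p (q i) : ℂ)) *
          ((∑ x : Fin n → Fin 2, ∑ y : Fin n → Fin 2, ψ x * star (ψ y) *
              ∏ t : Fin n, (if h : t ∈ S then φ (q ⟨t, h⟩) (y t) * star (φ (q ⟨t, h⟩) (x t))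
                else if y t = x t then (1 : ℂ) else 0)) *
            (∑ z : Fin n → Fin 2, ∑ w : Fin n → Fin 2, ψ z * star (ψ w) *
              ∏ t : Fin n, (if h : t ∈ S then φ (q ⟨t, h⟩) (w t) * star (φ (q ⟨t, h⟩) (z t))
                else if w t = z t then (1 : ℂ) else 0)))
        = ∑ x : Fin n → Fin 2, ∑ y : Fin n → Fin 2, ∑ z : Fin n → Fin 2, ∑ w : Fin n → Fin 2,
            (∏ i : {i : Fin n // i ∈ S}, (p (q i) : ℂ)) *
              ((ψ x * star (ψ y) *
                ∏ t : Fin n, (if h : t ∈ S then φ (q ⟨t, h⟩) (y t) * star (φ (q ⟨t, h⟩) (x t))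
                  else if y t = x t then (1 : ℂ) else 0)) *
               (ψ z * star (ψ w) *
                ∏ t : Fin n, (if h : t ∈ S then φ (q ⟨t, h⟩) (w t) * star (φ (q ⟨t, h⟩) (z t))
                  else if w t = z t then (1 : ℂ) else 0))) := by
      intro q
      rw [Finset.sum_mul, Finset.mul_sum]
      refine Finset.sum_congr rfl fun x _ => ?_
      rw [Finset.sum_mul, Finset.mul_sum]
      refine Finset.sum_congr rfl fun y _ => ?_
      simp only [Finset.mul_sum]
    rw [Finset.sum_congr rfl (fun q _ => hq q)]
    rw [Finset.sum_comm (γ := {i : Fin n // i ∈ S} → Fin N) (α := Fin n → Fin 2)]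
    refine Finset.sum_congr rfl fun x _ => ?_
    rw [Finset.sum_comm (γ := {i : Fin n // i ∈ S} → Fin N) (α := Fin n → Fin 2)]
    refine Finset.sum_congr rfl fun y _ => ?_
    rw [Finset.sum_comm (γ := {i : Fin n // i ∈ S} → Fin N) (α := Fin n → Fin 2)]
    refine Finset.sum_congr rfl fun z _ => ?_
    rw [Finset.sum_comm (γ := {i : Fin n // i ∈ S} → Fin N) (α := Fin n → Fin 2)]
    refine Finset.sum_congr rfl fun w _ => ?_
    calc (∑ q : {i : Fin n // i ∈ S} → Fin N,
          (∏ i : {i : Fin n // i ∈ S}, (p (q i) : ℂ)) *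
            ((ψ x * star (ψ y) *
              ∏ t : Fin n, (if h : t ∈ S then φ (q ⟨t, h⟩) (y t) * star (φ (q ⟨t, h⟩) (x t))
                else if y t = x t then (1 : ℂ) else 0)) *
             (ψ z * star (ψ w) *
              ∏ t : Fin n, (if h : t ∈ S then φ (q ⟨t, h⟩) (w t) * star (φ (q ⟨t, h⟩) (z t))
                else if w t = z t then (1 : ℂ) else 0))))
        = ∑ q : {i : Fin n // i ∈ S} → Fin N,
            ψ x * star (ψ y) * (ψ z * star (ψ w)) *
              ((∏ i : {i : Fin n // i ∈ S}, (p (q i) : ℂ)) *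
                ∏ t : Fin n,
                  ((if h : t ∈ S then φ (q ⟨t, h⟩) (y t) * star (φ (q ⟨t, h⟩) (x t))
                      else if y t = x t then (1 : ℂ) else 0) *
                   (if h : t ∈ S then φ (q ⟨t, h⟩) (w t) * star (φ (q ⟨t, h⟩) (z t))
                      else if w t = z t then (1 : ℂ) else 0))) := by
          refine Finset.sum_congr rfl fun q _ => ?_
          rw [Finset.prod_mul_distrib]
          ring
      _ = ∑ q : {i : Fin n // i ∈ S} → Fin N,
            ψ x * star (ψ y) * (ψ z * star (ψ w)) *
              (((∏ i : {i : Fin n // i ∈ S}, (p (q i) : ℂ)) *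
                ∏ t : {u : Fin n // u ∈ S},
                  ((φ (q t) (y t.1) * star (φ (q t) (x t.1))) *
                    (φ (q t) (w t.1) * star (φ (q t) (z t.1))))) *
                ∏ t : {u : Fin n // u ∉ S},
                  ((if y t.1 = x t.1 then (1:ℂ) else 0) * (if w t.1 = z t.1 then 1 else 0))) := by
          refine Finset.sum_congr rfl fun q _ => ?_
          congr 1
          rw [prod_split S, ← mul_assoc]
          congr 1
          · congr 1
            refine Finset.prod_congr rfl fun t _ => ?_
            rw [dif_pos t.2, dif_pos t.2]
          · refine Finset.prod_congr rfl fun t _ => ?_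
            rw [dif_neg t.2, dif_neg t.2]
      _ = _ := by
          rw [← Finset.mul_sum, ← Finset.sum_mul,
            sum_q_factor S p (fun t j => (φ j (y t.1) * star (φ j (x t.1))) *
              (φ j (w t.1) * star (φ j (z t.1))))]
  have key : (∑ α ∈ S.powerset,
        Matrix.trace (reduced (Matrix.vecMulVec ψ (star ψ)) α *
          reduced (Matrix.vecMulVec ψ (star ψ)) α))
      = (6:ℂ) ^ S.card * ∑ q : {i : Fin n // i ∈ S} → Fin N,
        (∏ i : {i : Fin n // i ∈ S}, (p (q i) : ℂ)) *
          ((∑ x : Fin n → Fin 2, ∑ y : Fin n → Fin 2, ψ x * star (ψ y) *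
              ∏ t : Fin n, (if h : t ∈ S then φ (q ⟨t, h⟩) (y t) * star (φ (q ⟨t, h⟩) (x t))
                else if y t = x t then (1 : ℂ) else 0)) *
            (∑ z : Fin n → Fin 2, ∑ w : Fin n → Fin 2, ψ z * star (ψ w) *
              ∏ t : Fin n, (if h : t ∈ S then φ (q ⟨t, h⟩) (w t) * star (φ (q ⟨t, h⟩) (z t))
                else if w t = z t then (1 : ℂ) else 0))) := by
    rw [keyR, keyL]
    rw [Finset.mul_sum]
    refine Finset.sum_congr rfl fun x _ => ?_
    rw [Finset.mul_sum]
    refine Finset.sum_congr rfl fun y _ => ?_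
    rw [Finset.mul_sum]
    refine Finset.sum_congr rfl fun z _ => ?_
    rw [Finset.mul_sum]
    refine Finset.sum_congr rfl fun w _ => ?_
    have h6 : (6:ℂ) ^ S.card * ∏ t : {u : Fin n // u ∈ S}, ∑ j, (p j : ℂ) *
          ((φ j (y t.1) * star (φ j (x t.1))) * (φ j (w t.1) * star (φ j (z t.1))))
        = ∏ t ∈ S, (((if x t = w t then (1:ℂ) else 0) * (if y t = z t then 1 else 0)) +
            ((if x t = y t then (1:ℂ) else 0) * (if z t = w t then 1 else 0))) := by
      rw [prod_mem_toFinset S (fun u => ∑ j, (p j : ℂ) *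
        ((φ j (y u) * star (φ j (x u))) * (φ j (w u) * star (φ j (z u)))))]
      have hc : (6:ℂ) ^ S.card = ∏ _t ∈ S, (6:ℂ) := (Finset.prod_const 6).symm
      rw [hc]
      rw [← Finset.prod_mul_distrib]
      refine Finset.prod_congr rfl fun t _ => ?_
      rw [hdes (y t) (w t) (x t) (z t)]
      rw [iteswap (y t) (x t), iteswap (w t) (z t), iteswap (w t) (x t)]
      ring
    have hK : (∏ t : {u : Fin n // u ∉ S},
          ((if x t.1 = y t.1 then (1:ℂ) else 0) * (if z t.1 = w t.1 then 1 else 0)))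
        = ∏ t : {u : Fin n // u ∉ S},
          ((if y t.1 = x t.1 then (1:ℂ) else 0) * (if w t.1 = z t.1 then 1 else 0)) := by
      refine Finset.prod_congr rfl fun t _ => ?_
      rw [iteswap (y t.1) (x t.1), iteswap (w t.1) (z t.1)]
    rw [hK, ← h6]
    ring
  -- now put everything together
  unfold CE
  simp only [hP]
  rw [← Complex.re_sum, key]
  have hq2 : ∀ q : {i : Fin n // i ∈ S} → Fin N,
      (∏ i : {i : Fin n // i ∈ S}, (p (q i) : ℂ)) *
        ((∑ x : Fin n → Fin 2, ∑ y : Fin n → Fin 2, ψ x * star (ψ y) *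
            ∏ t : Fin n, (if h : t ∈ S then φ (q ⟨t, h⟩) (y t) * star (φ (q ⟨t, h⟩) (x t))
              else if y t = x t then (1 : ℂ) else 0)) *
          (∑ z : Fin n → Fin 2, ∑ w : Fin n → Fin 2, ψ z * star (ψ w) *
            ∏ t : Fin n, (if h : t ∈ S then φ (q ⟨t, h⟩) (w t) * star (φ (q ⟨t, h⟩) (z t))
              else if w t = z t then (1 : ℂ) else 0)))
      = (((∏ i : {i : Fin n // i ∈ S}, p (q i)) *
          ((∑ x : Fin n → Fin 2, ∑ y : Fin n → Fin 2, ψ x * star (ψ y) *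
            ∏ t : Fin n, (if h : t ∈ S then φ (q ⟨t, h⟩) (y t) * star (φ (q ⟨t, h⟩) (x t))
              else if y t = x t then (1 : ℂ) else 0)).re) ^ 2 : ℝ) : ℂ) := by
    intro q
    rw [← hPre q]
    push_cast [Complex.ofReal_re]
    ring
  rw [Finset.sum_congr rfl (fun q _ => hq2 q)]
  rw [← Complex.ofReal_sum]
  have h6c : ((6:ℂ) ^ S.card) = (((6:ℝ) ^ S.card : ℝ) : ℂ) := by push_cast; ring
  rw [h6c]
  rw [← Complex.ofReal_mul, Complex.ofReal_re]
  rw [← mul_assoc, ← mul_pow]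
  norm_num
end

section
/- Let {φ̃_i}_{i=1}^4 be the single-qubit SIC-POVM vectors (φ̃_i = φ_i/√2 with φ₁ = (1,0), φ₂ = (1/√3, √(2/3)), φ₃ = (1/√3, √(2/3)e^{i2π/3}), φ₄ = (1/√3, √(2/3)e^{i4π/3})). Let ρ = |ψ⟩⟨ψ| be an n-qubit pure state and S ⊆ Fin n nonempty with |S| = s. For q ∈ {1,2,3,4}^S, let |Φ̃_q⟩⟨Φ̃_q| = ⊗_{i∈S} |φ̃_{q_i}⟩⟨φ̃_{q_i}| acting on the qubits in S (identity elsewhere) and P(q) = tr(ρ |Φ̃_q⟩⟨Φ̃_q|). Then {P(q)}_q is a probability distribution on {1,2,3,4}^S and C_ψ(S) = 1 − 3^s · Σ_{q ∈ {1,2,3,4}^S} P(q)². -/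
open Matrix MeasureTheory
open scoped BigOperators ComplexConjugate Kronecker

/-- The four SIC vectors `φ₁, …, φ₄` in `ℂ²`. -/
noncomputable def sicVec : Fin 4 → Fin 2 → ℂ :=
  ![![1, 0],
    ![((1 / Real.sqrt 3 : ℝ) : ℂ), ((Real.sqrt (2/3) : ℝ) : ℂ)],
    ![((1 / Real.sqrt 3 : ℝ) : ℂ),
      ((Real.sqrt (2/3) : ℝ) : ℂ) * Complex.exp (2 * Real.pi * Complex.I / 3)],
    ![((1 / Real.sqrt 3 : ℝ) : ℂ),
      ((Real.sqrt (2/3) : ℝ) : ℂ) * Complex.exp (4 * Real.pi * Complex.I / 3)]]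

/-- The rescaled SIC-POVM vectors `φ̃ᵢ = φᵢ/√2`. -/
noncomputable def sicTilde (i : Fin 4) : Fin 2 → ℂ :=
  fun a => sicVec i a / ((Real.sqrt 2 : ℝ) : ℂ)

/-- The product SIC-POVM element `|Φ̃_q⟩⟨Φ̃_q| = ⊗_{i∈S} |φ̃_{qᵢ}⟩⟨φ̃_{qᵢ}|` on the qubits
in `S`, identity elsewhere. -/
noncomputable def sicProj {n : ℕ} (S : Finset (Fin n))
    (q : {i : Fin n // i ∈ S} → Fin 4) : QMat n :=
  localOp S (fun i => Matrix.vecMulVec (sicTilde (q i)) (star (sicTilde (q i))))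

/-- The SIC-POVM outcome probability `P(q) = tr(ρ |Φ̃_q⟩⟨Φ̃_q|)`. -/
noncomputable def sicBorn {n : ℕ} (ρ : QMat n) (S : Finset (Fin n))
    (q : {i : Fin n // i ∈ S} → Fin 4) : ℝ :=
  (Matrix.trace (ρ * sicProj S q)).re

namespace CEaux
open Finset
variable {n : ℕ}

noncomputable def w : ℂ := Complex.exp (2 * Real.pi * Complex.I / 3)

lemma w_pow3 : w ^ 3 = 1 := by
  rw [w, ← Complex.exp_nat_mul]
  rw [show (3:ℕ) * (2 * Real.pi * Complex.I / 3) = 2 * Real.pi * Complex.I by push_cast; ring]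
  exact Complex.exp_two_pi_mul_I

lemma w_ne_one : w ≠ 1 := by
  intro h
  rw [w, Complex.exp_eq_one_iff] at h
  rcases h with ⟨k, hk⟩
  have hpi : (Real.pi : ℂ) ≠ 0 := by simpa using Real.pi_ne_zero
  have h2 : (2:ℂ) * Real.pi * Complex.I ≠ 0 := by
    simp [hpi, Complex.I_ne_zero]
  have h3 : (2:ℂ) * Real.pi * Complex.I * ((3:ℂ) * k) = 2 * Real.pi * Complex.I * 1 := by
    linear_combination (-3:ℂ) * hk
  have h4 : (3:ℂ) * k = 1 := mul_left_cancel₀ h2 h3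
  have h3' : ((3 * k : ℤ) : ℂ) = ((1:ℤ) : ℂ) := by push_cast; linear_combination h4
  have := Int.cast_injective (α := ℂ) h3'
  omega

lemma one_add_w : 1 + w + w ^ 2 = 0 := by
  have h := w_pow3
  have h1 : w - 1 ≠ 0 := sub_ne_zero.mpr w_ne_one
  have h2 : (w - 1) * (1 + w + w ^ 2) = 0 := by linear_combination h
  rcases mul_eq_zero.mp h2 with h' | h'
  · exact absurd h' h1
  · exact h'

lemma exp4 : Complex.exp (4 * Real.pi * Complex.I / 3) = w ^ 2 := by
  rw [w, ← Complex.exp_nat_mul]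
  congr 1
  push_cast; ring

lemma conj_w : conj w = w ^ 2 := by
  rw [← exp4, w, ← Complex.exp_conj]
  have h : (starRingEnd ℂ) (2 * Real.pi * Complex.I / 3) = -(2 * Real.pi * Complex.I / 3) := by
    simp [map_div₀, Complex.conj_I, map_ofNat]
    ring
  rw [h, show (4 * Real.pi * Complex.I / 3 : ℂ) = -(2 * Real.pi * Complex.I / 3) + 2 * Real.pi * Complex.I by ring,
    Complex.exp_add, Complex.exp_two_pi_mul_I, mul_one]

lemma conj_w2 : conj (w ^ 2) = w := by
  rw [map_pow, conj_w]
  linear_combination w * w_pow3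

noncomputable def c : ℂ := ((1 / Real.sqrt 3 : ℝ) : ℂ)
noncomputable def d : ℂ := ((Real.sqrt (2/3) : ℝ) : ℂ)
noncomputable def s : ℂ := ((Real.sqrt 2 : ℝ) : ℂ)

lemma hc2 : c ^ 2 = 1/3 := by
  rw [c]
  norm_cast
  rw [div_pow, one_pow, Real.sq_sqrt (by norm_num : (3:ℝ) ≥ 0).le]
  norm_num
lemma hd2 : d ^ 2 = 2/3 := by
  rw [d]; norm_cast
  rw [Real.sq_sqrt (by norm_num : (0:ℝ) ≤ 2/3)]; push_cast; ring
lemma hs2 : s ^ 2 = 2 := by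
  rw [s]; norm_cast
  rw [Real.sq_sqrt (by norm_num : (0:ℝ) ≤ 2)]
lemma hs0 : s ≠ 0 := by
  rw [s]
  norm_cast
  positivity

lemma conj_c : conj c = c := Complex.conj_ofReal _
lemma conj_d : conj d = d := Complex.conj_ofReal _
lemma conj_s : conj s = s := Complex.conj_ofReal _

lemma sic_entries : sicTilde 0 0 = 1/s ∧ sicTilde 0 1 = 0 ∧ sicTilde 1 0 = c/s ∧ sicTilde 1 1 = d/s
    ∧ sicTilde 2 0 = c/s ∧ sicTilde 2 1 = d*w/s ∧ sicTilde 3 0 = c/s ∧ sicTilde 3 1 = d*w^2/s := by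
  refine ⟨?_,?_,?_,?_,?_,?_,?_,?_⟩ <;>
    simp [sicTilde, sicVec, c, d, s, w, exp4, Matrix.cons_val_zero, Matrix.cons_val_one,
      Matrix.head_cons, Matrix.cons_val_succ, Matrix.vecHead, Matrix.vecTail]

lemma sic_res (a b : Fin 2) :
    ∑ m : Fin 4, sicTilde m a * conj (sicTilde m b) = if a = b then 1 else 0 := by
  obtain ⟨e00,e01,e10,e11,e20,e21,e30,e31⟩ := sic_entries
  have hw := one_add_w
  have hw3 := w_pow3
  have h2 := hc2; have h3 := hd2; have h4 := hs2; have h5 := hs0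
  fin_cases a <;> fin_cases b <;>
    simp only [Fin.sum_univ_four, Fin.isValue, Fin.mk_zero, Fin.mk_one,
      e00,e01,e10,e11,e20,e21,e30,e31,
      map_div₀, _root_.map_mul, _root_.map_one, _root_.map_zero, conj_c, conj_d, conj_s, conj_w, conj_w2,
        Fin.reduceEq, ↓reduceIte] <;>
    field_simp <;> ring_nf
  · linear_combination 3*h2 - h4
  · linear_combination c*d*hw
  · linear_combination d*c*hw
  · linear_combination 3*h3 + 2*d^2*hw3 - h4

set_option maxHeartbeats 2000000 in
lemma sic_two (a b cc dd : Fin 2) :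
    ∑ m : Fin 4, sicTilde m a * conj (sicTilde m b) * (sicTilde m cc * conj (sicTilde m dd))
    = (1/6) * ((if a = b then 1 else 0) * (if cc = dd then 1 else 0)
      + (if a = dd then 1 else 0) * (if cc = b then 1 else 0)) := by
  obtain ⟨e00,e01,e10,e11,e20,e21,e30,e31⟩ := sic_entries
  have hw := one_add_w
  have hw3 := w_pow3
  have h2 := hc2; have h3 := hd2; have h4 := hs2; have h5 := hs0
  fin_cases a <;> fin_cases b <;> fin_cases cc <;> fin_cases dd <;>
    simp only [Fin.sum_univ_four, Fin.isValue, Fin.mk_zero, Fin.mk_one,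
      e00,e01,e10,e11,e20,e21,e30,e31,
      map_div₀, _root_.map_mul, _root_.map_one, _root_.map_zero, conj_c, conj_d, conj_s, conj_w, conj_w2,
        Fin.reduceEq, ↓reduceIte] <;>
    field_simp <;> ring_nf
  · linear_combination 18*(c^2+1/3)*h2 - 2*(s^2+2)*h4
  · linear_combination 6*(c^3*d*hw)
  · linear_combination 6*(c^3*d*hw)
  · linear_combination 12*c^2*d^2*hw3 + 18*d^2*h2 + 6*h3 - (s^2+2)*h4
  · linear_combination 6*(c^3*d*hw)
  · linear_combination 6*(c^2*d^2*hw + c^2*d^2*w*hw3)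
  · linear_combination 12*c^2*d^2*hw3 + 18*d^2*h2 + 6*h3 - (s^2+2)*h4
  · linear_combination 6*(c*d^3*hw + c*d^3*(w+w^2)*hw3)
  · linear_combination 6*(c^3*d*hw)
  · linear_combination 12*c^2*d^2*hw3 + 18*d^2*h2 + 6*h3 - (s^2+2)*h4
  · linear_combination 6*(c^2*d^2*hw + c^2*d^2*w*hw3)
  · linear_combination 6*(c*d^3*hw + c*d^3*(w+w^2)*hw3)
  · linear_combination 12*c^2*d^2*hw3 + 18*d^2*h2 + 6*h3 - (s^2+2)*h4
  · linear_combination 6*(c*d^3*hw + c*d^3*(w+w^2)*hw3)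
  · linear_combination 6*(c*d^3*hw + c*d^3*(w+w^2)*hw3)
  · linear_combination 12*d^4*(w^3+1)*hw3 + 18*(d^2+2/3)*h3 - 2*(s^2+2)*h4

lemma emb_mem (α : Finset (Fin n)) (i : {x : Fin n // x ∈ α} → Fin 2)
    (k : {x : Fin n // x ∉ α} → Fin 2) (x : {x : Fin n // x ∈ α}) :
    embedIdx α i k x = i x := by
  rw [embedIdx, dif_pos x.2]

lemma emb_not (α : Finset (Fin n)) (i : {x : Fin n // x ∈ α} → Fin 2)
    (k : {x : Fin n // x ∉ α} → Fin 2) (x : {x : Fin n // x ∉ α}) :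
    embedIdx α i k x = k x := by
  rw [embedIdx, dif_neg x.2]

noncomputable def splitEquiv (α : Finset (Fin n)) :
    (({x : Fin n // x ∈ α} → Fin 2) × ({x : Fin n // x ∉ α} → Fin 2)) ≃ (Fin n → Fin 2) where
  toFun p := embedIdx α p.1 p.2
  invFun x := (fun i => x i, fun i => x i)
  left_inv p := by
    refine Prod.ext ?_ ?_ <;> funext i
    · exact emb_mem α p.1 p.2 i
    · exact emb_not α p.1 p.2 i
  right_inv x := by
    funext i
    simp only [embedIdx]
    split <;> rfl

lemma sum_split (α : Finset (Fin n)) (f : (Fin n → Fin 2) → ℂ) :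
    ∑ x, f x = ∑ i : {x : Fin n // x ∈ α} → Fin 2, ∑ k : {x : Fin n // x ∉ α} → Fin 2,
      f (embedIdx α i k) := by
  rw [← Equiv.sum_comp (splitEquiv α) f, Fintype.sum_prod_type]
  rfl

lemma delta_fun {σ : Type*} [Fintype σ] [DecidableEq σ] (y x : σ → Fin 2) :
    (∏ i : σ, if y i = x i then (1:ℂ) else 0) = if y = x then 1 else 0 := by
  rw [Finset.prod_boole]
  by_cases h : y = x
  · simp [h]
  · rw [if_neg h, if_neg]
    simp only [Finset.mem_univ, forall_true_left]
    exact fun hc => h (funext hc)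

lemma delta_collapse {σ : Type*} [Fintype σ] [DecidableEq σ]
    (cf : (σ → Fin 2) → ℂ) (E : σ → Fin 2) :
    (∑ y, cf y * if y = E then 1 else 0) = cf E := by
  rw [Finset.sum_congr rfl (fun y _ => by rw [mul_ite, mul_one, mul_zero]),
    Finset.sum_ite_eq' Finset.univ E cf, if_pos (Finset.mem_univ E)]

lemma localOp_apply (S : Finset (Fin n)) (V : {i : Fin n // i ∈ S} → Matrix (Fin 2) (Fin 2) ℂ)
    (x y : Fin n → Fin 2) :
    localOp S V x y = (∏ i : {i : Fin n // i ∈ S}, V i (x i) (y i)) *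
      ∏ i : {i : Fin n // i ∉ S}, (if x i.1 = y i.1 then (1:ℂ) else 0) := by
  rw [localOp, ← Fintype.prod_subtype_mul_prod_subtype (· ∈ S)
    (fun i => if h : i ∈ S then V ⟨i, h⟩ (x i) (y i) else (if x i = y i then 1 else 0))]
  congr 1
  · exact Finset.prod_congr (Finset.ext (by simp)) (fun i _ => by rw [dif_pos i.2])
  · exact Finset.prod_congr (Finset.ext (by simp)) (fun i _ => by rw [dif_neg i.2])

lemma sum_q_prod {σ : Type*} [Fintype σ] [DecidableEq σ] (A : σ → Fin 4 → ℂ) :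
    ∑ q : σ → Fin 4, ∏ i, A i (q i) = ∏ i, ∑ m, A i m := by
  rw [Finset.prod_univ_sum, Fintype.piFinset_univ]

lemma trace_vmv (ψ : (Fin n → Fin 2) → ℂ) (M : QMat n) :
    Matrix.trace (Matrix.vecMulVec ψ (star ψ) * M)
      = ∑ x, ∑ y, ψ x * conj (ψ y) * M y x := by
  simp only [Matrix.trace, Matrix.diag, Matrix.mul_apply, Matrix.vecMulVec_apply,
    Pi.star_apply, Complex.star_def]

lemma bracket (α : Finset (Fin n)) (y f g : Fin n → Fin 2) :
    ((∏ i ∈ α, if y i = f i then (1:ℂ) else 0) *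
      ∏ i ∈ Finset.univ \ α, (if y i = g i then (1:ℂ) else 0))
    = if y = embedIdx α (fun i => f i.1) (fun i => g i.1) then 1 else 0 := by
  set E := embedIdx α (fun i : {x : Fin n // x ∈ α} => f i.1)
    (fun i : {x : Fin n // x ∉ α} => g i.1) with hE
  have h1 : (∏ i ∈ α, if y i = f i then (1:ℂ) else 0)
      = ∏ i ∈ α, if y i = E i then 1 else 0 := by
    refine Finset.prod_congr rfl fun i hi => ?_
    rw [hE, embedIdx, dif_pos hi]
  have h2 : (∏ i ∈ Finset.univ \ α, if y i = g i then (1:ℂ) else 0)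
      = ∏ i ∈ Finset.univ \ α, if y i = E i then 1 else 0 := by
    refine Finset.prod_congr rfl fun i hi => ?_
    rw [hE, embedIdx, dif_neg (Finset.mem_sdiff.mp hi).2]
  rw [h1, h2, ← Finset.prod_union (Finset.disjoint_sdiff),
    Finset.union_sdiff_of_subset (Finset.subset_univ α)]
  exact delta_fun y E

lemma swap_emb (α : Finset (Fin n)) (i j : {x : Fin n // x ∈ α} → Fin 2)
    (k k' : {x : Fin n // x ∉ α} → Fin 2) :
    embedIdx α (fun t => embedIdx α j k' t.1) (fun t => embedIdx α i k t.1)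
      = embedIdx α j k := by
  have hf : (fun t : {x : Fin n // x ∈ α} => embedIdx α j k' t.1) = j := by
    funext t; exact emb_mem α j k' t
  have hg : (fun t : {x : Fin n // x ∉ α} => embedIdx α i k t.1) = k := by
    funext t; exact emb_not α i k t
  rw [hf, hg]

lemma prod_mem (α : Finset (Fin n)) (f : Fin n → ℂ) :
    ∏ i : {x : Fin n // x ∈ α}, f i.1 = ∏ i ∈ α, f i := by
  convert (Finset.prod_subtype α (fun _ => Iff.rfl) f).symm using 2

lemma prod_not_mem (α : Finset (Fin n)) (f : Fin n → ℂ) :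
    ∏ i : {x : Fin n // x ∉ α}, f i.1 = ∏ i ∈ Finset.univ \ α, f i := by
  convert (Finset.prod_subtype (Finset.univ \ α) (p := fun x => x ∉ α) (fun i => by simp) f).symm using 2

lemma my_prod_split (α : Finset (Fin n)) (f : Fin n → ℂ) :
    (∏ i : {x : Fin n // x ∈ α}, f i.1) * (∏ i : {x : Fin n // x ∉ α}, f i.1) = ∏ i, f i := by
  rw [prod_mem, prod_not_mem, ← Finset.prod_union Finset.disjoint_sdiff,
    Finset.union_sdiff_of_subset (Finset.subset_univ α)]

lemma sicProj_apply (S : Finset (Fin n)) (q : {i : Fin n // i ∈ S} → Fin 4)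
    (x y : Fin n → Fin 2) :
    sicProj S q x y = (∏ i : {i : Fin n // i ∈ S},
        sicTilde (q i) (x i.1) * conj (sicTilde (q i) (y i.1))) *
      ∏ i : {i : Fin n // i ∉ S}, (if x i.1 = y i.1 then (1:ℂ) else 0) := by
  rw [sicProj, localOp_apply]
  simp only [Matrix.vecMulVec_apply, Pi.star_apply, Complex.star_def]

/-- resolution of the identity -/
lemma sum_sicProj (S : Finset (Fin n)) (y x : Fin n → Fin 2) :
    (∑ q : {i : Fin n // i ∈ S} → Fin 4, sicProj S q y x) = if y = x then 1 else 0 := by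
  simp only [sicProj_apply]
  rw [← Finset.sum_mul,
    sum_q_prod (fun (i : {i : Fin n // i ∈ S}) (m : Fin 4) =>
      sicTilde m (y i.1) * conj (sicTilde m (x i.1))),
    Finset.prod_congr rfl (fun (i : {i : Fin n // i ∈ S}) _ => sic_res (y i.1) (x i.1)),
    my_prod_split S (fun i => if y i = x i then (1:ℂ) else 0)]
  exact delta_fun y x

/-- second-moment identity -/
lemma sum_sicProj_two (S : Finset (Fin n)) (y x y' x' : Fin n → Fin 2) :
    (∑ q : {i : Fin n // i ∈ S} → Fin 4, sicProj S q y x * sicProj S q y' x')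
    = (1/6 : ℂ)^S.card * ∑ α ∈ S.powerset,
        (∏ i ∈ α, ((if y i = x' i then (1:ℂ) else 0) * (if y' i = x i then 1 else 0))) *
        ∏ i ∈ Finset.univ \ α, ((if y i = x i then (1:ℂ) else 0) * (if y' i = x' i then 1 else 0)) := by
  simp only [sicProj_apply]
  have step1 : ∀ q : {i : Fin n // i ∈ S} → Fin 4,
      ((∏ i : {i : Fin n // i ∈ S}, sicTilde (q i) (y i.1) * conj (sicTilde (q i) (x i.1))) *
        ∏ i : {i : Fin n // i ∉ S}, (if y i.1 = x i.1 then (1:ℂ) else 0)) *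
      ((∏ i : {i : Fin n // i ∈ S}, sicTilde (q i) (y' i.1) * conj (sicTilde (q i) (x' i.1))) *
        ∏ i : {i : Fin n // i ∉ S}, (if y' i.1 = x' i.1 then (1:ℂ) else 0))
      = (∏ i : {i : Fin n // i ∈ S},
          sicTilde (q i) (y i.1) * conj (sicTilde (q i) (x i.1)) *
            (sicTilde (q i) (y' i.1) * conj (sicTilde (q i) (x' i.1)))) *
        (∏ i : {i : Fin n // i ∉ S},
          (if y i.1 = x i.1 then (1:ℂ) else 0) * (if y' i.1 = x' i.1 then 1 else 0)) := by
    intro q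
    simp only [Finset.prod_mul_distrib]
    ring
  rw [Finset.sum_congr rfl (fun q _ => step1 q), ← Finset.sum_mul,
    sum_q_prod (fun (i : {i : Fin n // i ∈ S}) (m : Fin 4) =>
      sicTilde m (y i.1) * conj (sicTilde m (x i.1)) *
        (sicTilde m (y' i.1) * conj (sicTilde m (x' i.1)))),
    Finset.prod_congr rfl (fun (i : {i : Fin n // i ∈ S}) _ =>
      sic_two (y i.1) (x i.1) (y' i.1) (x' i.1)),
    Finset.prod_mul_distrib, Finset.prod_const]
  have hcard : Fintype.card {i : Fin n // i ∈ S} = S.card := Fintype.card_coe S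
  rw [Finset.card_univ, hcard]
  -- now convert subtype products to finset products and expand
  have hSprod : (∏ i : {i : Fin n // i ∈ S},
      ((if y i.1 = x i.1 then (1:ℂ) else 0) * (if y' i.1 = x' i.1 then 1 else 0)
        + (if y i.1 = x' i.1 then 1 else 0) * (if y' i.1 = x i.1 then 1 else 0)))
      = ∏ i ∈ S,
      ((if y i = x i then (1:ℂ) else 0) * (if y' i = x' i then 1 else 0)
        + (if y i = x' i then 1 else 0) * (if y' i = x i then 1 else 0)) :=
    prod_mem S (fun i => ((if y i = x i then (1:ℂ) else 0) * (if y' i = x' i then 1 else 0)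
        + (if y i = x' i then 1 else 0) * (if y' i = x i then 1 else 0)))
  have hCprod : (∏ i : {i : Fin n // i ∉ S},
      ((if y i.1 = x i.1 then (1:ℂ) else 0) * (if y' i.1 = x' i.1 then 1 else 0)))
      = ∏ i ∈ Finset.univ \ S,
      ((if y i = x i then (1:ℂ) else 0) * (if y' i = x' i then 1 else 0)) :=
    prod_not_mem S (fun i => (if y i = x i then (1:ℂ) else 0) * (if y' i = x' i then 1 else 0))
  have hadd : (∏ i ∈ S,
      ((if y i = x i then (1:ℂ) else 0) * (if y' i = x' i then 1 else 0)
        + (if y i = x' i then 1 else 0) * (if y' i = x i then 1 else 0)))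
      = ∑ α ∈ S.powerset,
        (∏ i ∈ α, ((if y i = x' i then (1:ℂ) else 0) * (if y' i = x i then 1 else 0))) *
        ∏ i ∈ S \ α, ((if y i = x i then (1:ℂ) else 0) * (if y' i = x' i then 1 else 0)) := by
    rw [Finset.prod_congr rfl (fun i _ => add_comm _ _), Finset.prod_add]
  rw [hSprod, hadd, hCprod, mul_assoc, Finset.sum_mul]
  congr 1
  refine Finset.sum_congr rfl fun α hα => ?_
  have hsub : α ⊆ S := Finset.mem_powerset.mp hα
  have hdisj : Disjoint (S \ α) (Finset.univ \ S) := by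
    rw [Finset.disjoint_left]
    intro i hi hi2
    exact (Finset.mem_sdiff.mp hi2).2 (Finset.mem_sdiff.mp hi).1
  have hunion : (S \ α) ∪ (Finset.univ \ S) = Finset.univ \ α := by
    ext i
    simp only [Finset.mem_union, Finset.mem_sdiff, Finset.mem_univ, true_and]
    constructor
    · rintro (⟨_, h⟩ | h)
      · exact h
      · exact fun hi => h (hsub hi)
    · intro h
      by_cases hiS : i ∈ S
      · exact Or.inl ⟨hiS, h⟩
      · exact Or.inr hiS
  rw [mul_assoc, ← Finset.prod_union hdisj, hunion]

noncomputable def Phi (S : Finset (Fin n)) (q : {i : Fin n // i ∈ S} → Fin 4)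
    (j : {x : Fin n // x ∈ S} → Fin 2) : ℂ := ∏ i, sicTilde (q i) (j i)

noncomputable def Cc (ψ : (Fin n → Fin 2) → ℂ) (S : Finset (Fin n))
    (q : {i : Fin n // i ∈ S} → Fin 4) (k : {x : Fin n // x ∉ S} → Fin 2) : ℂ :=
  ∑ j, ψ (embedIdx S j k) * conj (Phi S q j)

lemma sicProj_emb (S : Finset (Fin n)) (q : {i : Fin n // i ∈ S} → Fin 4)
    (jy : {x : Fin n // x ∈ S} → Fin 2) (ky : {x : Fin n // x ∉ S} → Fin 2)
    (jx : {x : Fin n // x ∈ S} → Fin 2) (kx : {x : Fin n // x ∉ S} → Fin 2) :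
    sicProj S q (embedIdx S jy ky) (embedIdx S jx kx)
      = Phi S q jy * conj (Phi S q jx) * (if ky = kx then 1 else 0) := by
  rw [sicProj_apply]
  congr 1
  · simp only [emb_mem]
    rw [Finset.prod_mul_distrib, Phi, Phi, ← map_prod]
  · simp only [emb_not]
    exact delta_fun ky kx

lemma trace_born (ψ : (Fin n → Fin 2) → ℂ) (S : Finset (Fin n))
    (q : {i : Fin n // i ∈ S} → Fin 4) :
    Matrix.trace (Matrix.vecMulVec ψ (star ψ) * sicProj S q)
      = ∑ k : {x : Fin n // x ∉ S} → Fin 2, Cc ψ S q k * conj (Cc ψ S q k) := by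
  rw [trace_vmv, sum_split S (fun x => ∑ y, ψ x * conj (ψ y) * sicProj S q y x)]
  have hy : ∀ jx kx,
      (∑ y, ψ (embedIdx S jx kx) * conj (ψ y) * sicProj S q y (embedIdx S jx kx))
      = ∑ jy, ∑ ky, ψ (embedIdx S jx kx) * conj (ψ (embedIdx S jy ky)) *
          sicProj S q (embedIdx S jy ky) (embedIdx S jx kx) :=
    fun jx kx => sum_split S _
  rw [Finset.sum_congr rfl (fun jx _ => Finset.sum_congr rfl (fun kx _ => hy jx kx))]
  have hky : ∀ jx kx jy,
      (∑ ky, ψ (embedIdx S jx kx) * conj (ψ (embedIdx S jy ky)) *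
        sicProj S q (embedIdx S jy ky) (embedIdx S jx kx))
      = ψ (embedIdx S jx kx) * conj (Phi S q jx) *
          (conj (ψ (embedIdx S jy kx)) * Phi S q jy) := by
    intro jx kx jy
    have h1 : ∀ ky, ψ (embedIdx S jx kx) * conj (ψ (embedIdx S jy ky)) *
        sicProj S q (embedIdx S jy ky) (embedIdx S jx kx)
        = (ψ (embedIdx S jx kx) * conj (Phi S q jx) *
            (conj (ψ (embedIdx S jy ky)) * Phi S q jy)) * (if ky = kx then 1 else 0) := by
      intro ky; rw [sicProj_emb]; ring
    rw [Finset.sum_congr rfl (fun ky _ => h1 ky)]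
    exact delta_collapse (fun ky => ψ (embedIdx S jx kx) * conj (Phi S q jx) *
      (conj (ψ (embedIdx S jy ky)) * Phi S q jy)) kx
  rw [Finset.sum_congr rfl (fun jx _ => Finset.sum_congr rfl (fun kx _ =>
    Finset.sum_congr rfl (fun jy _ => hky jx kx jy)))]
  rw [Finset.sum_comm]
  refine Finset.sum_congr rfl fun kx _ => ?_
  have hconjC : conj (Cc ψ S q kx) = ∑ jy, conj (ψ (embedIdx S jy kx)) * Phi S q jy := by
    rw [Cc, map_sum]
    refine Finset.sum_congr rfl fun jy _ => ?_
    rw [_root_.map_mul, Complex.conj_conj]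
  rw [hconjC, Cc, Finset.sum_mul_sum]

lemma sum_born (ψ : (Fin n → Fin 2) → ℂ) (S : Finset (Fin n)) :
    (∑ q : {i : Fin n // i ∈ S} → Fin 4,
      Matrix.trace (Matrix.vecMulVec ψ (star ψ) * sicProj S q))
    = ∑ x, ψ x * conj (ψ x) := by
  rw [Finset.sum_congr rfl (fun q _ => trace_vmv ψ (sicProj S q)), Finset.sum_comm]
  refine Finset.sum_congr rfl fun x _ => ?_
  rw [Finset.sum_comm]
  have h : ∀ y, (∑ q : {i : Fin n // i ∈ S} → Fin 4, ψ x * conj (ψ y) * sicProj S q y x)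
      = ψ x * conj (ψ y) * (if y = x then 1 else 0) := fun y => by
    rw [← Finset.mul_sum, sum_sicProj]
  rw [Finset.sum_congr rfl (fun y _ => h y)]
  exact delta_collapse (fun y => ψ x * conj (ψ y)) x

set_option maxHeartbeats 1000000 in
lemma z_sq (ψ : (Fin n → Fin 2) → ℂ) (S : Finset (Fin n))
    (q : {i : Fin n // i ∈ S} → Fin 4) :
    (Matrix.trace (Matrix.vecMulVec ψ (star ψ) * sicProj S q))^2
    = ∑ p : ((Fin n → Fin 2) × (Fin n → Fin 2)) × ((Fin n → Fin 2) × (Fin n → Fin 2)),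
        (ψ p.1.1 * conj (ψ p.1.2) * (ψ p.2.1 * conj (ψ p.2.2))) *
          (sicProj S q p.1.2 p.1.1 * sicProj S q p.2.2 p.2.1) := by
  rw [sq, trace_vmv, Finset.sum_mul_sum]
  simp only [Fintype.sum_prod_type]
  refine Finset.sum_congr rfl fun x _ => ?_
  have hx : ∀ x' : Fin n → Fin 2,
      ((∑ y, ψ x * conj (ψ y) * sicProj S q y x) * ∑ y', ψ x' * conj (ψ y') * sicProj S q y' x')
      = ∑ y, ∑ y', (ψ x * conj (ψ y) * sicProj S q y x) * (ψ x' * conj (ψ y') * sicProj S q y' x') :=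
    fun x' => Finset.sum_mul_sum _ _ _ _
  rw [Finset.sum_congr rfl (fun x' _ => hx x'), Finset.sum_comm]
  exact Finset.sum_congr rfl fun y _ => Finset.sum_congr rfl fun x' _ =>
    Finset.sum_congr rfl fun y' _ => by ring

lemma inner_trace (ψ : (Fin n → Fin 2) → ℂ) (α : Finset (Fin n)) :
    (∑ x : Fin n → Fin 2, ∑ y : Fin n → Fin 2, ∑ x' : Fin n → Fin 2, ∑ y' : Fin n → Fin 2,
      (ψ x * conj (ψ y) * (ψ x' * conj (ψ y'))) *
      ((∏ i ∈ α, ((if y i = x' i then (1:ℂ) else 0) * (if y' i = x i then 1 else 0))) *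
       ∏ i ∈ Finset.univ \ α, ((if y i = x i then (1:ℂ) else 0) * (if y' i = x' i then 1 else 0))))
    = Matrix.trace (reduced (Matrix.vecMulVec ψ (star ψ)) α *
        reduced (Matrix.vecMulVec ψ (star ψ)) α) := by
  -- abbreviations for the two swap targets
  have hw : ∀ x y x' y' : Fin n → Fin 2,
      ((∏ i ∈ α, ((if y i = x' i then (1:ℂ) else 0) * (if y' i = x i then 1 else 0))) *
       ∏ i ∈ Finset.univ \ α, ((if y i = x i then (1:ℂ) else 0) * (if y' i = x' i then 1 else 0)))
      = (if y = embedIdx α (fun i => x' i.1) (fun i => x i.1) then (1:ℂ) else 0) *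
        (if y' = embedIdx α (fun i => x i.1) (fun i => x' i.1) then 1 else 0) := by
    intro x y x' y'
    rw [← bracket α y x' x, ← bracket α y' x x']
    simp only [Finset.prod_mul_distrib]
    ring
  have hstep : ∀ x : Fin n → Fin 2,
      (∑ y : Fin n → Fin 2, ∑ x' : Fin n → Fin 2, ∑ y' : Fin n → Fin 2,
        (ψ x * conj (ψ y) * (ψ x' * conj (ψ y'))) *
        ((∏ i ∈ α, ((if y i = x' i then (1:ℂ) else 0) * (if y' i = x i then 1 else 0))) *
         ∏ i ∈ Finset.univ \ α, ((if y i = x i then (1:ℂ) else 0) * (if y' i = x' i then 1 else 0))))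
      = ∑ x' : Fin n → Fin 2,
          ψ x * conj (ψ (embedIdx α (fun i => x' i.1) (fun i => x i.1))) *
          (ψ x' * conj (ψ (embedIdx α (fun i => x i.1) (fun i => x' i.1)))) := by
    intro x
    rw [Finset.sum_comm]
    refine Finset.sum_congr rfl fun x' _ => ?_
    have h1 : ∀ y y' : Fin n → Fin 2,
        (ψ x * conj (ψ y) * (ψ x' * conj (ψ y'))) *
        ((∏ i ∈ α, ((if y i = x' i then (1:ℂ) else 0) * (if y' i = x i then 1 else 0))) *
         ∏ i ∈ Finset.univ \ α, ((if y i = x i then (1:ℂ) else 0) * (if y' i = x' i then 1 else 0)))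
        = ((ψ x * conj (ψ y) * (ψ x' * conj (ψ y')) *
            (if y = embedIdx α (fun i => x' i.1) (fun i => x i.1) then (1:ℂ) else 0)) *
           (if y' = embedIdx α (fun i => x i.1) (fun i => x' i.1) then 1 else 0)) := by
      intro y y'
      rw [hw x y x' y']
      ring
    calc (∑ y, ∑ y', (ψ x * conj (ψ y) * (ψ x' * conj (ψ y'))) *
        ((∏ i ∈ α, ((if y i = x' i then (1:ℂ) else 0) * (if y' i = x i then 1 else 0))) *
         ∏ i ∈ Finset.univ \ α, ((if y i = x i then (1:ℂ) else 0) * (if y' i = x' i then 1 else 0))))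
        = ∑ y, (ψ x * conj (ψ y) *
            (ψ x' * conj (ψ (embedIdx α (fun i => x i.1) (fun i => x' i.1))))) *
            (if y = embedIdx α (fun i => x' i.1) (fun i => x i.1) then (1:ℂ) else 0) := by
          refine Finset.sum_congr rfl fun y _ => ?_
          rw [Finset.sum_congr rfl (fun y' _ => h1 y y')]
          rw [delta_collapse (fun y' => ψ x * conj (ψ y) * (ψ x' * conj (ψ y')) *
            (if y = embedIdx α (fun i => x' i.1) (fun i => x i.1) then (1:ℂ) else 0))
            (embedIdx α (fun i => x i.1) (fun i => x' i.1))]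
      _ = _ := by
          rw [delta_collapse (fun y => ψ x * conj (ψ y) *
            (ψ x' * conj (ψ (embedIdx α (fun i => x i.1) (fun i => x' i.1)))))
            (embedIdx α (fun i => x' i.1) (fun i => x i.1))]
  rw [Finset.sum_congr rfl (fun x _ => hstep x)]
  rw [sum_split α (fun x => ∑ x' : Fin n → Fin 2,
      ψ x * conj (ψ (embedIdx α (fun i => x' i.1) (fun i => x i.1))) *
      (ψ x' * conj (ψ (embedIdx α (fun i => x i.1) (fun i => x' i.1)))))]
  have hinner : ∀ (i : {x : Fin n // x ∈ α} → Fin 2) (k : {x : Fin n // x ∉ α} → Fin 2),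
      (∑ x' : Fin n → Fin 2,
        ψ (embedIdx α i k) * conj (ψ (embedIdx α (fun t => x' t.1) (fun t => embedIdx α i k t.1))) *
        (ψ x' * conj (ψ (embedIdx α (fun t => embedIdx α i k t.1) (fun t => x' t.1)))))
      = ∑ j, ∑ k', ψ (embedIdx α i k) * conj (ψ (embedIdx α j k)) *
          (ψ (embedIdx α j k') * conj (ψ (embedIdx α i k'))) := by
    intro i k
    rw [sum_split α (fun x' => ψ (embedIdx α i k) *
        conj (ψ (embedIdx α (fun t => x' t.1) (fun t => embedIdx α i k t.1))) *
        (ψ x' * conj (ψ (embedIdx α (fun t => embedIdx α i k t.1) (fun t => x' t.1)))))]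
    refine Finset.sum_congr rfl fun j _ => Finset.sum_congr rfl fun k' _ => ?_
    rw [swap_emb α i j k k', swap_emb α j i k' k]
  rw [Finset.sum_congr rfl (fun i _ => Finset.sum_congr rfl (fun k _ => hinner i k))]
  -- expand the trace side
  have hred : ∀ (i j : {x : Fin n // x ∈ α} → Fin 2),
      reduced (Matrix.vecMulVec ψ (star ψ)) α i j
        = ∑ k, ψ (embedIdx α i k) * conj (ψ (embedIdx α j k)) := by
    intro i j
    simp only [reduced, Matrix.vecMulVec_apply, Pi.star_apply, Complex.star_def]
  rw [show Matrix.trace (reduced (Matrix.vecMulVec ψ (star ψ)) α *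
      reduced (Matrix.vecMulVec ψ (star ψ)) α)
      = ∑ i, ∑ j, reduced (Matrix.vecMulVec ψ (star ψ)) α i j *
          reduced (Matrix.vecMulVec ψ (star ψ)) α j i from rfl]
  refine Finset.sum_congr rfl fun i _ => ?_
  rw [Finset.sum_comm]
  refine Finset.sum_congr rfl fun j _ => ?_
  rw [hred i j, hred j i, Finset.sum_mul_sum]

/-- The key second-moment identity, in complex form. -/
lemma key_complex (ψ : (Fin n → Fin 2) → ℂ) (S : Finset (Fin n)) :
    (∑ q : {i : Fin n // i ∈ S} → Fin 4,
      (Matrix.trace (Matrix.vecMulVec ψ (star ψ) * sicProj S q))^2)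
    = (1/6 : ℂ)^S.card * ∑ α ∈ S.powerset,
        Matrix.trace (reduced (Matrix.vecMulVec ψ (star ψ)) α *
          reduced (Matrix.vecMulVec ψ (star ψ)) α) := by
  rw [Finset.sum_congr rfl (fun q _ => z_sq ψ S q), Finset.sum_comm]
  have h1 : ∀ p : ((Fin n → Fin 2) × (Fin n → Fin 2)) × ((Fin n → Fin 2) × (Fin n → Fin 2)),
      (∑ q : {i : Fin n // i ∈ S} → Fin 4,
        (ψ p.1.1 * conj (ψ p.1.2) * (ψ p.2.1 * conj (ψ p.2.2))) *
          (sicProj S q p.1.2 p.1.1 * sicProj S q p.2.2 p.2.1))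
      = ∑ α ∈ S.powerset, (1/6 : ℂ)^S.card *
          ((ψ p.1.1 * conj (ψ p.1.2) * (ψ p.2.1 * conj (ψ p.2.2))) *
          ((∏ i ∈ α, ((if p.1.2 i = p.2.1 i then (1:ℂ) else 0) * (if p.2.2 i = p.1.1 i then 1 else 0))) *
           ∏ i ∈ Finset.univ \ α, ((if p.1.2 i = p.1.1 i then (1:ℂ) else 0) * (if p.2.2 i = p.2.1 i then 1 else 0)))) := by
    intro p
    rw [← Finset.mul_sum, sum_sicProj_two S p.1.2 p.1.1 p.2.2 p.2.1,
      Finset.mul_sum, Finset.mul_sum]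
    exact Finset.sum_congr rfl fun α _ => by ring
  rw [Finset.sum_congr rfl (fun p _ => h1 p), Finset.sum_comm, Finset.mul_sum]
  refine Finset.sum_congr rfl fun α hα => ?_
  rw [← Finset.mul_sum]
  congr 1
  -- flatten the product-type sum into nested sums
  simp only [Fintype.sum_prod_type]
  exact inner_trace ψ α

end CEaux

open CEaux

/-- **CEs via local SICs**: the SIC outcome probabilities `P(q)` form a probability
distribution on `{1,2,3,4}^S`, and `C_ψ(S) = 1 - 3^s ∑_q P(q)²`. -/
theorem CE_via_SIC (n : ℕ) (ψ : (Fin n → Fin 2) → ℂ)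
    (hψ : (∑ x, star (ψ x) * ψ x) = 1)
    (S : Finset (Fin n)) (hS : S.Nonempty) :
    (∀ q : ({i : Fin n // i ∈ S} → Fin 4), 0 ≤ sicBorn (Matrix.vecMulVec ψ (star ψ)) S q) ∧
    (∑ q : ({i : Fin n // i ∈ S} → Fin 4), sicBorn (Matrix.vecMulVec ψ (star ψ)) S q) = 1 ∧
    CE (Matrix.vecMulVec ψ (star ψ)) S
      = 1 - (3 : ℝ) ^ S.card *
          ∑ q : ({i : Fin n // i ∈ S} → Fin 4),
            (sicBorn (Matrix.vecMulVec ψ (star ψ)) S q) ^ 2 := by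
  have born_eq : ∀ q : ({i : Fin n // i ∈ S} → Fin 4),
      sicBorn (Matrix.vecMulVec ψ (star ψ)) S q
        = ∑ k : {x : Fin n // x ∉ S} → Fin 2, Complex.normSq (Cc ψ S q k) := by
    intro q
    rw [sicBorn, trace_born,
      Finset.sum_congr rfl (fun k _ => Complex.mul_conj (Cc ψ S q k)), Complex.re_sum]
    exact Finset.sum_congr rfl fun k _ => Complex.ofReal_re _
  have reality : ∀ q : ({i : Fin n // i ∈ S} → Fin 4),
      ((sicBorn (Matrix.vecMulVec ψ (star ψ)) S q : ℝ) : ℂ)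
        = Matrix.trace (Matrix.vecMulVec ψ (star ψ) * sicProj S q) := by
    intro q
    rw [born_eq q, trace_born, Complex.ofReal_sum]
    exact Finset.sum_congr rfl fun k _ => (Complex.mul_conj (Cc ψ S q k)).symm
  have hnorm : (∑ x, ψ x * conj (ψ x)) = 1 := by
    rw [← hψ]
    exact Finset.sum_congr rfl fun x _ => by rw [Complex.star_def]; ring
  refine ⟨?_, ?_, ?_⟩
  · intro q
    rw [born_eq q]
    exact Finset.sum_nonneg fun k _ => Complex.normSq_nonneg _
  · have h := sum_born ψ S
    rw [hnorm] at h
    calc (∑ q : ({i : Fin n // i ∈ S} → Fin 4), sicBorn (Matrix.vecMulVec ψ (star ψ)) S q)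
        = (∑ q : ({i : Fin n // i ∈ S} → Fin 4),
            Matrix.trace (Matrix.vecMulVec ψ (star ψ) * sicProj S q)).re := by
          rw [Complex.re_sum]
          exact Finset.sum_congr rfl fun q _ => rfl
      _ = (1:ℂ).re := by rw [h]
      _ = 1 := Complex.one_re
  · have h1 : ((∑ q : ({i : Fin n // i ∈ S} → Fin 4),
        (sicBorn (Matrix.vecMulVec ψ (star ψ)) S q)^2 : ℝ) : ℂ)
        = ∑ q : ({i : Fin n // i ∈ S} → Fin 4),
            (Matrix.trace (Matrix.vecMulVec ψ (star ψ) * sicProj S q))^2 := by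
      rw [Complex.ofReal_sum]
      exact Finset.sum_congr rfl fun q _ => by rw [Complex.ofReal_pow, reality q]
    rw [key_complex ψ S] at h1
    have h2 := congrArg Complex.re h1
    rw [Complex.ofReal_re] at h2
    have h3 : ((1/6 : ℂ)^S.card * ∑ α ∈ S.powerset,
        Matrix.trace (reduced (Matrix.vecMulVec ψ (star ψ)) α *
          reduced (Matrix.vecMulVec ψ (star ψ)) α)).re
        = (1/6 : ℝ)^S.card * ∑ α ∈ S.powerset,
            (Matrix.trace (reduced (Matrix.vecMulVec ψ (star ψ)) α *
              reduced (Matrix.vecMulVec ψ (star ψ)) α)).re := by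
      rw [show ((1/6 : ℂ)) = (((1/6 : ℝ)) : ℂ) by norm_num, ← Complex.ofReal_pow,
        Complex.re_ofReal_mul, Complex.re_sum]
    rw [h3] at h2
    rw [CE]
    rw [show (∑ α ∈ S.powerset, (Matrix.trace (reduced (Matrix.vecMulVec ψ (star ψ)) α *
        reduced (Matrix.vecMulVec ψ (star ψ)) α)).re)
      = (6:ℝ)^S.card * ∑ q : ({i : Fin n // i ∈ S} → Fin 4),
          (sicBorn (Matrix.vecMulVec ψ (star ψ)) S q)^2 by
        rw [h2, ← mul_assoc, ← mul_pow]
        norm_num]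
    rw [← mul_assoc, ← mul_pow]
    norm_num
end

section
/- Let Q₁, …, Q_K (K ≥ 2) be i.i.d. random variables with values in a finite set Ω and common distribution P, and define Ŝ^(K) = (1/(K(K−1))) Σ_{k ≠ k'} 1{Q_k = Q_{k'}}. Let P₂ = Σ_{q∈Ω} P(q)² and P₃ = Σ_{q∈Ω} P(q)³. Then: (i) E[Ŝ^(K)] = P₂; and (ii) Var[Ŝ^(K)] = [2 P₂(1 − P₂) + 4(K − 2)(P₃ − P₂²)] / (K(K − 1)). -/
open MeasureTheory

/-! Write `Ŝ` as the normalized sum of the collision indicators `X_{kk'} = 1{Q_k = Q_{k'}}`,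
`k ≠ k'`. Expanding the indicator that the samples indexed by `s` coincide as
`∑_q ∏_{i ∈ s} 1{Q_i = q}` and using Fubini for the product measure, that indicator has mean
`∑_q P(q)^{|s|}`, and indicators on disjoint index sets are uncorrelated. Hence `E X_{kk'} = P₂`,
while `E[X_{kk'} X_{ll'}]` is `P₂`, `P₃` or `P₂²` according as `{l, l'}` equals `{k, k'}`, meets it
in one point, or misses it; counting the pairs `(l, l')` of each kind gives the second moment. -/

namespace Finset

variable {ι M : Type*} [Fintype ι] [DecidableEq ι]

theorem prod_ite_mem_ite_mem_of_disjoint [CommMonoid M] {s t : Finset ι} (hst : Disjoint s t)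
    (a b : ι → M) :
    ∏ i, (if i ∈ s then a i else if i ∈ t then b i else 1) = (∏ i ∈ s, a i) * ∏ i ∈ t, b i := by
  have hsplit : ∀ i, (if i ∈ s then a i else if i ∈ t then b i else 1)
      = (if i ∈ s then a i else 1) * (if i ∈ t then b i else 1) := by
    intro i
    by_cases hs : i ∈ s
    · simp [hs, Finset.disjoint_left.mp hst hs]
    · simp [hs]
  simp only [hsplit, prod_mul_distrib, prod_ite_mem, univ_inter]

theorem sum_eq_sum_add_of_eq_off (s : Finset ι) {f : ι → ℝ} {c : ℝ} (hf : ∀ i ∉ s, f i = c) :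
    ∑ i, f i = ∑ i ∈ s, f i + ((Fintype.card ι : ℝ) - #s) * c := by
  rw [← sum_add_sum_compl s f, sum_congr rfl fun i hi => hf i (mem_compl.mp hi), sum_const,
    card_compl, nsmul_eq_mul, Nat.cast_sub (card_le_univ s)]

theorem sum_sum_eq_of_eq_offDiag {F : ι → ι → ℝ} {c : ℝ} (hdiag : ∀ k, F k k = 0)
    (hoff : ∀ k k', k ≠ k' → F k k' = c) :
    ∑ k, ∑ k', F k k' = Fintype.card ι * ((Fintype.card ι - 1) * c) := by
  have hrow : ∀ k, ∑ k', F k k' = (Fintype.card ι - 1) * c := fun k => by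
    rw [sum_eq_sum_add_of_eq_off {k} fun k' hk' => hoff k k' (Ne.symm (notMem_singleton.mp hk'))]
    simp [hdiag]
  simp [hrow]

end Finset

section Fubini

variable {ι E : Type*} [Fintype ι] [DecidableEq ι] [MeasurableSpace E] (μ : Measure E)
  [IsProbabilityMeasure μ]

theorem integral_prod_mul_prod_of_disjoint {s t : Finset ι} (hst : Disjoint s t) (f g : E → ℝ) :
    ∫ x, (∏ i ∈ s, f (x i)) * ∏ i ∈ t, g (x i) ∂Measure.pi (fun _ => μ)
      = (∫ y, f y ∂μ) ^ s.card * (∫ y, g y ∂μ) ^ t.card := by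
  let F : ι → E → ℝ := fun i y => if i ∈ s then f y else if i ∈ t then g y else 1
  have hF : ∀ i, ∫ y, F i y ∂μ = if i ∈ s then ∫ y, f y ∂μ else if i ∈ t then ∫ y, g y ∂μ else 1 :=
    fun i => by simp only [F]; split_ifs <;> simp
  calc ∫ x, (∏ i ∈ s, f (x i)) * ∏ i ∈ t, g (x i) ∂Measure.pi (fun _ => μ)
      = ∫ x, ∏ i, F i (x i) ∂Measure.pi (fun _ => μ) := by
        simp only [F, Finset.prod_ite_mem_ite_mem_of_disjoint hst]
    _ = (∫ y, f y ∂μ) ^ s.card * (∫ y, g y ∂μ) ^ t.card := by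
        rw [integral_fintype_prod_eq_prod, Finset.prod_congr rfl fun i _ => hF i,
          Finset.prod_ite_mem_ite_mem_of_disjoint hst, Finset.prod_const, Finset.prod_const]

end Fubini

theorem prod_ite_eq_apply_eq_sum {ι Ω : Type*} [Fintype Ω] [DecidableEq Ω] {s : Finset ι} {a : ι}
    (ha : a ∈ s) (x : ι → Ω) :
    ∏ i ∈ s, (if x i = x a then (1 : ℝ) else 0) = ∑ q, ∏ i ∈ s, if x i = q then (1 : ℝ) else 0 := by
  rw [Finset.sum_eq_single (x a) (fun q _ hq => Finset.prod_eq_zero ha (if_neg (Ne.symm hq)))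
    fun h => absurd (Finset.mem_univ _) h]

theorem integral_ite_eq_measureReal_singleton {Ω : Type*} [MeasurableSpace Ω]
    [MeasurableSingletonClass Ω] [DecidableEq Ω] (μ : Measure Ω) (q : Ω) :
    ∫ y, (if y = q then (1 : ℝ) else 0) ∂μ = μ.real {q} := by
  rw [← integral_indicator_one (measurableSet_singleton q)]
  congr 1 with y
  simp [Set.indicator_apply]

section PowerSum

variable {Ω : Type*} [Fintype Ω] [MeasurableSpace Ω]

def powerSum (μ : Measure Ω) (n : ℕ) : ℝ := ∑ q, μ.real {q} ^ n

variable [MeasurableSingletonClass Ω] [DecidableEq Ω] {ι : Type*} [Fintype ι] [DecidableEq ι] (μ : Measure Ω)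
  [IsProbabilityMeasure μ]

theorem integral_prod_ite_eq_mul_prod_ite_eq {s t : Finset ι} (hst : Disjoint s t) {a b : ι}
    (ha : a ∈ s) (hb : b ∈ t) :
    ∫ x, (∏ i ∈ s, if x i = x a then (1 : ℝ) else 0) * ∏ i ∈ t, (if x i = x b then 1 else 0)
        ∂Measure.pi (fun _ => μ)
      = powerSum μ s.card * powerSum μ t.card := by
  have hqr : ∀ q r : Ω, ∫ x, (∏ i ∈ s, if x i = q then (1 : ℝ) else 0) *
      ∏ i ∈ t, (if x i = r then 1 else 0) ∂Measure.pi (fun _ => μ)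
        = μ.real {q} ^ s.card * μ.real {r} ^ t.card := fun q r => by
    rw [← integral_ite_eq_measureReal_singleton μ q, ← integral_ite_eq_measureReal_singleton μ r]
    exact integral_prod_mul_prod_of_disjoint μ hst (fun y => if y = q then 1 else 0)
      (fun y => if y = r then 1 else 0)
  simp only [prod_ite_eq_apply_eq_sum ha, prod_ite_eq_apply_eq_sum hb, Finset.sum_mul_sum,
    integral_finsetSum _ fun _ _ => Integrable.of_finite, hqr, powerSum]

theorem integral_prod_ite_eq {s : Finset ι} {a : ι} (ha : a ∈ s) :
    ∫ x, (∏ i ∈ s, if x i = x a then (1 : ℝ) else 0) ∂Measure.pi (fun _ => μ)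
      = powerSum μ s.card := by
  have hq : ∀ q : Ω, ∫ x, (∏ i ∈ s, if x i = q then (1 : ℝ) else 0) ∂Measure.pi (fun _ => μ)
      = μ.real {q} ^ s.card := fun q => by
    simpa [integral_ite_eq_measureReal_singleton] using integral_prod_mul_prod_of_disjoint μ
      (Finset.disjoint_empty_right s) (fun y => if y = q then (1 : ℝ) else 0) 1
  simp only [prod_ite_eq_apply_eq_sum ha, integral_finsetSum _ fun _ _ => Integrable.of_finite, hq,
    powerSum]

end PowerSum

section Collision

variable {ι Ω : Type*} [DecidableEq ι] [DecidableEq Ω]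

def collision (k k' : ι) (x : ι → Ω) : ℝ := if k ≠ k' ∧ x k = x k' then 1 else 0

theorem collision_comm (k k' : ι) (x : ι → Ω) : collision k k' x = collision k' k x := by
  simp only [collision, ne_comm, eq_comm]

@[simp]
theorem collision_self (k : ι) (x : ι → Ω) : collision k k x = 0 := by
  simp [collision]

theorem collision_mul_self (k k' : ι) (x : ι → Ω) :
    collision k k' x * collision k k' x = collision k k' x := by
  unfold collision; split_ifs <;> norm_num

theorem collision_eq_prod {k k' : ι} (h : k ≠ k') (x : ι → Ω) :
    collision k k' x = ∏ i ∈ {k, k'}, if x i = x k then (1 : ℝ) else 0 := by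
  simp [collision, Finset.prod_pair h, h, eq_comm]

theorem collision_mul_collision_eq_prod {k k' l : ι} (hk' : k ≠ k') (hl : k ≠ l) (hk'l : k' ≠ l)
    (x : ι → Ω) :
    collision k k' x * collision k l x = ∏ i ∈ {k, k', l}, if x i = x k then (1 : ℝ) else 0 := by
  rw [Finset.prod_insert (by simp [hk', hl]), Finset.prod_pair hk'l]
  simp [collision, hk', hl, eq_comm]

end Collision

section Moments

variable {ι Ω : Type*} [Fintype ι] [DecidableEq ι] [Fintype Ω] [DecidableEq Ω] [MeasurableSpace Ω]
  [MeasurableSingletonClass Ω] (μ : Measure Ω) [IsProbabilityMeasure μ]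

local notation "ν" => Measure.pi (fun _ : ι => μ)

theorem integral_collision {k k' : ι} (h : k ≠ k') :
    ∫ x, collision k k' x ∂ν = powerSum μ 2 := by
  simp only [collision_eq_prod h]
  rw [integral_prod_ite_eq μ (Finset.mem_insert_self k {k'}), Finset.card_pair h]

theorem integral_collision_mul_collision_of_ne {k k' l : ι} (hk' : k ≠ k') (hl : k ≠ l)
    (hk'l : k' ≠ l) :
    ∫ x, collision k k' x * collision k l x ∂ν = powerSum μ 3 := by
  simp only [collision_mul_collision_eq_prod hk' hl hk'l]
  rw [integral_prod_ite_eq μ (Finset.mem_insert_self k _), Finset.card_insert_of_notMem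
    (by simp [hk', hl]), Finset.card_pair hk'l]

theorem integral_collision_mul_collision_of_disjoint {k k' l l' : ι} (hk' : k ≠ k')
    (hl' : l ≠ l') (hdisj : Disjoint ({k, k'} : Finset ι) {l, l'}) :
    ∫ x, collision k k' x * collision l l' x ∂ν = powerSum μ 2 ^ 2 := by
  simp only [collision_eq_prod hk', collision_eq_prod hl']
  rw [integral_prod_ite_eq_mul_prod_ite_eq μ hdisj (Finset.mem_insert_self k {k'})
    (Finset.mem_insert_self l {l'}), Finset.card_pair hk', Finset.card_pair hl', sq]

theorem sum_integral_collision_mul_collision_left {k k' : ι} (h : k ≠ k') :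
    ∑ l', ∫ x, collision k k' x * collision k l' x ∂ν
      = powerSum μ 2 + (Fintype.card ι - 2) * powerSum μ 3 := by
  rw [Finset.sum_eq_sum_add_of_eq_off {k, k'} fun l' hl' => by
    simp only [Finset.mem_insert, Finset.mem_singleton, not_or] at hl'
    exact integral_collision_mul_collision_of_ne μ h (Ne.symm hl'.1) (Ne.symm hl'.2)]
  simp [Finset.sum_pair h, collision_mul_self, integral_collision μ h, Finset.card_pair h]

theorem sum_integral_collision_mul_collision_right {k k' : ι} (h : k ≠ k') :
    ∑ l', ∫ x, collision k k' x * collision k' l' x ∂ν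
      = powerSum μ 2 + (Fintype.card ι - 2) * powerSum μ 3 := by
  simp only [collision_comm k k']
  exact sum_integral_collision_mul_collision_left μ (Ne.symm h)

theorem sum_integral_collision_mul_collision_of_ne {k k' l : ι} (h : k ≠ k') (hl : k ≠ l)
    (hk'l : k' ≠ l) :
    ∑ l', ∫ x, collision k k' x * collision l l' x ∂ν
      = 2 * powerSum μ 3 + (Fintype.card ι - 3) * powerSum μ 2 ^ 2 := by
  have hkl : ∫ x, collision k k' x * collision l k x ∂ν = powerSum μ 3 := by
    simp only [collision_comm l k]
    exact integral_collision_mul_collision_of_ne μ h hl hk'l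
  have hk'l' : ∫ x, collision k k' x * collision l k' x ∂ν = powerSum μ 3 := by
    simp only [collision_comm l k', collision_comm k k']
    exact integral_collision_mul_collision_of_ne μ (Ne.symm h) hk'l hl
  rw [Finset.sum_eq_sum_add_of_eq_off {k, k', l} fun l' hl' => by
    simp only [Finset.mem_insert, Finset.mem_singleton, not_or] at hl'
    exact integral_collision_mul_collision_of_disjoint μ h (Ne.symm hl'.2.2) (by
      simp [Finset.disjoint_left, hl, hk'l, Ne.symm hl'.1, Ne.symm hl'.2.1])]
  rw [Finset.sum_insert (by simp [h, hl]), Finset.sum_pair hk'l, Finset.card_insert_of_notMem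
    (by simp [h, hl]), Finset.card_pair hk'l, hkl, hk'l']
  simp only [collision_self, mul_zero, integral_zero]
  push_cast
  ring

theorem sum_sum_integral_collision_mul_collision {k k' : ι} (h : k ≠ k') :
    ∑ l, ∑ l', ∫ x, collision k k' x * collision l l' x ∂ν
      = 2 * powerSum μ 2 + 4 * (Fintype.card ι - 2) * powerSum μ 3
        + (Fintype.card ι - 2) * (Fintype.card ι - 3) * powerSum μ 2 ^ 2 := by
  rw [Finset.sum_eq_sum_add_of_eq_off {k, k'} fun l hl => by
    simp only [Finset.mem_insert, Finset.mem_singleton, not_or] at hl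
    exact sum_integral_collision_mul_collision_of_ne μ h (Ne.symm hl.1) (Ne.symm hl.2)]
  rw [Finset.sum_pair h, sum_integral_collision_mul_collision_left μ h,
    sum_integral_collision_mul_collision_right μ h, Finset.card_pair h]
  push_cast
  ring

def collisionCount (x : ι → Ω) : ℝ := ∑ k, ∑ k', collision k k' x

theorem integral_collisionCount :
    ∫ x, collisionCount x ∂ν = Fintype.card ι * ((Fintype.card ι - 1) * powerSum μ 2) := by
  simp only [collisionCount, integral_finsetSum _ fun _ _ => Integrable.of_finite]
  exact Finset.sum_sum_eq_of_eq_offDiag (by simp) fun k k' h => integral_collision μ h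

theorem integral_collisionCount_sq :
    ∫ x, collisionCount x ^ 2 ∂ν = Fintype.card ι * ((Fintype.card ι - 1) *
      (2 * powerSum μ 2 + 4 * (Fintype.card ι - 2) * powerSum μ 3
        + (Fintype.card ι - 2) * (Fintype.card ι - 3) * powerSum μ 2 ^ 2)) := by
  have hsq : ∀ x : ι → Ω, collisionCount x ^ 2
      = ∑ k, ∑ k', ∑ l, ∑ l', collision k k' x * collision l l' x := fun x => by
    rw [sq, collisionCount]
    simp_rw [Finset.sum_mul, Finset.mul_sum]
  simp only [hsq, integral_finsetSum _ fun _ _ => Integrable.of_finite]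
  exact Finset.sum_sum_eq_of_eq_offDiag (by simp) fun k k' h =>
    sum_sum_integral_collision_mul_collision μ h

theorem variance_collisionCount :
    ProbabilityTheory.variance collisionCount ν = Fintype.card ι * (Fintype.card ι - 1) *
      (2 * powerSum μ 2 * (1 - powerSum μ 2) + 4 * (Fintype.card ι - 2) *
        (powerSum μ 3 - powerSum μ 2 ^ 2)) := by
  rw [ProbabilityTheory.variance_eq_sub MemLp.of_discrete, Pi.pow_def, integral_collisionCount_sq,
    integral_collisionCount]
  ring

end Moments

/-- **Mean and variance of the collision estimator** `Ŝ^{(K)} = (1/(K(K−1))) ∑_{k≠k'} 1{Q_k = Q_{k'}}`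
for `K` i.i.d. samples from a distribution on a finite set:
`E[Ŝ^{(K)}] = P₂` and `Var[Ŝ^{(K)}] = [2P₂(1−P₂) + 4(K−2)(P₃−P₂²)]/(K(K−1))`. -/
theorem collision_estimator_mean_variance {Ω : Type*} [Fintype Ω] [DecidableEq Ω]
    [MeasurableSpace Ω] [MeasurableSingletonClass Ω]
    (μ : Measure Ω) [IsProbabilityMeasure μ] (K : ℕ) (hK : 2 ≤ K)
    (P2 P3 : ℝ)
    (hP2 : P2 = ∑ q : Ω, ((μ {q}).toReal) ^ 2)
    (hP3 : P3 = ∑ q : Ω, ((μ {q}).toReal) ^ 3) :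
    (∫ ω : Fin K → Ω,
        ((1 / ((K : ℝ) * ((K : ℝ) - 1))) * ∑ k : Fin K, ∑ k' : Fin K,
          if k ≠ k' ∧ ω k = ω k' then 1 else 0)
      ∂(Measure.pi fun _ : Fin K => μ)) = P2 ∧
    ProbabilityTheory.variance
        (fun ω : Fin K → Ω =>
          (1 / ((K : ℝ) * ((K : ℝ) - 1))) * ∑ k : Fin K, ∑ k' : Fin K,
            if k ≠ k' ∧ ω k = ω k' then 1 else 0)
        (Measure.pi fun _ : Fin K => μ)
      = (2 * P2 * (1 - P2) + 4 * ((K : ℝ) - 2) * (P3 - P2 ^ 2))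
          / ((K : ℝ) * ((K : ℝ) - 1)) := by
  obtain rfl : P2 = powerSum μ 2 := hP2
  obtain rfl : P3 = powerSum μ 3 := hP3
  have hmean := integral_collisionCount μ (ι := Fin K)
  have hvar := variance_collisionCount μ (ι := Fin K)
  rw [Fintype.card_fin] at hmean hvar
  have hK₂ : (2 : ℝ) ≤ K := by exact_mod_cast hK
  have hK₀ : (K : ℝ) ≠ 0 := by positivity
  have hK₁ : (K : ℝ) - 1 ≠ 0 := by linarith
  constructor
  · refine (integral_const_mul _ (collisionCount (ι := Fin K))).trans ?_
    rw [hmean]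
    field_simp
  · refine (ProbabilityTheory.variance_const_mul _ (collisionCount (ι := Fin K)) _).trans ?_
    rw [hvar]
    field_simp
end
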